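/- arXiv:2304.07149 — 8 statements merged into one kernel-verified Lean document; each statement's English description precedes it below -/
import Mathlib

section
/- Let X and Y be complex Banach spaces and equip X ⊕₁ ℂ with the norm ‖(x,λ)‖ = ‖x‖ + |λ|. Let f : X → Y be holomorphic and Lipschitz on B_X, and define Φf(x,λ) = f(x) + (λ − 1)·f(0) for (x,λ) in the open unit ball B of X ⊕₁ ℂ. Then Φf(0,0) = 0, Φf is holomorphic on B, and the smallest Lipschitz constant of Φf on B equals max{‖f(0)‖, L(f)}. -/
lemma norm_L1 {X Y : Type*} [NormedAddCommGroup X] [NormedAddCommGroup Y]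
    (p : WithLp 1 (X × Y)) : ‖p‖ = ‖p.fst‖ + ‖p.snd‖ := by
  rw [WithLp.prod_norm_eq_add (by norm_num)]
  norm_num

/-- For `f` holomorphic and Lipschitz on `B_X`, the map
`Φf(x,λ) = f(x) + (λ-1)•f(0)` on the open unit ball of `X ⊕₁ ℂ` vanishes at `(0,0)`,
is holomorphic there, and its smallest Lipschitz constant equals `max {‖f(0)‖, L(f)}`. -/
theorem stmt_1 {X Y : Type*} [NormedAddCommGroup X] [NormedSpace ℂ X] [CompleteSpace X]
    [NormedAddCommGroup Y] [NormedSpace ℂ Y] [CompleteSpace Y]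
    (f : X → Y)
    (hf : DifferentiableOn ℂ f (Metric.ball (0 : X) 1))
    (L : ℝ)
    (hL : IsLeast {K : ℝ | 0 ≤ K ∧ ∀ x ∈ Metric.ball (0 : X) 1, ∀ y ∈ Metric.ball (0 : X) 1,
        ‖f x - f y‖ ≤ K * ‖x - y‖} L)
    (Φf : WithLp 1 (X × ℂ) → Y)
    (hΦf : ∀ p : WithLp 1 (X × ℂ),
      Φf p = f (WithLp.equiv 1 (X × ℂ) p).1 + ((WithLp.equiv 1 (X × ℂ) p).2 - 1) • f 0) :
    Φf 0 = 0 ∧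
    DifferentiableOn ℂ Φf (Metric.ball (0 : WithLp 1 (X × ℂ)) 1) ∧
    IsLeast {K : ℝ | 0 ≤ K ∧ ∀ p ∈ Metric.ball (0 : WithLp 1 (X × ℂ)) 1,
        ∀ q ∈ Metric.ball (0 : WithLp 1 (X × ℂ)) 1, ‖Φf p - Φf q‖ ≤ K * ‖p - q‖}
      (max ‖f 0‖ L) := by
  have hL0 : 0 ≤ L := hL.1.1
  have hLf := hL.1.2
  have ball_mem : ∀ p : WithLp 1 (X × ℂ), p ∈ Metric.ball (0 : WithLp 1 (X × ℂ)) 1 →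
      (WithLp.equiv 1 (X × ℂ) p).1 ∈ Metric.ball (0 : X) 1 := by
    intro p hp
    rw [Metric.mem_ball, dist_zero_right] at hp ⊢
    have := norm_L1 p
    have h2 : (0:ℝ) ≤ ‖p.snd‖ := norm_nonneg _
    have : ‖p.fst‖ ≤ ‖p‖ := by rw [norm_L1]; linarith
    exact lt_of_le_of_lt this hp
  refine ⟨?_, ?_, ⟨?_, ?_⟩, ?_⟩
  · rw [hΦf]
    simp
  · -- differentiability
    have e := WithLp.prodContinuousLinearEquiv 1 ℂ X ℂ
    have h1 : DifferentiableOn ℂ (fun p : WithLp 1 (X × ℂ) => f (WithLp.equiv 1 (X × ℂ) p).1)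
        (Metric.ball 0 1) := by
      have hd : Differentiable ℂ (fun p : WithLp 1 (X × ℂ) => (WithLp.equiv 1 (X × ℂ) p).1) := by
        exact (ContinuousLinearMap.fst ℂ X ℂ).differentiable.comp
          (WithLp.prodContinuousLinearEquiv 1 ℂ X ℂ).differentiable
      exact hf.comp hd.differentiableOn ball_mem
    have h2 : Differentiable ℂ
        (fun p : WithLp 1 (X × ℂ) => ((WithLp.equiv 1 (X × ℂ) p).2 - 1) • f 0) := by
      have hd : Differentiable ℂ (fun p : WithLp 1 (X × ℂ) => (WithLp.equiv 1 (X × ℂ) p).2 - 1) := by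
        exact ((ContinuousLinearMap.snd ℂ X ℂ).differentiable.comp
          (WithLp.prodContinuousLinearEquiv 1 ℂ X ℂ).differentiable).sub_const 1
      exact hd.smul_const (f 0)
    have := h1.add h2.differentiableOn
    refine this.congr ?_
    intro p _; exact hΦf p
  · exact le_trans (norm_nonneg _) (le_max_left _ _)
  · -- upper bound
    intro p hp q hq
    rw [hΦf p, hΦf q]
    change ‖f p.fst + (p.snd - 1) • f 0 - (f q.fst + (q.snd - 1) • f 0)‖ ≤ _
    have h1 : f p.fst + (p.snd - 1) • f 0
        - (f q.fst + (q.snd - 1) • f 0)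
        = (f p.fst - f q.fst) + (p.snd - q.snd) • f 0 := by
      module
    rw [h1]
    have hn : ‖p - q‖ = ‖p.fst - q.fst‖ + ‖p.snd - q.snd‖ := by
      rw [norm_L1]; rfl
    calc ‖(f p.fst - f q.fst) + (p.snd - q.snd) • f 0‖
        ≤ ‖f p.fst - f q.fst‖ + ‖p.snd - q.snd‖ * ‖f 0‖ := by
          refine le_trans (norm_add_le _ _) ?_
          rw [norm_smul]
      _ ≤ L * ‖p.fst - q.fst‖ + ‖f 0‖ * ‖p.snd - q.snd‖ := by
          gcongr ?_ + ?_
          · exact hLf _ (ball_mem p hp) _ (ball_mem q hq)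
          · rw [mul_comm]
      _ ≤ max ‖f 0‖ L * ‖p.fst - q.fst‖ + max ‖f 0‖ L * ‖p.snd - q.snd‖ := by
          gcongr
          · exact le_max_right _ _
          · exact le_max_left _ _
      _ = max ‖f 0‖ L * ‖p - q‖ := by rw [hn]; ring
  · -- lower bound
    intro K hK
    obtain ⟨hK0, hKlip⟩ := hK
    refine max_le ?_ ?_
    · -- ‖f 0‖ ≤ K using points (0, 1/2) and (0, -1/2)
      set p : WithLp 1 (X × ℂ) := (WithLp.equiv 1 (X × ℂ)).symm (0, 1/2)
      set q : WithLp 1 (X × ℂ) := (WithLp.equiv 1 (X × ℂ)).symm (0, -(1/2))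
      have hpn : ‖p‖ = 1/2 := by
        rw [norm_L1]; simp [p]
      have hqn : ‖q‖ = 1/2 := by
        rw [norm_L1]; simp [q]
      have hp : p ∈ Metric.ball (0 : WithLp 1 (X × ℂ)) 1 := by
        rw [Metric.mem_ball, dist_zero_right, hpn]; norm_num
      have hq : q ∈ Metric.ball (0 : WithLp 1 (X × ℂ)) 1 := by
        rw [Metric.mem_ball, dist_zero_right, hqn]; norm_num
      have := hKlip p hp q hq
      rw [hΦf p, hΦf q] at this
      have hpq : ‖p - q‖ = 1 := by
        rw [norm_L1]
        have hd : p - q = (WithLp.equiv 1 (X × ℂ)).symm (0, 1) := by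
          simp only [p, q, WithLp.equiv_symm_apply, ← WithLp.toLp_sub]
          norm_num
        rw [hd]; simp
      rw [hpq] at this
      simp only [p, q, Equiv.apply_symm_apply] at this
      have h2 : f (0:X) + ((1/2 : ℂ) - 1) • f 0 - (f 0 + ((-(1/2):ℂ) - 1) • f 0) = f 0 := by
        module
      rw [h2] at this
      simpa using this
    · refine hL.2 ⟨hK0, ?_⟩
      intro x hx y hy
      set p : WithLp 1 (X × ℂ) := (WithLp.equiv 1 (X × ℂ)).symm (x, 0)
      set q : WithLp 1 (X × ℂ) := (WithLp.equiv 1 (X × ℂ)).symm (y, 0)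
      have hp : p ∈ Metric.ball (0 : WithLp 1 (X × ℂ)) 1 := by
        rw [Metric.mem_ball, dist_zero_right, norm_L1]
        simpa [p] using hx
      have hq : q ∈ Metric.ball (0 : WithLp 1 (X × ℂ)) 1 := by
        rw [Metric.mem_ball, dist_zero_right, norm_L1]
        simpa [q] using hy
      have := hKlip p hp q hq
      rw [hΦf p, hΦf q] at this
      simp only [p, q, WithLp.equiv_symm_apply, WithLp.equiv_apply, WithLp.ofLp_toLp] at this
      have hpq : ‖p - q‖ = ‖x - y‖ := by
        rw [norm_L1]
        simp [p, q]
      rw [show ‖WithLp.toLp 1 (x, (0:ℂ)) - WithLp.toLp 1 (y, 0)‖ = ‖x - y‖ from hpq] at this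
      simpa using this
end

section
/- There exists an injective continuous ℂ-linear map F from ℓ∞ (the space of bounded complex sequences with the supremum norm) into the space of bounded continuous complex-valued functions on the open unit disc 𝔻 such that: for every a ∈ ℓ∞, the function F(a) is holomorphic on 𝔻, F(a)(0) = 0, and (1/2)‖a‖_∞ ≤ sup_{z ∈ 𝔻} |F(a)(z)| ≤ 4‖a‖_∞; for every a ≠ 0, F(a) is not Lipschitz on 𝔻 (there is no K with F(a) K-Lipschitz on 𝔻); and for every a ∈ c₀ (i.e. a_n → 0), F(a) is uniformly continuous on 𝔻, hence extends continuously to the closed unit disc. -/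
open scoped ENNReal NNReal
open Complex Filter

noncomputable section Stmt2Aux

/-- angle of the m-th boundary point -/
def th (m : ℕ) : ℝ := (1/2)^m

/-- boundary points accumulating at 1 -/
def ww (m : ℕ) : ℂ := Complex.exp (th m * Complex.I)

/-- exponents -/
def NN (m : ℕ) : ℕ := 6*(m+1)*2^(2*m+9)

/-- coefficients of singular parts -/
def eps (m : ℕ) : ℝ := (1/2)^m/1000

/-- peak part -/
def pp (m : ℕ) (z : ℂ) : ℂ :=
  (starRingEnd ℂ) (ww m) * z * ((1 + (starRingEnd ℂ) (ww m)*z)/2)^(NN m)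

/-- singular part -/
def hh (m : ℕ) (z : ℂ) : ℂ :=
  (eps m : ℂ) * ((1 - (starRingEnd ℂ) (ww m)*z) * Complex.log (1 - (starRingEnd ℂ) (ww m)*z))

def ff (m : ℕ) (z : ℂ) : ℂ := pp m z + hh m z

lemma th_pos (m : ℕ) : 0 < th m := by unfold th; positivity

lemma th_le_one (m : ℕ) : th m ≤ 1 := by
  simpa [th] using pow_le_one₀ (by norm_num : (0:ℝ) ≤ 1/2) (by norm_num)

lemma eps_pos (m : ℕ) : 0 < eps m := by unfold eps; positivity

lemma abs_ww (m : ℕ) : ‖ww m‖ = 1 := by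
  simp [ww, Complex.norm_exp]

lemma conj_ww_mul_ww (m : ℕ) : (starRingEnd ℂ) (ww m) * ww m = 1 := by
  have h : ‖ww m‖ = 1 := by simpa using abs_ww m
  have := Complex.normSq_eq_norm_sq (ww m)
  rw [mul_comm, Complex.mul_conj]
  simp [this, h]

lemma NN_pos (m : ℕ) : 0 < NN m := by unfold NN; positivity

lemma NN_ge (m : ℕ) : m + 1 ≤ NN m := by
  have h1 : m + 1 ≤ 6*(m+1) := by omega
  have h2 : (1:ℕ) ≤ 2^(2*m+9) := Nat.one_le_two_pow
  calc m + 1 ≤ 6*(m+1) * 1 := by omega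
    _ ≤ 6*(m+1) * 2^(2*m+9) := by
        exact Nat.mul_le_mul_left _ h2

end Stmt2Aux

section Stmt2Sep
open Real

lemma sep_core {γ : ℝ} (h0 : 0 < γ) (h1 : γ ≤ 1) :
    (15/16)*γ ≤ ‖Complex.exp (γ * Complex.I) - 1‖ := by
  have hexp : Complex.exp (γ * Complex.I) - 1
      = ((Real.cos γ - 1 : ℝ) : ℂ) + ((Real.sin γ : ℝ) : ℂ) * Complex.I := by
    rw [Complex.exp_mul_I]
    push_cast [← Complex.ofReal_cos, ← Complex.ofReal_sin]
    ring
  rw [hexp, Complex.norm_add_mul_I]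
  have hsinsq : Real.sin (γ/2)^2 = (1 - Real.cos γ)/2 := by
    have h := Real.abs_sin_half γ
    have hnn : (0:ℝ) ≤ (1 - Real.cos γ)/2 := by
      have := Real.cos_le_one γ; linarith
    calc Real.sin (γ/2)^2 = |Real.sin (γ/2)|^2 := (_root_.sq_abs _).symm
      _ = Real.sqrt ((1 - Real.cos γ)/2)^2 := by rw [h]
      _ = (1 - Real.cos γ)/2 := Real.sq_sqrt hnn
  have hsin : (15/16)*(γ/2) ≤ Real.sin (γ/2) := by
    have h2 := Real.sin_gt_sub_cube (by linarith : 0 < γ/2)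
    have hcube : (γ/2)^3/4 ≤ (γ/2)/16 := by nlinarith [sq_nonneg (γ/2 - 1/2), sq_nonneg (γ/2)]
    linarith
  have hkey : ((15/16)*γ)^2 ≤ (Real.cos γ - 1)^2 + Real.sin γ^2 := by
    have hpyth : Real.sin γ^2 + Real.cos γ^2 = 1 := Real.sin_sq_add_cos_sq γ
    nlinarith [hsin, hsinsq]
  have h15 : (0:ℝ) ≤ (15/16)*γ := by linarith
  calc (15/16)*γ = Real.sqrt (((15/16)*γ)^2) := (Real.sqrt_sq h15).symm
    _ ≤ Real.sqrt ((Real.cos γ - 1)^2 + Real.sin γ^2) := Real.sqrt_le_sqrt hkey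

lemma sep {m n : ℕ} (h : m < n) : (15/32)*(1/2)^m ≤ ‖ww m - ww n‖ := by
  have hfac : ww m - ww n = Complex.exp (th n * Complex.I) *
      (Complex.exp ((th m - th n : ℝ) * Complex.I) - 1) := by
    rw [mul_sub, mul_one, ← Complex.exp_add, ww, ww]
    push_cast
    ring_nf
  have hγ0 : 0 < th m - th n := by
    have : th n < th m := by
      unfold th
      exact pow_lt_pow_right_of_lt_one₀ (by norm_num) (by norm_num) h
    linarith
  have hγ1 : th m - th n ≤ 1 := by
    have := th_le_one m; have := th_pos n; linarith
  have hhalf : (1/2)^(m+1) ≤ th m - th n := by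
    have hn : th n ≤ (1/2)^(m+1) := by
      unfold th
      exact pow_le_pow_of_le_one (by norm_num) (by norm_num) h
    have : th m = 2 * (1/2)^(m+1) := by unfold th; ring
    linarith
  have h1 : ‖ww m - ww n‖ = ‖Complex.exp ((th m - th n : ℝ) * Complex.I) - 1‖ := by
    rw [hfac, norm_mul]
    have : ‖Complex.exp (th n * Complex.I)‖ = 1 := by
      simp [Complex.norm_exp]
    rw [this, one_mul]
  rw [h1]
  calc (15/32)*(1/2)^m = (15/16)*(1/2)^(m+1) := by ring
    _ ≤ (15/16)*(th m - th n) := by nlinarith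
    _ ≤ _ := sep_core hγ0 hγ1
end Stmt2Sep

section Stmt2Peak

lemma norm_sq_eq (x : ℂ) : ‖x‖^2 = x.re^2 + x.im^2 := by
  rw [Complex.sq_norm, Complex.normSq_apply]; ring

lemma norm_one_sub_conj (m : ℕ) (z : ℂ) :
    ‖1 - (starRingEnd ℂ) (ww m)*z‖ = ‖z - ww m‖ := by
  have h1 : 1 - (starRingEnd ℂ) (ww m)*z = (starRingEnd ℂ) (ww m) * (ww m - z) := by
    rw [mul_sub, conj_ww_mul_ww]
  rw [h1, norm_mul]
  have : ‖(starRingEnd ℂ) (ww m)‖ = 1 := by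
    rw [RCLike.norm_conj]; exact abs_ww m
  rw [this, one_mul, norm_sub_rev]

lemma vbound (m : ℕ) {z : ℂ} (hz : ‖z‖ ≤ 1) :
    ‖(1 + (starRingEnd ℂ) (ww m)*z)/2‖ ≤ 1 - ‖z - ww m‖^2/8 := by
  set u := (starRingEnd ℂ) (ww m)*z with hu
  have hun : ‖u‖ ≤ 1 := by
    rw [hu, norm_mul, RCLike.norm_conj, abs_ww, one_mul]; exact hz
  have hd : ‖z - ww m‖ = ‖1 - u‖ := (norm_one_sub_conj m z).symm
  have hsq : ‖1+u‖^2 = 2 + 2*‖u‖^2 - ‖1-u‖^2 := by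
    rw [norm_sq_eq, norm_sq_eq, norm_sq_eq]
    simp only [Complex.add_re, Complex.add_im, Complex.sub_re, Complex.sub_im,
      Complex.one_re, Complex.one_im]
    ring
  have hd2 : ‖1-u‖ ≤ 2 := by
    calc ‖1-u‖ ≤ ‖(1:ℂ)‖ + ‖u‖ := norm_sub_le _ _
      _ ≤ 2 := by rw [norm_one]; linarith
  have hsq2 : ‖1+u‖^2 ≤ (2 - ‖1-u‖^2/4)^2 := by
    nlinarith [hsq, hun, norm_nonneg u, sq_nonneg (‖1-u‖^2), norm_nonneg (1-u)]
  have hpos : (0:ℝ) ≤ 2 - ‖1-u‖^2/4 := by nlinarith [norm_nonneg (1-u)]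
  have h3 : ‖1+u‖ ≤ 2 - ‖1-u‖^2/4 := by nlinarith [norm_nonneg (1+u)]
  rw [hd]
  have : ‖(1+u)/2‖ = ‖1+u‖/2 := by rw [norm_div]; norm_num
  rw [this]
  linarith

lemma vbound_one (m : ℕ) {z : ℂ} (hz : ‖z‖ ≤ 1) :
    ‖(1 + (starRingEnd ℂ) (ww m)*z)/2‖ ≤ 1 := by
  have := vbound m hz
  nlinarith [sq_nonneg ‖z - ww m‖]

lemma dist_le_two (m : ℕ) {z : ℂ} (hz : ‖z‖ ≤ 1) : ‖z - ww m‖ ≤ 2 := by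
  calc ‖z - ww m‖ ≤ ‖z‖ + ‖ww m‖ := norm_sub_le _ _
    _ ≤ 2 := by rw [abs_ww]; linarith

lemma base_nonneg (m : ℕ) {z : ℂ} (hz : ‖z‖ ≤ 1) : (0:ℝ) ≤ 1 - ‖z - ww m‖^2/8 := by
  nlinarith [dist_le_two m hz, norm_nonneg (z - ww m)]

lemma pp_le (m : ℕ) {z : ℂ} (hz : ‖z‖ ≤ 1) :
    ‖pp m z‖ ≤ (1 - ‖z - ww m‖^2/8)^(NN m) := by
  have hv := vbound m hz
  have hv0 : (0:ℝ) ≤ ‖(1 + (starRingEnd ℂ) (ww m)*z)/2‖ := norm_nonneg _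
  calc ‖pp m z‖ = ‖(starRingEnd ℂ) (ww m)‖ * ‖z‖ * ‖(1 + (starRingEnd ℂ) (ww m)*z)/2‖^(NN m) := by
        rw [pp, norm_mul, norm_mul, norm_pow]
    _ ≤ 1 * 1 * ‖(1 + (starRingEnd ℂ) (ww m)*z)/2‖^(NN m) := by
        have h1 : ‖(starRingEnd ℂ) (ww m)‖ = 1 := by rw [RCLike.norm_conj]; exact abs_ww m
        have h2 : (0:ℝ) ≤ ‖(1 + (starRingEnd ℂ) (ww m)*z)/2‖^(NN m) := by positivity
        rw [h1]
        nlinarith [norm_nonneg z]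
    _ = ‖(1 + (starRingEnd ℂ) (ww m)*z)/2‖^(NN m) := by ring
    _ ≤ (1 - ‖z - ww m‖^2/8)^(NN m) := pow_le_pow_left₀ hv0 hv _

lemma pp_le_one (m : ℕ) {z : ℂ} (hz : ‖z‖ ≤ 1) : ‖pp m z‖ ≤ 1 := by
  calc ‖pp m z‖ ≤ (1 - ‖z - ww m‖^2/8)^(NN m) := pp_le m hz
    _ ≤ 1^(NN m) := by
        apply pow_le_pow_left₀ (base_nonneg m hz)
        nlinarith [sq_nonneg ‖z - ww m‖]
    _ = 1 := one_pow _

lemma exp_six : (400:ℝ) ≤ Real.exp 6 := by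
  have h := Real.exp_one_gt_d9
  have h6 : Real.exp 6 = Real.exp 1 ^ 6 := by
    rw [show (6:ℝ) = ((6:ℕ):ℝ) * 1 by norm_num, Real.exp_nat_mul]
  rw [h6]
  calc (400:ℝ) ≤ (2.7182818283:ℝ)^6 := by norm_num
    _ ≤ Real.exp 1 ^ 6 := by
        apply pow_le_pow_left₀ (by norm_num) (le_of_lt h)

lemma pp_far (m : ℕ) {z : ℂ} (hz : ‖z‖ ≤ 1) (hfar : (1/8)*(1/2)^m ≤ ‖z - ww m‖) :
    ‖pp m z‖ ≤ (1/400)^(m+1) := by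
  set x : ℝ := (1/512)*(1/4)^m with hx
  have hx0 : 0 < x := by rw [hx]; positivity
  have hdx : x ≤ ‖z - ww m‖^2/8 := by
    have h1 : ((1/8)*(1/2)^m : ℝ)^2 ≤ ‖z - ww m‖^2 := by
      apply pow_le_pow_left₀ (by positivity) hfar
    have h2 : ((1/8)*(1/2)^m : ℝ)^2 = 8 * x := by
      rw [hx, mul_pow, ← pow_mul, mul_comm m 2, pow_mul]
      norm_num
      ring
    linarith
  have hnn : (0:ℝ) ≤ 1 - ‖z - ww m‖^2/8 := base_nonneg m hz
  have h1 : ‖pp m z‖ ≤ (1 - x)^(NN m) := by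
    calc ‖pp m z‖ ≤ (1 - ‖z - ww m‖^2/8)^(NN m) := pp_le m hz
      _ ≤ (1-x)^(NN m) := pow_le_pow_left₀ hnn (by linarith) _
  have h2 : (1-x:ℝ) ≤ Real.exp (-x) := by
    have := Real.add_one_le_exp (-x)
    linarith
  have h3 : ((1-x:ℝ))^(NN m) ≤ Real.exp (-x)^(NN m) :=
    pow_le_pow_left₀ (by linarith) h2 _
  have h4 : Real.exp (-x)^(NN m) = Real.exp (-(6*(m+1):ℝ)) := by
    rw [← Real.exp_nat_mul]
    congr 1
    have hN : ((NN m : ℕ):ℝ) = 6*(m+1)*(512 * 4^m) := by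
      rw [NN]
      push_cast
      rw [show 2*m+9 = m*2+9 by ring, pow_add, pow_mul]
      norm_num
      left
      rw [← pow_mul, mul_comm m 2, pow_mul]
      norm_num
      ring
    have hone : (4:ℝ)^m * (1/4)^m = 1 := by
      rw [← mul_pow]; norm_num
    have key : ((NN m : ℕ):ℝ) * x = 6*(m+1) := by
      rw [hN, hx]
      calc (6*((m:ℝ)+1)*(512*4^m)) * (1/512*(1/4)^m)
          = 6*((m:ℝ)+1)*(4^m*(1/4)^m) := by ring
        _ = 6*((m:ℝ)+1) := by rw [hone]; ring
    push_cast at key ⊢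
    linarith [key]
  have h5 : Real.exp (-(6*(m+1):ℝ)) = Real.exp (-6)^(m+1) := by
    rw [← Real.exp_nat_mul]
    congr 1
    push_cast; ring
  have h6 : Real.exp (-6) ≤ 1/400 := by
    rw [Real.exp_neg]
    rw [inv_le_comm₀ (Real.exp_pos 6) (by norm_num)]
    calc (1/400 : ℝ)⁻¹ = 400 := by norm_num
      _ ≤ Real.exp 6 := exp_six
  calc ‖pp m z‖ ≤ (1-x)^(NN m) := h1
    _ ≤ Real.exp (-x)^(NN m) := h3
    _ = Real.exp (-6)^(m+1) := by rw [h4, h5]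
    _ ≤ (1/400)^(m+1) := pow_le_pow_left₀ (Real.exp_nonneg _) h6 _

end Stmt2Peak

section Stmt2H

lemma mul_log_norm_le {ζ : ℂ} (h : ‖ζ‖ ≤ 2) : ‖ζ * Complex.log ζ‖ ≤ 9 := by
  by_cases h0 : ζ = 0
  · simp [h0]
  · have ht0 : 0 < ‖ζ‖ := norm_pos_iff.mpr h0
    set t := ‖ζ‖ with htdef
    have hlog : ‖Complex.log ζ‖ ≤ |Real.log t| + Real.pi := by
      calc ‖Complex.log ζ‖ ≤ |(Complex.log ζ).re| + |(Complex.log ζ).im| :=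
            Complex.norm_le_abs_re_add_abs_im _
        _ ≤ |Real.log t| + Real.pi := by
            rw [Complex.log_re, Complex.log_im]
            have := Complex.abs_arg_le_pi ζ
            have habs : ‖ζ‖ = t := by rw [htdef]
            rw [habs]
            have : |Complex.arg ζ| ≤ Real.pi := Complex.abs_arg_le_pi ζ
            linarith [le_abs_self (Complex.arg ζ), neg_abs_le (Complex.arg ζ)]
    have htlog : t * |Real.log t| ≤ 2 := by
      by_cases h1 : t ≤ 1
      · have hle : Real.log t ≤ 0 := Real.log_nonpos (le_of_lt ht0) h1
        have : |Real.log t| = Real.log t⁻¹ := by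
          rw [Real.log_inv, abs_of_nonpos hle]
        rw [this]
        have hinv : Real.log t⁻¹ ≤ t⁻¹ - 1 := Real.log_le_sub_one_of_pos (by positivity)
        have : t * Real.log t⁻¹ ≤ t * (t⁻¹ - 1) := by
          apply mul_le_mul_of_nonneg_left hinv (le_of_lt ht0)
        have ht1 : t * (t⁻¹ - 1) = 1 - t := by field_simp
        nlinarith
      · push_neg at h1
        have hle : 0 ≤ Real.log t := Real.log_nonneg (le_of_lt h1)
        rw [_root_.abs_of_nonneg hle]
        have : Real.log t ≤ t - 1 := Real.log_le_sub_one_of_pos ht0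
        nlinarith
    have hpi : Real.pi ≤ 3.15 := by linarith [Real.pi_lt_d2]
    calc ‖ζ * Complex.log ζ‖ = t * ‖Complex.log ζ‖ := by rw [norm_mul]
      _ ≤ t * (|Real.log t| + Real.pi) := by
          apply mul_le_mul_of_nonneg_left hlog (le_of_lt ht0)
      _ = t * |Real.log t| + t * Real.pi := by ring
      _ ≤ 2 + 2 * 3.15 := by
          have : t * Real.pi ≤ 2 * 3.15 := by nlinarith [Real.pi_pos]
          linarith
      _ ≤ 9 := by norm_num

lemma norm_hh_le (m : ℕ) {z : ℂ} (hz : ‖z‖ ≤ 1) : ‖hh m z‖ ≤ 9 * eps m := by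
  have hζ : ‖1 - (starRingEnd ℂ) (ww m)*z‖ ≤ 2 := by
    rw [norm_one_sub_conj]; exact dist_le_two m hz
  calc ‖hh m z‖ = ‖(eps m : ℂ)‖ * ‖(1 - (starRingEnd ℂ) (ww m)*z) *
        Complex.log (1 - (starRingEnd ℂ) (ww m)*z)‖ := by rw [hh, norm_mul]
    _ ≤ eps m * 9 := by
        apply mul_le_mul _ (mul_log_norm_le hζ) (norm_nonneg _) (le_of_lt (eps_pos m))
        rw [Complex.norm_real, Real.norm_eq_abs, _root_.abs_of_pos (eps_pos m)]
    _ = 9 * eps m := by ring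

lemma summable_eps : Summable eps := by
  unfold eps
  simp_rw [div_eq_mul_inv]
  exact (summable_geometric_of_lt_one (by norm_num) (by norm_num)).mul_right _

lemma tsum_eps : ∑' m, eps m = 1/500 := by
  unfold eps
  simp_rw [div_eq_mul_inv]
  rw [tsum_mul_right, tsum_geometric_of_lt_one (by norm_num) (by norm_num)]
  norm_num

lemma summable_far : Summable (fun m : ℕ => ((1/400:ℝ))^(m+1)) := by
  simp_rw [pow_succ]
  exact (summable_geometric_of_lt_one (by norm_num) (by norm_num)).mul_right _

lemma tsum_far : ∑' m : ℕ, ((1/400:ℝ))^(m+1) = 1/399 := by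
  simp_rw [pow_succ]
  rw [tsum_mul_right, tsum_geometric_of_lt_one (by norm_num) (by norm_num)]
  norm_num

lemma pp_le_rho (m : ℕ) {z : ℂ} (hz : ‖z‖ ≤ 1) : ‖pp m z‖ ≤ ((1+‖z‖)/2)^(m+1) := by
  have hv : ‖(1 + (starRingEnd ℂ) (ww m)*z)/2‖ ≤ (1+‖z‖)/2 := by
    rw [norm_div]
    have : ‖1 + (starRingEnd ℂ) (ww m)*z‖ ≤ 1 + ‖z‖ := by
      calc ‖1 + (starRingEnd ℂ) (ww m)*z‖ ≤ ‖(1:ℂ)‖ + ‖(starRingEnd ℂ) (ww m)*z‖ := norm_add_le _ _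
        _ = 1 + ‖z‖ := by rw [norm_one, norm_mul, RCLike.norm_conj, abs_ww, one_mul]
    have h2 : ‖(2:ℂ)‖ = 2 := by norm_num
    rw [h2]
    linarith
  have hρ1 : (1+‖z‖)/2 ≤ 1 := by linarith
  have hρ0 : (0:ℝ) ≤ (1+‖z‖)/2 := by positivity
  calc ‖pp m z‖ = ‖(starRingEnd ℂ) (ww m)‖ * ‖z‖ * ‖(1 + (starRingEnd ℂ) (ww m)*z)/2‖^(NN m) := by
        rw [pp, norm_mul, norm_mul, norm_pow]
    _ ≤ 1 * 1 * ((1+‖z‖)/2)^(NN m) := by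
        have h1 : ‖(starRingEnd ℂ) (ww m)‖ = 1 := by rw [RCLike.norm_conj]; exact abs_ww m
        rw [h1]
        have := pow_le_pow_left₀ (norm_nonneg _) hv (NN m)
        nlinarith [norm_nonneg z, pow_nonneg hρ0 (NN m), pow_nonneg (norm_nonneg ((1 + (starRingEnd ℂ) (ww m)*z)/2)) (NN m)]
    _ = ((1+‖z‖)/2)^(NN m) := by ring
    _ ≤ ((1+‖z‖)/2)^(m+1) := pow_le_pow_of_le_one hρ0 hρ1 (NN_ge m)

lemma summable_norm_pp {z : ℂ} (hz : ‖z‖ < 1) : Summable (fun m => ‖pp m z‖) := by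
  apply Summable.of_nonneg_of_le (fun m => norm_nonneg _) (fun m => pp_le_rho m (le_of_lt hz))
  simp_rw [pow_succ]
  exact ((summable_geometric_of_lt_one (by positivity) (by linarith)).mul_right _)

lemma summable_norm_hh {z : ℂ} (hz : ‖z‖ ≤ 1) : Summable (fun m => ‖hh m z‖) := by
  apply Summable.of_nonneg_of_le (fun m => norm_nonneg _) (fun m => norm_hh_le m hz)
  exact summable_eps.mul_left 9

lemma summable_norm_ff {z : ℂ} (hz : ‖z‖ < 1) : Summable (fun m => ‖ff m z‖) := by
  apply Summable.of_nonneg_of_le (fun m => norm_nonneg _)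
    (fun m => norm_add_le (pp m z) (hh m z))
  exact (summable_norm_pp hz).add (summable_norm_hh (le_of_lt hz))

lemma close_unique {z : ℂ} {k m : ℕ} (hkm : k ≠ m)
    (hk : ‖z - ww k‖ < (1/8)*(1/2)^k) (hm : ‖z - ww m‖ < (1/8)*(1/2)^m) : False := by
  rcases Nat.lt_or_ge k m with h | h
  · have hsep := sep h
    have htri : ‖ww k - ww m‖ ≤ ‖z - ww k‖ + ‖z - ww m‖ := by
      calc ‖ww k - ww m‖ = ‖(z - ww m) - (z - ww k)‖ := by ring_nf
        _ ≤ ‖z - ww m‖ + ‖z - ww k‖ := norm_sub_le _ _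
        _ = ‖z - ww k‖ + ‖z - ww m‖ := by ring
    have hmono : ((1/2:ℝ))^m ≤ (1/2)^k :=
      pow_le_pow_of_le_one (by norm_num) (by norm_num) (le_of_lt h)
    nlinarith [pow_pos (show (0:ℝ)<1/2 by norm_num) k]
  · have hlt : m < k := by omega
    have hsep := sep hlt
    have htri : ‖ww m - ww k‖ ≤ ‖z - ww k‖ + ‖z - ww m‖ := by
      calc ‖ww m - ww k‖ = ‖(z - ww k) - (z - ww m)‖ := by ring_nf
        _ ≤ ‖z - ww k‖ + ‖z - ww m‖ := norm_sub_le _ _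
    have hmono : ((1/2:ℝ))^k ≤ (1/2)^m :=
      pow_le_pow_of_le_one (by norm_num) (by norm_num) (le_of_lt hlt)
    nlinarith [pow_pos (show (0:ℝ)<1/2 by norm_num) m]

lemma tsum_norm_pp_le {z : ℂ} (hz : ‖z‖ < 1) : ∑' m, ‖pp m z‖ ≤ 1 + 1/399 := by
  have hz1 : ‖z‖ ≤ 1 := le_of_lt hz
  by_cases hex : ∃ k, ‖z - ww k‖ < (1/8)*(1/2)^k
  · obtain ⟨k, hk⟩ := hex
    rw [Summable.tsum_eq_add_tsum_ite (summable_norm_pp hz) k]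
    have h1 : ‖pp k z‖ ≤ 1 := pp_le_one k hz1
    have h2 : ∑' m, (if m = k then 0 else ‖pp m z‖) ≤ ∑' m : ℕ, ((1/400:ℝ))^(m+1) := by
      apply Summable.tsum_le_tsum _ _ summable_far
      · intro m
        by_cases hm : m = k
        · rw [if_pos hm]; positivity
        · rw [if_neg hm]
          apply pp_far m hz1
          by_contra hc
          push_neg at hc
          exact close_unique (Ne.symm hm) hk hc
      · apply Summable.of_nonneg_of_le _ _ summable_far
        · intro m
          by_cases hm : m = k
          · rw [if_pos hm]
          · rw [if_neg hm]; exact norm_nonneg _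
        · intro m
          by_cases hm : m = k
          · rw [if_pos hm]; positivity
          · rw [if_neg hm]
            apply pp_far m hz1
            by_contra hc
            push_neg at hc
            exact close_unique (Ne.symm hm) hk hc
    rw [tsum_far] at h2
    linarith
  · push_neg at hex
    calc ∑' m, ‖pp m z‖ ≤ ∑' m : ℕ, ((1/400:ℝ))^(m+1) := by
          apply Summable.tsum_le_tsum _ (summable_norm_pp hz) summable_far
          intro m
          exact pp_far m hz1 (hex m)
      _ = 1/399 := tsum_far
      _ ≤ 1 + 1/399 := by norm_num

lemma tsum_norm_ff_le {z : ℂ} (hz : ‖z‖ < 1) : ∑' m, ‖ff m z‖ ≤ 21/20 := by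
  have hz1 : ‖z‖ ≤ 1 := le_of_lt hz
  calc ∑' m, ‖ff m z‖ ≤ ∑' m, (‖pp m z‖ + ‖hh m z‖) := by
        apply Summable.tsum_le_tsum _ (summable_norm_ff hz)
          ((summable_norm_pp hz).add (summable_norm_hh hz1))
        intro m; exact norm_add_le _ _
    _ = (∑' m, ‖pp m z‖) + ∑' m, ‖hh m z‖ :=
        Summable.tsum_add (summable_norm_pp hz) (summable_norm_hh hz1)
    _ ≤ (1 + 1/399) + 9 * (1/500) := by
        have h1 := tsum_norm_pp_le hz
        have h2 : ∑' m, ‖hh m z‖ ≤ 9 * (1/500) := by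
          calc ∑' m, ‖hh m z‖ ≤ ∑' m, 9 * eps m := by
                apply Summable.tsum_le_tsum (fun m => norm_hh_le m hz1) (summable_norm_hh hz1)
                  (summable_eps.mul_left 9)
            _ = 9 * (1/500) := by rw [tsum_mul_left, tsum_eps]
        linarith
    _ ≤ 21/20 := by norm_num

end Stmt2H

section Stmt2F

noncomputable abbrev ellinf := lp (fun _ : ℕ => ℂ) ∞

lemma coeff_le (a : ellinf) (m : ℕ) : ‖a m‖ ≤ ‖a‖ :=
  lp.norm_apply_le_norm ENNReal.top_ne_zero a m

noncomputable def FFfun (a : ellinf) : ℂ → ℂ := fun z =>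
  if ‖z‖ < 1 then ∑' m, (a m) * ff m z else 0

lemma summable_aff (a : ellinf) {z : ℂ} (hz : ‖z‖ < 1) :
    Summable (fun m => (a m) * ff m z) := by
  apply Summable.of_norm
  apply Summable.of_nonneg_of_le (fun m => norm_nonneg _) (fun m => ?_)
    ((summable_norm_ff hz).mul_left ‖a‖)
  rw [norm_mul]
  exact mul_le_mul_of_nonneg_right (coeff_le a m) (norm_nonneg _)

lemma FFfun_eq {a : ellinf} {z : ℂ} (hz : ‖z‖ < 1) :
    FFfun a z = ∑' m, (a m) * ff m z := if_pos hz

noncomputable def Fmap : ellinf →ₗ[ℂ] (ℂ → ℂ) where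
  toFun := FFfun
  map_add' a b := by
    funext z
    by_cases hz : ‖z‖ < 1
    · simp only [FFfun, if_pos hz, Pi.add_apply]
      rw [← Summable.tsum_add (summable_aff a hz) (summable_aff b hz)]
      congr 1; funext m
      have : (a + b) m = a m + b m := by
        rw [lp.coeFn_add]; rfl
      rw [this]; ring
    · simp only [FFfun, if_neg hz, Pi.add_apply]; norm_num
  map_smul' c a := by
    funext z
    by_cases hz : ‖z‖ < 1
    · simp only [FFfun, if_pos hz, RingHom.id_apply, Pi.smul_apply, smul_eq_mul]
      rw [← tsum_mul_left]
      congr 1; funext m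
      have : (c • a) m = c * a m := by
        rw [lp.coeFn_smul]; rfl
      rw [this]; ring
    · simp only [FFfun, if_neg hz, RingHom.id_apply, Pi.smul_apply, smul_eq_mul]; norm_num

lemma ff_zero (m : ℕ) : ff m 0 = 0 := by
  simp [ff, pp, hh]

lemma FFfun_zero (a : ellinf) : FFfun a 0 = 0 := by
  rw [FFfun_eq (by norm_num : ‖(0:ℂ)‖ < 1)]
  simp [ff_zero]

lemma norm_FF_le (a : ellinf) {z : ℂ} (hz : ‖z‖ < 1) :
    ‖FFfun a z‖ ≤ (21/20) * ‖a‖ := by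
  rw [FFfun_eq hz]
  have hs : Summable (fun m => ‖(a m) * ff m z‖) := by
    apply Summable.of_nonneg_of_le (fun m => norm_nonneg _) (fun m => ?_)
      ((summable_norm_ff hz).mul_left ‖a‖)
    rw [norm_mul]
    exact mul_le_mul_of_nonneg_right (coeff_le a m) (norm_nonneg _)
  calc ‖∑' m, (a m) * ff m z‖ ≤ ∑' m, ‖(a m) * ff m z‖ := norm_tsum_le_tsum_norm hs
    _ ≤ ∑' m, ‖a‖ * ‖ff m z‖ := by
        apply Summable.tsum_le_tsum _ hs ((summable_norm_ff hz).mul_left ‖a‖)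
        intro m
        rw [norm_mul]
        exact mul_le_mul_of_nonneg_right (coeff_le a m) (norm_nonneg _)
    _ = ‖a‖ * ∑' m, ‖ff m z‖ := tsum_mul_left
    _ ≤ ‖a‖ * (21/20) := mul_le_mul_of_nonneg_left (tsum_norm_ff_le hz) (norm_nonneg a)
    _ = (21/20) * ‖a‖ := by ring

end Stmt2F

section Stmt2Diff

lemma slit (m : ℕ) {z : ℂ} (hz : ‖z‖ < 1) :
    1 - (starRingEnd ℂ) (ww m)*z ∈ Complex.slitPlane := by
  rw [Complex.mem_slitPlane_iff]
  left
  have h1 : (1 - (starRingEnd ℂ) (ww m)*z).re = 1 - ((starRingEnd ℂ) (ww m)*z).re := by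
    simp [Complex.sub_re]
  rw [h1]
  have h2 : |((starRingEnd ℂ) (ww m)*z).re| ≤ ‖(starRingEnd ℂ) (ww m)*z‖ := by
    exact Complex.abs_re_le_norm _
  have h3 : ‖(starRingEnd ℂ) (ww m)*z‖ = ‖z‖ := by
    rw [norm_mul, RCLike.norm_conj, abs_ww, one_mul]
  rw [h3] at h2
  have := le_abs_self (((starRingEnd ℂ) (ww m)*z).re)
  linarith

lemma diff_pp (m : ℕ) : Differentiable ℂ (pp m) := by
  unfold pp
  exact (differentiable_id.const_mul _).mul
    (((differentiable_const _).add (differentiable_id.const_mul _)).div_const _ |>.pow _)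

lemma diff_hh (m : ℕ) {z : ℂ} (hz : ‖z‖ < 1) : DifferentiableAt ℂ (hh m) z := by
  have hζ : DifferentiableAt ℂ (fun w : ℂ => 1 - (starRingEnd ℂ) (ww m)*w) z :=
    (differentiableAt_const _).sub (differentiableAt_id.const_mul _)
  have hlog : DifferentiableAt ℂ (fun w : ℂ => Complex.log (1 - (starRingEnd ℂ) (ww m)*w)) z :=
    DifferentiableAt.clog hζ (slit m hz)
  exact (hζ.mul hlog).const_mul _

lemma diff_ff (m : ℕ) {z : ℂ} (hz : ‖z‖ < 1) : DifferentiableAt ℂ (ff m) z :=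
  ((diff_pp m) z).add (diff_hh m hz)

lemma diffOn_FF (a : ellinf) : DifferentiableOn ℂ (FFfun a) (Metric.ball (0:ℂ) 1) := by
  intro z hzmem
  have hz : ‖z‖ < 1 := by rwa [Metric.mem_ball, dist_zero_right] at hzmem
  set ρ : ℝ := (1+‖z‖)/2 with hρdef
  have hρ1 : ρ < 1 := by rw [hρdef]; linarith
  have hρ0 : 0 < ρ := by rw [hρdef]; positivity
  have hzρ : ‖z‖ < ρ := by rw [hρdef]; linarith
  have hU : DifferentiableOn ℂ (fun w => ∑' m, (a m) * ff m w) (Metric.ball (0:ℂ) ρ) := by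
    apply differentiableOn_tsum_of_summable_norm
      (u := fun m => ‖a‖ * (((1+ρ)/2)^(m+1) + 9*eps m))
    · apply Summable.mul_left
      apply Summable.add
      · simp_rw [pow_succ]
        exact (summable_geometric_of_lt_one (by positivity) (by linarith)).mul_right _
      · exact summable_eps.mul_left 9
    · intro i w hw
      have hw1 : ‖w‖ < 1 := by
        rw [Metric.mem_ball, dist_zero_right] at hw
        linarith
      exact ((diff_ff i hw1).const_mul _).differentiableWithinAt
    · exact Metric.isOpen_ball
    · intro i w hw
      rw [Metric.mem_ball, dist_zero_right] at hw
      have hw1 : ‖w‖ ≤ 1 := by linarith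
      have hff : ‖ff i w‖ ≤ ((1+ρ)/2)^(i+1) + 9*eps i := by
        calc ‖ff i w‖ ≤ ‖pp i w‖ + ‖hh i w‖ := norm_add_le _ _
          _ ≤ ((1+ρ)/2)^(i+1) + 9*eps i := by
              have h1 : ‖pp i w‖ ≤ ((1+‖w‖)/2)^(i+1) := pp_le_rho i hw1
              have h2 : ((1+‖w‖)/2 : ℝ)^(i+1) ≤ ((1+ρ)/2)^(i+1) :=
                pow_le_pow_left₀ (by positivity) (by linarith) _
              have h3 := norm_hh_le i hw1
              linarith
      rw [norm_mul]
      exact mul_le_mul (coeff_le a i) hff (norm_nonneg _) (norm_nonneg _)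
  have hz' : z ∈ Metric.ball (0:ℂ) ρ := by
    rw [Metric.mem_ball, dist_zero_right]; exact hzρ
  have hDA : DifferentiableAt ℂ (fun w => ∑' m, (a m) * ff m w) z :=
    hU.differentiableAt (Metric.isOpen_ball.mem_nhds hz')
  have heq : FFfun a =ᶠ[nhds z] fun w => ∑' m, (a m) * ff m w := by
    filter_upwards [Metric.isOpen_ball.mem_nhds hzmem] with w hw
    have hw1 : ‖w‖ < 1 := by rwa [Metric.mem_ball, dist_zero_right] at hw
    exact FFfun_eq hw1
  exact (hDA.congr_of_eventuallyEq heq).differentiableWithinAt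

end Stmt2Diff

section Stmt2Lower

lemma ff_far (m : ℕ) {z : ℂ} (hz : ‖z‖ ≤ 1) (hfar : (1/8)*(1/2)^m ≤ ‖z - ww m‖) :
    ‖ff m z‖ ≤ (1/400)^(m+1) + 9*eps m := by
  calc ‖ff m z‖ ≤ ‖pp m z‖ + ‖hh m z‖ := norm_add_le _ _
    _ ≤ (1/400)^(m+1) + 9*eps m := add_le_add (pp_far m hz hfar) (norm_hh_le m hz)

set_option maxHeartbeats 1000000 in
lemma exists_big (a : ellinf) (ha : 0 < ‖a‖) :
    ∃ z : ℂ, ‖z‖ < 1 ∧ ‖a‖/2 ≤ ‖FFfun a z‖ := by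
  -- pick an index with big coefficient
  have hsup : (9/10)*‖a‖ < ⨆ i, ‖a i‖ := by
    rw [← lp.norm_eq_ciSup]; linarith
  obtain ⟨n, hn⟩ := exists_lt_of_lt_ciSup hsup
  -- pick a radius
  have hcont : Filter.Tendsto (fun r : ℝ => r*((1+r)/2)^(NN n)) (nhdsWithin 1 (Set.Iio 1))
      (nhds 1) := by
    have hc : Continuous (fun r : ℝ => r*((1+r)/2)^(NN n)) :=
      continuous_id'.mul (((continuous_const.add continuous_id').div_const _).pow _)
    have h2 := hc.tendsto 1
    norm_num at h2
    exact h2.mono_left nhdsWithin_le_nhds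
  have hev1 : ∀ᶠ r in nhdsWithin (1:ℝ) (Set.Iio 1), (9:ℝ)/10 < r*((1+r)/2)^(NN n) :=
    hcont.eventually (eventually_gt_nhds (by norm_num))
  have hev2 : ∀ᶠ r in nhdsWithin (1:ℝ) (Set.Iio 1),
      r ∈ Set.Ioo (max (1 - (9/40)*(1/2)^n) 0) 1 := by
    apply Ioo_mem_nhdsLT_of_mem
    constructor
    · apply max_lt
      · have : (0:ℝ) < (9/40)*(1/2)^n := by positivity
        linarith
      · norm_num
    · exact le_refl 1
  obtain ⟨r, hr9, hrIoo⟩ := (hev1.and hev2).exists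
  obtain ⟨hrlo, hr1⟩ := hrIoo
  have hr0 : 0 < r := lt_of_le_of_lt (le_max_right _ _) hrlo
  have hrd : 1 - r ≤ (9/40)*(1/2)^n := by
    have := lt_of_le_of_lt (le_max_left _ _) hrlo
    linarith
  set z : ℂ := (r:ℂ) * ww n with hzdef
  have hzn : ‖z‖ = r := by
    rw [hzdef, norm_mul, abs_ww, Complex.norm_real, Real.norm_eq_abs, _root_.abs_of_pos hr0,
      mul_one]
  have hz1 : ‖z‖ < 1 := by rw [hzn]; exact hr1
  have hz1' : ‖z‖ ≤ 1 := le_of_lt hz1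
  -- evaluate pp n at z
  have hcz : (starRingEnd ℂ) (ww n) * z = (r:ℂ) := by
    rw [hzdef]
    calc (starRingEnd ℂ) (ww n) * ((r:ℂ) * ww n) = (r:ℂ) * ((starRingEnd ℂ) (ww n) * ww n) := by
          ring
      _ = (r:ℂ) := by rw [conj_ww_mul_ww]; ring
  have hppval : ‖pp n z‖ = r*((1+r)/2)^(NN n) := by
    rw [pp, hcz]
    have h1 : ((1 + (r:ℂ))/2) = (((1+r)/2 : ℝ) : ℂ) := by push_cast; ring
    rw [h1, norm_mul, norm_pow, Complex.norm_real, Complex.norm_real, Real.norm_eq_abs,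
      Real.norm_eq_abs, _root_.abs_of_pos hr0, _root_.abs_of_pos (by linarith : (0:ℝ) < (1+r)/2)]
  -- distance from z to ww n
  have hdzn : ‖z - ww n‖ = 1 - r := by
    rw [hzdef]
    have : (r:ℂ) * ww n - ww n = ((r - 1 : ℝ):ℂ) * ww n := by push_cast; ring
    rw [this, norm_mul, abs_ww, mul_one, Complex.norm_real, Real.norm_eq_abs,
      abs_of_nonpos (by linarith), neg_sub]
  -- all other points are far
  have hfarm : ∀ m, m ≠ n → (1/8)*(1/2)^m ≤ ‖z - ww m‖ := by
    intro m hm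
    have htri : ‖ww n - ww m‖ - ‖z - ww n‖ ≤ ‖z - ww m‖ := by
      have h0 := norm_sub_le (z - ww m) (z - ww n)
      have he : (z - ww m) - (z - ww n) = ww n - ww m := by ring
      rw [he] at h0
      linarith
    rw [hdzn] at htri
    rcases Nat.lt_or_ge m n with h | h
    · have hsep := sep h
      have hmono : ((1/2:ℝ))^n ≤ (1/2)^m :=
        pow_le_pow_of_le_one (by norm_num) (by norm_num) (le_of_lt h)
      have hrev : ‖ww n - ww m‖ = ‖ww m - ww n‖ := norm_sub_rev _ _
      nlinarith
    · have hlt : n < m := by omega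
      have hsep := sep hlt
      have hmono : ((1/2:ℝ))^m ≤ (1/2)^n :=
        pow_le_pow_of_le_one (by norm_num) (by norm_num) (le_of_lt hlt)
      nlinarith
  -- decompose the sum
  refine ⟨z, hz1, ?_⟩
  rw [FFfun_eq hz1]
  have hsum := summable_aff a hz1
  rw [Summable.tsum_eq_add_tsum_ite hsum n]
  set B := ∑' m, (if m = n then 0 else (a m) * ff m z) with hBdef
  -- bound the remainder B
  have hBsummable : Summable (fun m => if m = n then (0:ℂ) else (a m) * ff m z) := by
    apply Summable.of_norm
    apply Summable.of_nonneg_of_le (fun m => norm_nonneg _) (fun m => ?_)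
      (((summable_far.add (summable_eps.mul_left 9)).mul_left ‖a‖))
    by_cases hm : m = n
    · rw [if_pos hm, norm_zero]
      have h1 : (0:ℝ) ≤ (1/400)^(m+1) := by positivity
      have h2 := le_of_lt (eps_pos m)
      have := norm_nonneg a
      nlinarith
    · rw [if_neg hm, norm_mul]
      calc ‖a m‖ * ‖ff m z‖ ≤ ‖a‖ * ((1/400)^(m+1) + 9*eps m) := by
            apply mul_le_mul (coeff_le a m) (ff_far m hz1' (hfarm m hm)) (norm_nonneg _)
              (norm_nonneg _)
        _ = ‖a‖ * ((fun m => (1/400:ℝ)^(m+1)) m + (fun m => 9*eps m) m) := rfl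
  have hBnorm : ‖B‖ ≤ ‖a‖ * (1/399 + 9*(1/500)) := by
    rw [hBdef]
    calc ‖∑' m, (if m = n then 0 else (a m) * ff m z)‖
        ≤ ∑' m, ‖if m = n then (0:ℂ) else (a m) * ff m z‖ := by
          apply norm_tsum_le_tsum_norm hBsummable.norm
      _ ≤ ∑' m, ‖a‖ * ((1/400)^(m+1) + 9*eps m) := by
          apply Summable.tsum_le_tsum _ hBsummable.norm
            ((summable_far.add (summable_eps.mul_left 9)).mul_left ‖a‖)
          intro m
          by_cases hm : m = n
          · rw [if_pos hm, norm_zero]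
            have h1 : (0:ℝ) ≤ (1/400)^(m+1) := by positivity
            have h2 := le_of_lt (eps_pos m)
            have := norm_nonneg a
            nlinarith
          · rw [if_neg hm, norm_mul]
            exact mul_le_mul (coeff_le a m) (ff_far m hz1' (hfarm m hm)) (norm_nonneg _)
              (norm_nonneg _)
      _ = ‖a‖ * (1/399 + 9*(1/500)) := by
          rw [tsum_mul_left]
          congr 1
          rw [Summable.tsum_add summable_far (summable_eps.mul_left 9), tsum_far, tsum_mul_left, tsum_eps]
  -- bound the main term from below
  have hffn : r*((1+r)/2)^(NN n) - 9*eps n ≤ ‖ff n z‖ := by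
    have htri : ‖pp n z‖ - ‖hh n z‖ ≤ ‖pp n z + hh n z‖ := by
      have h := norm_sub_le (pp n z + hh n z) (hh n z)
      simp only [add_sub_cancel_right] at h
      linarith
    have := norm_hh_le n hz1'
    rw [ff]
    rw [hppval] at htri
    linarith
  have hmain : ‖a n‖ * (r*((1+r)/2)^(NN n) - 9*eps n) ≤ ‖(a n) * ff n z‖ := by
    rw [norm_mul]
    apply mul_le_mul_of_nonneg_left hffn (norm_nonneg _)
  -- combine
  have htri2 : ‖(a n) * ff n z‖ - ‖B‖ ≤ ‖(a n) * ff n z + B‖ := by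
    have h := norm_sub_le ((a n) * ff n z + B) B
    simp only [add_sub_cancel_right] at h
    linarith
  have hepsn : eps n ≤ 1/1000 := by
    rw [eps]
    have : ((1/2:ℝ))^n ≤ 1 := pow_le_one₀ (by norm_num) (by norm_num)
    linarith
  have han : ‖a n‖ ≤ ‖a‖ := coeff_le a n
  have hphi : (9:ℝ)/10 < r*((1+r)/2)^(NN n) := hr9
  have hphile : r*((1+r)/2)^(NN n) ≤ 1 := by
    have h1 : ((1+r)/2 : ℝ) ≤ 1 := by linarith
    have h2 : ((1+r)/2 : ℝ)^(NN n) ≤ 1 := pow_le_one₀ (by linarith) h1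
    nlinarith
  have hepsn0 := eps_pos n
  have h891 : (891:ℝ)/1000 ≤ r*((1+r)/2)^(NN n) - 9*eps n := by linarith
  have hkey : (9/10)*‖a‖*(891/1000) ≤ ‖a n‖ * (r*((1+r)/2)^(NN n) - 9*eps n) := by
    calc (9/10)*‖a‖*(891/1000) ≤ (9/10)*‖a‖*(r*((1+r)/2)^(NN n) - 9*eps n) := by
          apply mul_le_mul_of_nonneg_left h891 (by positivity)
      _ ≤ ‖a n‖ * (r*((1+r)/2)^(NN n) - 9*eps n) :=
          mul_le_mul_of_nonneg_right (le_of_lt hn) (by linarith)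
  linarith [hmain, htri2, hBnorm, hkey, norm_nonneg B]

end Stmt2Lower

section Stmt2Deriv

noncomputable def ppd (m : ℕ) (z : ℂ) : ℂ :=
  (starRingEnd ℂ) (ww m) * ((1 + (starRingEnd ℂ) (ww m)*z)/2)^(NN m) +
  (starRingEnd ℂ) (ww m) * z *
    ((NN m) * ((1 + (starRingEnd ℂ) (ww m)*z)/2)^(NN m - 1) * ((starRingEnd ℂ) (ww m)/2))

lemma hasDerivAt_pp (m : ℕ) (z : ℂ) : HasDerivAt (pp m) (ppd m z) z := by
  have h1 : HasDerivAt (fun z : ℂ => (starRingEnd ℂ) (ww m) * z) ((starRingEnd ℂ) (ww m)) z := by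
    simpa using (hasDerivAt_id z).const_mul ((starRingEnd ℂ) (ww m))
  have hv : HasDerivAt (fun z : ℂ => (1 + (starRingEnd ℂ) (ww m)*z)/2)
      ((starRingEnd ℂ) (ww m)/2) z := by
    simpa using (h1.const_add 1).div_const 2
  have hvN := hv.pow (NN m)
  have := h1.mul hvN
  unfold pp ppd
  exact this

lemma ppd_bound (m : ℕ) {z : ℂ} (hz : ‖z‖ ≤ 1) {V : ℝ} (hV0 : 0 ≤ V) (hV1 : V ≤ 1)
    (hV : ‖(1 + (starRingEnd ℂ) (ww m)*z)/2‖ ≤ V) :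
    ‖ppd m z‖ ≤ (1 + NN m) * V^(NN m - 1) := by
  have hc : ‖(starRingEnd ℂ) (ww m)‖ = 1 := by rw [RCLike.norm_conj]; exact abs_ww m
  have hvpow : ∀ k : ℕ, ‖((1 + (starRingEnd ℂ) (ww m)*z)/2)^k‖ ≤ V^k := fun k => by
    rw [norm_pow]; exact pow_le_pow_left₀ (norm_nonneg _) hV k
  have h1 : ‖(starRingEnd ℂ) (ww m) * ((1 + (starRingEnd ℂ) (ww m)*z)/2)^(NN m)‖
      ≤ V^(NN m - 1) := by
    rw [norm_mul, hc, one_mul]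
    calc ‖((1 + (starRingEnd ℂ) (ww m)*z)/2)^(NN m)‖ ≤ V^(NN m) := hvpow _
      _ ≤ V^(NN m - 1) := pow_le_pow_of_le_one hV0 hV1 (Nat.sub_le _ _)
  have h2 : ‖(starRingEnd ℂ) (ww m) * z *
      ((NN m) * ((1 + (starRingEnd ℂ) (ww m)*z)/2)^(NN m - 1) * ((starRingEnd ℂ) (ww m)/2))‖
      ≤ (NN m) * V^(NN m - 1) := by
    have hN : ‖((NN m : ℕ) : ℂ)‖ = (NN m : ℝ) := by
      rw [Complex.norm_natCast]
    have h2' : ‖(2:ℂ)‖ = 2 := by norm_num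
    rw [norm_mul, norm_mul, norm_mul, norm_mul, norm_div, hc, hN, h2']
    have hvb := hvpow (NN m - 1)
    have hNn : (0:ℝ) ≤ (NN m : ℝ) := Nat.cast_nonneg _
    have hvn : (0:ℝ) ≤ ‖((1 + (starRingEnd ℂ) (ww m)*z)/2)^(NN m - 1)‖ := norm_nonneg _
    have hVp : (0:ℝ) ≤ V^(NN m - 1) := pow_nonneg hV0 _
    nlinarith [mul_le_mul_of_nonneg_left hvb hNn, norm_nonneg z, hz,
      mul_nonneg hNn hvn, mul_nonneg hNn hVp]
  calc ‖ppd m z‖ ≤ ‖(starRingEnd ℂ) (ww m) * ((1 + (starRingEnd ℂ) (ww m)*z)/2)^(NN m)‖ +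
        ‖(starRingEnd ℂ) (ww m) * z *
        ((NN m) * ((1 + (starRingEnd ℂ) (ww m)*z)/2)^(NN m - 1) * ((starRingEnd ℂ) (ww m)/2))‖ :=
        norm_add_le _ _
    _ ≤ V^(NN m - 1) + (NN m) * V^(NN m - 1) := add_le_add h1 h2
    _ = (1 + NN m) * V^(NN m - 1) := by ring

noncomputable def hhd (m : ℕ) (z : ℂ) : ℂ :=
  (eps m : ℂ) * (-((starRingEnd ℂ) (ww m)) * Complex.log (1 - (starRingEnd ℂ) (ww m)*z)
    - (starRingEnd ℂ) (ww m))

lemma hasDerivAt_hh (m : ℕ) {z : ℂ} (hz : ‖z‖ < 1) : HasDerivAt (hh m) (hhd m z) z := by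
  have hζne : 1 - (starRingEnd ℂ) (ww m)*z ≠ 0 := Complex.slitPlane_ne_zero (slit m hz)
  have hζd : HasDerivAt (fun z : ℂ => 1 - (starRingEnd ℂ) (ww m)*z)
      (-((starRingEnd ℂ) (ww m))) z := by
    simpa [sub_eq_add_neg] using (((hasDerivAt_id z).const_mul ((starRingEnd ℂ) (ww m))).neg).const_add 1
  have hlog := hζd.clog (slit m hz)
  have hmul := hζd.mul hlog
  have heq : -((starRingEnd ℂ) (ww m)) * Complex.log (1 - (starRingEnd ℂ) (ww m)*z) +
      (1 - (starRingEnd ℂ) (ww m)*z) *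
        (-((starRingEnd ℂ) (ww m)) / (1 - (starRingEnd ℂ) (ww m)*z))
      = -((starRingEnd ℂ) (ww m)) * Complex.log (1 - (starRingEnd ℂ) (ww m)*z)
        - (starRingEnd ℂ) (ww m) := by
    field_simp
    ring
  rw [heq] at hmul
  have := hmul.const_mul ((eps m : ℂ))
  unfold hh hhd
  exact this

lemma norm_log_le {m : ℕ} {z : ℂ} {β : ℝ} (hβ0 : 0 < β) (hβ1 : β ≤ 1)
    (hβ : β ≤ ‖z - ww m‖) (hz : ‖z‖ ≤ 1) :
    ‖Complex.log (1 - (starRingEnd ℂ) (ww m)*z)‖ ≤ Real.log (1/β) + Real.pi + 1 := by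
  set ζ := 1 - (starRingEnd ℂ) (ww m)*z with hζdef
  have hnζ : ‖ζ‖ = ‖z - ww m‖ := norm_one_sub_conj m z
  have ht2 : ‖ζ‖ ≤ 2 := by rw [hnζ]; exact dist_le_two m hz
  have ht0 : 0 < ‖ζ‖ := by rw [hnζ]; linarith
  have habs : ‖ζ‖ = ‖ζ‖ := rfl
  have hlog : ‖Complex.log ζ‖ ≤ |Real.log ‖ζ‖| + Real.pi := by
    calc ‖Complex.log ζ‖ ≤ |(Complex.log ζ).re| + |(Complex.log ζ).im| :=
          Complex.norm_le_abs_re_add_abs_im _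
      _ ≤ |Real.log ‖ζ‖| + Real.pi := by
          rw [Complex.log_re, Complex.log_im]
          have := Complex.abs_arg_le_pi ζ
          linarith [le_abs_self (Complex.arg ζ), neg_abs_le (Complex.arg ζ)]
  have hlb : |Real.log ‖ζ‖| ≤ Real.log (1/β) + 1 := by
    have hloginv : 0 ≤ Real.log (1/β) := Real.log_nonneg (by rw [le_div_iff₀ hβ0]; linarith)
    by_cases h1 : ‖ζ‖ ≤ 1
    · have hle : Real.log ‖ζ‖ ≤ 0 := Real.log_nonpos (le_of_lt ht0) h1
      rw [abs_of_nonpos hle]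
      have : -Real.log ‖ζ‖ = Real.log (1/‖ζ‖) := by
        rw [one_div, Real.log_inv]
      rw [this]
      have hmono : Real.log (1/‖ζ‖) ≤ Real.log (1/β) := by
        apply Real.log_le_log (by positivity)
        rw [div_le_div_iff₀ ht0 hβ0]
        have : β ≤ ‖ζ‖ := by rw [hnζ]; exact hβ
        linarith
      linarith
    · push_neg at h1
      rw [_root_.abs_of_nonneg (Real.log_nonneg (le_of_lt h1))]
      have : Real.log ‖ζ‖ ≤ ‖ζ‖ - 1 := Real.log_le_sub_one_of_pos ht0
      linarith
  linarith

lemma hhd_bound (m : ℕ) {z : ℂ} {β : ℝ} (hβ0 : 0 < β) (hβ1 : β ≤ 1)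
    (hβ : β ≤ ‖z - ww m‖) (hz : ‖z‖ ≤ 1) :
    ‖hhd m z‖ ≤ eps m * (Real.log (1/β) + Real.pi + 2) := by
  have hc : ‖(starRingEnd ℂ) (ww m)‖ = 1 := by rw [RCLike.norm_conj]; exact abs_ww m
  have hlog := norm_log_le hβ0 hβ1 hβ hz
  calc ‖hhd m z‖ = ‖(eps m : ℂ)‖ * ‖-((starRingEnd ℂ) (ww m)) *
        Complex.log (1 - (starRingEnd ℂ) (ww m)*z) - (starRingEnd ℂ) (ww m)‖ := by
        rw [hhd, norm_mul]
    _ ≤ eps m * (Real.log (1/β) + Real.pi + 2) := by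
        have h1 : ‖(eps m : ℂ)‖ = eps m := by
          rw [Complex.norm_real, Real.norm_eq_abs, _root_.abs_of_pos (eps_pos m)]
        rw [h1]
        apply mul_le_mul_of_nonneg_left _ (le_of_lt (eps_pos m))
        calc ‖-((starRingEnd ℂ) (ww m)) * Complex.log (1 - (starRingEnd ℂ) (ww m)*z)
              - (starRingEnd ℂ) (ww m)‖
            ≤ ‖-((starRingEnd ℂ) (ww m)) * Complex.log (1 - (starRingEnd ℂ) (ww m)*z)‖ +
              ‖(starRingEnd ℂ) (ww m)‖ := norm_sub_le _ _
          _ ≤ Real.log (1/β) + Real.pi + 1 + 1 := by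
              rw [norm_mul, norm_neg, hc, one_mul]
              linarith
          _ = Real.log (1/β) + Real.pi + 2 := by ring

lemma pp_lip {m : ℕ} {s : Set ℂ} (hconv : Convex ℝ s) (hs1 : ∀ ζ ∈ s, ‖ζ‖ ≤ 1)
    {V : ℝ} (hV0 : 0 ≤ V) (hV1 : V ≤ 1)
    (hV : ∀ ζ ∈ s, ‖(1 + (starRingEnd ℂ) (ww m)*ζ)/2‖ ≤ V)
    {x y : ℂ} (hx : x ∈ s) (hy : y ∈ s) :
    ‖pp m y - pp m x‖ ≤ ((1 + NN m) * V^(NN m - 1)) * ‖y - x‖ := by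
  apply Convex.norm_image_sub_le_of_norm_hasDerivWithin_le
    (fun ζ hζ => (hasDerivAt_pp m ζ).hasDerivWithinAt)
    (fun ζ hζ => ppd_bound m (hs1 ζ hζ) hV0 hV1 (hV ζ hζ)) hconv hx hy

lemma hh_lip {m : ℕ} {s : Set ℂ} (hconv : Convex ℝ s) (hs1 : ∀ ζ ∈ s, ‖ζ‖ < 1)
    {β : ℝ} (hβ0 : 0 < β) (hβ1 : β ≤ 1) (hβ : ∀ ζ ∈ s, β ≤ ‖ζ - ww m‖)
    {x y : ℂ} (hx : x ∈ s) (hy : y ∈ s) :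
    ‖hh m y - hh m x‖ ≤ (eps m * (Real.log (1/β) + Real.pi + 2)) * ‖y - x‖ := by
  apply Convex.norm_image_sub_le_of_norm_hasDerivWithin_le
    (fun ζ hζ => (hasDerivAt_hh m (hs1 ζ hζ)).hasDerivWithinAt)
    (fun ζ hζ => hhd_bound m hβ0 hβ1 (hβ ζ hζ) (le_of_lt (hs1 ζ hζ))) hconv hx hy

end Stmt2Deriv

section Stmt2NotLip

lemma NN_strictMono : StrictMono NN := by
  apply strictMono_nat_of_lt_succ
  intro k
  unfold NN
  have h2 : 2^(2*(k+1)+9) = 2^(2*k+9) * 4 := by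
    rw [show 2*(k+1)+9 = (2*k+9)+2 by ring, pow_add]
    norm_num
  rw [h2]
  have hp : 0 < 2^(2*k+9) := Nat.pow_pos (by norm_num)
  calc 6*(k+1)*2^(2*k+9) < (6*(k+2)*4) * 2^(2*k+9) := by
        apply Nat.mul_lt_mul_of_pos_right (by omega) hp
    _ = 6*(k+1+1)*(2^(2*k+9)*4) := by ring

lemma summable_Cp {q : ℝ} (hq0 : 0 < q) (hq1 : q < 1) :
    Summable (fun m => (1+(NN m:ℝ)) * q^(NN m - 1)) := by
  have hbase : Summable (fun k : ℕ => (1+(k:ℝ)) * q^k) := by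
    have h1 : Summable (fun k : ℕ => ((k:ℝ))^1 * q^k) :=
      summable_pow_mul_geometric_of_norm_lt_one 1
        (by rw [Real.norm_eq_abs, _root_.abs_of_pos hq0]; exact hq1)
    have h2 : Summable (fun k : ℕ => q^k) :=
      summable_geometric_of_lt_one (le_of_lt hq0) hq1
    apply (h2.add h1).congr
    intro k
    ring
  have hcomp : Summable ((fun k : ℕ => (1+(k:ℝ)) * q^k) ∘ NN) :=
    hbase.comp_injective NN_strictMono.injective
  apply ((hcomp.mul_left (1/q)).congr)
  intro m
  have hNm : NN m - 1 + 1 = NN m := Nat.succ_pred_eq_of_pos (NN_pos m)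
  simp only [Function.comp_apply]
  rw [← hNm, pow_succ]
  field_simp
  simp

lemma exists_nonzero (a : ellinf) (ha : a ≠ 0) : ∃ n, a n ≠ 0 := by
  by_contra h
  push_neg at h
  apply ha
  have hnorm : ‖a‖ = 0 := by
    rw [lp.norm_eq_ciSup]
    simp [h]
  exact norm_eq_zero.mp hnorm

set_option maxHeartbeats 2000000 in
lemma not_lip (a : ellinf) (ha : a ≠ 0) (K : ℝ≥0) :
    ¬ LipschitzOnWith K (FFfun a) (Metric.ball (0:ℂ) 1) := by
  intro hK
  obtain ⟨n, han⟩ := exists_nonzero a ha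
  have han0 : 0 < ‖a n‖ := norm_pos_iff.mpr han
  set β : ℝ := (39/160)*(1/2)^n with hβdef
  have hpow1 : ((1:ℝ)/2)^n ≤ 1 := pow_le_one₀ (by norm_num) (by norm_num)
  have hpow0 : (0:ℝ) < (1/2)^n := by positivity
  have hβ0 : 0 < β := by rw [hβdef]; positivity
  have hβ1 : β ≤ 1 := by rw [hβdef]; nlinarith
  set q : ℝ := 1 - β^2/8 with hqdef
  have hq0 : 0 < q := by rw [hqdef]; nlinarith
  have hq1 : q < 1 := by rw [hqdef]; nlinarith
  set Λ : ℝ := Real.log (1/β) + Real.pi + 2 with hΛdef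
  have hΛ0 : 0 ≤ Λ := by
    rw [hΛdef]
    have h1 : 0 ≤ Real.log (1/β) := Real.log_nonneg (by rw [le_div_iff₀ hβ0]; linarith)
    linarith [Real.pi_pos]
  set Cp : ℕ → ℝ := fun m => (1+(NN m:ℝ)) * q^(NN m - 1) with hCpdef
  have hCpS : Summable Cp := summable_Cp hq0 hq1
  have hCpnn : ∀ m, 0 ≤ Cp m := fun m => by
    rw [hCpdef]
    have : (0:ℝ) ≤ (NN m : ℝ) := Nat.cast_nonneg _
    positivity
  have hChS : Summable (fun m => eps m * Λ) := summable_eps.mul_right Λ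
  set CC : ℝ := ∑' m, (Cp m + eps m * Λ) with hCCdef
  have hCC0 : 0 ≤ CC := by
    rw [hCCdef]
    apply tsum_nonneg
    intro m
    have := le_of_lt (eps_pos m)
    have := hCpnn m
    nlinarith
  set D : ℝ := ‖a‖ * (CC + (1 + (NN n : ℝ))) with hDdef
  have hD0 : 0 ≤ D := by
    rw [hDdef]
    have : (0:ℝ) ≤ (NN n : ℝ) := Nat.cast_nonneg _
    have := norm_nonneg a
    nlinarith
  set M : ℝ := Real.log 2 + ((K:ℝ) + D)/(‖a n‖ * eps n) + 1 with hMdef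
  set v : ℝ := min (min ((9/40)*(1/2)^n) (1/4)) (Real.exp (-M)) with hvdef
  have hv0 : 0 < v := lt_min (lt_min (by positivity) (by norm_num)) (Real.exp_pos _)
  have hvδ : v ≤ (9/40)*(1/2)^n := le_trans (min_le_left _ _) (min_le_left _ _)
  have hv4 : v ≤ 1/4 := le_trans (min_le_left _ _) (min_le_right _ _)
  have hvM : v ≤ Real.exp (-M) := min_le_right _ _
  -- the two points
  set z1 : ℂ := ((1-v : ℝ):ℂ) * ww n with hz1def
  set z2 : ℂ := ((1-v/2 : ℝ):ℂ) * ww n with hz2def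
  have hz1n : ‖z1‖ = 1 - v := by
    rw [hz1def, norm_mul, abs_ww, mul_one, Complex.norm_real, Real.norm_eq_abs,
      _root_.abs_of_nonneg (by linarith)]
  have hz2n : ‖z2‖ = 1 - v/2 := by
    rw [hz2def, norm_mul, abs_ww, mul_one, Complex.norm_real, Real.norm_eq_abs,
      _root_.abs_of_nonneg (by linarith)]
  have hz1b : ‖z1‖ < 1 := by rw [hz1n]; linarith
  have hz2b : ‖z2‖ < 1 := by rw [hz2n]; linarith
  have hz1mem : z1 ∈ Metric.ball (0:ℂ) 1 := by
    rw [Metric.mem_ball, dist_zero_right]; exact hz1b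
  have hz2mem : z2 ∈ Metric.ball (0:ℂ) 1 := by
    rw [Metric.mem_ball, dist_zero_right]; exact hz2b
  -- segment facts
  set s : Set ℂ := segment ℝ z1 z2 with hsdef
  have hconv : Convex ℝ s := convex_segment _ _
  have hz1s : z1 ∈ s := left_mem_segment ℝ z1 z2
  have hz2s : z2 ∈ s := right_mem_segment ℝ z1 z2
  have hseg1 : ∀ ζ ∈ s, ‖ζ‖ ≤ 1 - v/2 := by
    rintro ζ ⟨α, γ, hα, hγ, hαγ, rfl⟩
    calc ‖α • z1 + γ • z2‖ ≤ ‖α • z1‖ + ‖γ • z2‖ := norm_add_le _ _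
      _ = α * ‖z1‖ + γ * ‖z2‖ := by
          rw [norm_smul, norm_smul, Real.norm_eq_abs, Real.norm_eq_abs,
            _root_.abs_of_nonneg hα, _root_.abs_of_nonneg hγ]
      _ ≤ 1 - v/2 := by rw [hz1n, hz2n]; nlinarith
  have hseglt : ∀ ζ ∈ s, ‖ζ‖ < 1 := fun ζ hζ => lt_of_le_of_lt (hseg1 ζ hζ) (by linarith)
  have hsegw : ∀ ζ ∈ s, ‖ζ - ww n‖ ≤ v := by
    rintro ζ ⟨α, γ, hα, hγ, hαγ, rfl⟩
    have hw : (α+γ) • ww n = ww n := by rw [hαγ, one_smul]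
    have hre : α • z1 + γ • z2 - ww n = α • (z1 - ww n) + γ • (z2 - ww n) := by
      simp only [Complex.real_smul, smul_sub]
      have hc : ((α:ℂ)) + ((γ:ℂ)) = 1 := by exact_mod_cast hαγ
      linear_combination (ww n) * hc
    rw [hre]
    have h1 : ‖z1 - ww n‖ = v := by
      have : z1 - ww n = ((-v : ℝ):ℂ) * ww n := by rw [hz1def]; push_cast; ring
      rw [this, norm_mul, abs_ww, mul_one, Complex.norm_real, Real.norm_eq_abs,
        abs_neg, _root_.abs_of_nonneg (le_of_lt hv0)]
    have h2 : ‖z2 - ww n‖ = v/2 := by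
      have : z2 - ww n = ((-(v/2) : ℝ):ℂ) * ww n := by rw [hz2def]; push_cast; ring
      rw [this, norm_mul, abs_ww, mul_one, Complex.norm_real, Real.norm_eq_abs,
        abs_neg, _root_.abs_of_nonneg (by linarith)]
    calc ‖α • (z1 - ww n) + γ • (z2 - ww n)‖ ≤ ‖α • (z1 - ww n)‖ + ‖γ • (z2 - ww n)‖ :=
          norm_add_le _ _
      _ = α * v + γ * (v/2) := by
          rw [norm_smul, norm_smul, Real.norm_eq_abs, Real.norm_eq_abs,
            _root_.abs_of_nonneg hα, _root_.abs_of_nonneg hγ, h1, h2]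
      _ ≤ v := by nlinarith
  have hsegfar : ∀ ζ ∈ s, ∀ m, m ≠ n → β ≤ ‖ζ - ww m‖ := by
    intro ζ hζ m hm
    have htri : ‖ww n - ww m‖ - ‖ζ - ww n‖ ≤ ‖ζ - ww m‖ := by
      have h0 := norm_sub_le (ζ - ww m) (ζ - ww n)
      have he : (ζ - ww m) - (ζ - ww n) = ww n - ww m := by ring
      rw [he] at h0
      linarith
    have hw := hsegw ζ hζ
    rcases Nat.lt_or_ge m n with h | h
    · have hsep := sep h
      have hmono : ((1/2:ℝ))^n ≤ (1/2)^m :=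
        pow_le_pow_of_le_one (by norm_num) (by norm_num) (le_of_lt h)
      have hrev : ‖ww n - ww m‖ = ‖ww m - ww n‖ := norm_sub_rev _ _
      rw [hβdef]
      nlinarith
    · have hlt : n < m := by omega
      have hsep := sep hlt
      rw [hβdef]
      nlinarith
  have hsegV : ∀ ζ ∈ s, ∀ m, m ≠ n → ‖(1 + (starRingEnd ℂ) (ww m)*ζ)/2‖ ≤ q := by
    intro ζ hζ m hm
    have h1 := vbound m (le_of_lt (hseglt ζ hζ))
    have h2 := hsegfar ζ hζ m hm
    have h3 : β^2 ≤ ‖ζ - ww m‖^2 := pow_le_pow_left₀ (le_of_lt hβ0) h2 2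
    rw [hqdef]
    linarith
  -- distance between the two points
  have ht : ‖z2 - z1‖ = v/2 := by
    have : z2 - z1 = ((v/2 : ℝ):ℂ) * ww n := by rw [hz1def, hz2def]; push_cast; ring
    rw [this, norm_mul, abs_ww, mul_one, Complex.norm_real, Real.norm_eq_abs,
      _root_.abs_of_nonneg (by linarith)]
  -- per-term bounds for m ≠ n
  have hterm : ∀ m, m ≠ n → ‖ff m z2 - ff m z1‖ ≤ (Cp m + eps m * Λ) * (v/2) := by
    intro m hm
    have hp := pp_lip hconv (fun ζ hζ => le_of_lt (hseglt ζ hζ)) (le_of_lt hq0)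
      (le_of_lt hq1) (fun ζ hζ => hsegV ζ hζ m hm) hz1s hz2s
    have hhl := hh_lip hconv hseglt hβ0 hβ1 (fun ζ hζ => hsegfar ζ hζ m hm) hz1s hz2s
    rw [ht] at hp hhl
    calc ‖ff m z2 - ff m z1‖ = ‖(pp m z2 - pp m z1) + (hh m z2 - hh m z1)‖ := by
          rw [ff, ff]; ring_nf
      _ ≤ ‖pp m z2 - pp m z1‖ + ‖hh m z2 - hh m z1‖ := norm_add_le _ _
      _ ≤ (1 + (NN m:ℝ)) * q^(NN m - 1) * (v/2)
            + eps m * (Real.log (1/β) + Real.pi + 2) * (v/2) := add_le_add hp hhl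
      _ = (Cp m + eps m * Λ) * (v/2) := by simp only [hCpdef, hΛdef]; ring
  -- bound for the n-th peak term
  have htermn : ‖pp n z2 - pp n z1‖ ≤ (1 + (NN n : ℝ)) * (v/2) := by
    have hp := pp_lip hconv (fun ζ hζ => le_of_lt (hseglt ζ hζ)) zero_le_one le_rfl
      (fun ζ hζ => vbound_one n (le_of_lt (hseglt ζ hζ))) hz1s hz2s
    rw [ht, one_pow] at hp
    linarith [hp]
  -- exact difference for the n-th singular term
  have hval : ∀ r : ℝ, 0 ≤ r → r ≤ 1 →
      hh n (((1-r : ℝ):ℂ) * ww n) = (eps n : ℂ) * (((r:ℝ):ℂ) * Complex.log ((r:ℝ):ℂ)) := by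
    intro r hr0 hr1
    have hcz : (starRingEnd ℂ) (ww n) * (((1-r : ℝ):ℂ) * ww n) = ((1-r : ℝ):ℂ) := by
      calc (starRingEnd ℂ) (ww n) * (((1-r : ℝ):ℂ) * ww n)
          = ((1-r : ℝ):ℂ) * ((starRingEnd ℂ) (ww n) * ww n) := by ring
        _ = ((1-r : ℝ):ℂ) := by rw [conj_ww_mul_ww, mul_one]
    have h1 : (1 : ℂ) - ((1-r : ℝ):ℂ) = ((r:ℝ):ℂ) := by push_cast; ring
    unfold hh
    rw [hcz, h1]
  have hv1le : v ≤ 1 := by linarith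
  have hhz1 : hh n z1 = (eps n : ℂ) * (((v:ℝ):ℂ) * Complex.log ((v:ℝ):ℂ)) := by
    rw [hz1def]; exact hval v (le_of_lt hv0) hv1le
  have hhz2 : hh n z2 = (eps n : ℂ) * (((v/2:ℝ):ℂ) * Complex.log ((v/2:ℝ):ℂ)) := by
    rw [hz2def]
    have := hval (v/2) (by linarith) (by linarith)
    convert this using 3 <;> push_cast <;> ring
  -- value of the singular difference
  set w : ℝ := Real.log (2*v) with hwdef
  have hw0 : w < 0 := by
    rw [hwdef]
    apply Real.log_neg (by linarith)
    linarith
  have hΔhh : ‖(a n) * (hh n z2 - hh n z1)‖ = ‖a n‖ * (eps n * ((v/2) * (-w))) := by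
    have hlogv : Complex.log ((v:ℝ):ℂ) = ((Real.log v : ℝ):ℂ) := by
      rw [Complex.ofReal_log (le_of_lt hv0)]
    have hlogv2 : Complex.log ((v/2:ℝ):ℂ) = ((Real.log (v/2) : ℝ):ℂ) := by
      rw [Complex.ofReal_log (by linarith)]
    have hdiff : hh n z2 - hh n z1
        = (((eps n * ((v/2) * Real.log (v/2) - v * Real.log v)) : ℝ):ℂ) := by
      rw [hhz1, hhz2, hlogv, hlogv2]
      push_cast
      ring
    rw [hdiff, norm_mul, Complex.norm_real, Real.norm_eq_abs]
    congr 1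
    have hlv2 : Real.log (v/2) = Real.log v - Real.log 2 :=
      Real.log_div (ne_of_gt hv0) (by norm_num)
    have hwv : w = Real.log 2 + Real.log v := by
      rw [hwdef, Real.log_mul (by norm_num) (ne_of_gt hv0)]
    have hval2 : eps n * ((v/2) * Real.log (v/2) - v * Real.log v)
        = eps n * (-((v/2) * w)) := by
      rw [hlv2, hwv]; ring
    rw [hval2, abs_mul, _root_.abs_of_pos (eps_pos n), abs_neg, abs_mul,
      _root_.abs_of_nonneg (by linarith : (0:ℝ) ≤ v/2), _root_.abs_of_nonpos (le_of_lt hw0)]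
  -- Lipschitz bound on the difference of sums
  have hlip : ‖FFfun a z2 - FFfun a z1‖ ≤ (K:ℝ) * (v/2) := by
    have h1 := hK.dist_le_mul z2 hz2mem z1 hz1mem
    rw [dist_eq_norm, dist_eq_norm, ht] at h1
    exact h1
  -- decompose the sum
  have hS1 := summable_aff a hz1b
  have hS2 := summable_aff a hz2b
  have hsplit : Summable (fun m => (a m) * (ff m z2 - ff m z1)) := by
    apply (hS2.sub hS1).congr
    intro m
    ring
  have hΔF : FFfun a z2 - FFfun a z1 = ∑' m, (a m) * (ff m z2 - ff m z1) := by
    rw [FFfun_eq hz2b, FFfun_eq hz1b, ← Summable.tsum_sub hS2 hS1]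
    exact tsum_congr (fun m => by ring)
  rw [Summable.tsum_eq_add_tsum_ite hsplit n] at hΔF
  set B : ℂ := ∑' m, (if m = n then 0 else (a m) * (ff m z2 - ff m z1)) with hBdef
  have hBsumm : Summable (fun m => if m = n then (0:ℂ) else (a m) * (ff m z2 - ff m z1)) := by
    apply Summable.of_norm
    apply Summable.of_nonneg_of_le (fun m => norm_nonneg _) (fun m => ?_)
      (summable_norm_iff.mpr hsplit)
    by_cases hm : m = n
    · rw [if_pos hm, norm_zero]; exact norm_nonneg _
    · rw [if_neg hm]
  have hBnorm : ‖B‖ ≤ (‖a‖ * (v/2)) * CC := by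
    rw [hBdef]
    calc ‖∑' m, (if m = n then 0 else (a m) * (ff m z2 - ff m z1))‖
        ≤ ∑' m, ‖if m = n then (0:ℂ) else (a m) * (ff m z2 - ff m z1)‖ :=
          norm_tsum_le_tsum_norm hBsumm.norm
      _ ≤ ∑' m, (‖a‖ * (v/2)) * (Cp m + eps m * Λ) := by
          apply Summable.tsum_le_tsum _ hBsumm.norm (((hCpS.add hChS)).mul_left _)
          intro m
          by_cases hm : m = n
          · rw [if_pos hm, norm_zero]
            have h1 := hCpnn m
            have h2 := le_of_lt (eps_pos m)
            have h3 := norm_nonneg a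
            have h4 : (0:ℝ) ≤ Cp m + eps m * Λ := by nlinarith [hΛ0]
            exact mul_nonneg (mul_nonneg h3 (by linarith : (0:ℝ) ≤ v/2)) h4
          · rw [if_neg hm, norm_mul]
            have h1 := hterm m hm
            have h2 := coeff_le a m
            have h3 := norm_nonneg (ff m z2 - ff m z1)
            have h4 := hCpnn m
            have h5 := le_of_lt (eps_pos m)
            have h6 := norm_nonneg a
            have h7 := norm_nonneg (a m)
            nlinarith [mul_le_mul h2 h1 h3 h6]
      _ = (‖a‖ * (v/2)) * CC := by rw [tsum_mul_left, hCCdef]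
  -- final contradiction
  have hff : (a n) * (ff n z2 - ff n z1)
      = (a n) * (pp n z2 - pp n z1) + (a n) * (hh n z2 - hh n z1) := by
    rw [ff, ff]; ring
  have hrearr : (a n) * (hh n z2 - hh n z1)
      = (FFfun a z2 - FFfun a z1) - B - (a n) * (pp n z2 - pp n z1) := by
    rw [hΔF, hff]; ring
  have hup : ‖(a n) * (hh n z2 - hh n z1)‖
      ≤ (K:ℝ)*(v/2) + (‖a‖ * (v/2)) * CC + ‖a n‖ * ((1 + (NN n : ℝ)) * (v/2)) := by
    rw [hrearr]
    calc ‖(FFfun a z2 - FFfun a z1) - B - (a n) * (pp n z2 - pp n z1)‖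
        ≤ ‖FFfun a z2 - FFfun a z1‖ + ‖B‖ + ‖(a n) * (pp n z2 - pp n z1)‖ := by
          calc ‖(FFfun a z2 - FFfun a z1) - B - (a n) * (pp n z2 - pp n z1)‖
              ≤ ‖(FFfun a z2 - FFfun a z1) - B‖ + ‖(a n) * (pp n z2 - pp n z1)‖ :=
                norm_sub_le _ _
            _ ≤ ‖FFfun a z2 - FFfun a z1‖ + ‖B‖ + ‖(a n) * (pp n z2 - pp n z1)‖ := by
                have := norm_sub_le (FFfun a z2 - FFfun a z1) B
                linarith
      _ ≤ (K:ℝ)*(v/2) + (‖a‖ * (v/2)) * CC + ‖a n‖ * ((1 + (NN n : ℝ)) * (v/2)) := by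
          have h1 : ‖(a n) * (pp n z2 - pp n z1)‖ ≤ ‖a n‖ * ((1 + (NN n : ℝ)) * (v/2)) := by
            rw [norm_mul]
            exact mul_le_mul_of_nonneg_left htermn (norm_nonneg _)
          linarith
  rw [hΔhh] at hup
  -- divide by v/2 and use the choice of v
  have hvpos : (0:ℝ) < v/2 := by linarith
  have hcancel : ‖a n‖ * (eps n * (-w)) ≤ (K:ℝ) + D := by
    have han' : ‖a n‖ ≤ ‖a‖ := coeff_le a n
    have hD' : (‖a‖ * (v/2)) * CC + ‖a n‖ * ((1 + (NN n : ℝ)) * (v/2)) ≤ D * (v/2) := by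
      rw [hDdef]
      have h1 : ‖a n‖ * (1 + (NN n : ℝ)) ≤ ‖a‖ * (1 + (NN n : ℝ)) := by
        apply mul_le_mul_of_nonneg_right han'
        have : (0:ℝ) ≤ (NN n : ℝ) := Nat.cast_nonneg _
        linarith
      nlinarith
    have h2 : ‖a n‖ * (eps n * ((v/2) * (-w))) ≤ ((K:ℝ) + D) * (v/2) := by
      have := hup
      nlinarith
    have h3 : (‖a n‖ * (eps n * (-w))) * (v/2) = ‖a n‖ * (eps n * ((v/2) * (-w))) := by ring
    nlinarith [h2, hvpos]
  have hlogvle : Real.log v ≤ -M := by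
    calc Real.log v ≤ Real.log (Real.exp (-M)) := Real.log_le_log hv0 hvM
      _ = -M := Real.log_exp _
  have hwge : -w ≥ M - Real.log 2 := by
    have : w = Real.log 2 + Real.log v := by
      rw [hwdef, Real.log_mul (by norm_num) (ne_of_gt hv0)]
    linarith
  have hae : 0 < ‖a n‖ * eps n := mul_pos han0 (eps_pos n)
  have hMexp : M - Real.log 2 = ((K:ℝ) + D)/(‖a n‖ * eps n) + 1 := by rw [hMdef]; ring
  have hfinal : ‖a n‖ * (eps n * (-w)) ≥ (K:ℝ) + D + ‖a n‖ * eps n := by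
    have h1 : ‖a n‖ * (eps n * (-w)) ≥ (‖a n‖ * eps n) * (((K:ℝ) + D)/(‖a n‖ * eps n) + 1) := by
      have h2 : -w ≥ ((K:ℝ) + D)/(‖a n‖ * eps n) + 1 := by rw [← hMexp]; exact hwge
      calc ‖a n‖ * (eps n * (-w)) = (‖a n‖ * eps n) * (-w) := by ring
        _ ≥ (‖a n‖ * eps n) * (((K:ℝ) + D)/(‖a n‖ * eps n) + 1) :=
          mul_le_mul_of_nonneg_left h2 (le_of_lt hae)
    have h3 : (‖a n‖ * eps n) * (((K:ℝ) + D)/(‖a n‖ * eps n) + 1)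
        = ((K:ℝ) + D) + ‖a n‖ * eps n := by
      rw [mul_comm, add_mul, div_mul_cancel₀ _ (ne_of_gt hae), one_mul]
    linarith
  linarith [hcancel, hfinal, hae]

end Stmt2NotLip

section Stmt2UC

lemma lip_to_ucOn {f : ℂ → ℂ} {s : Set ℂ} {C : ℝ} (hC : 0 ≤ C)
    (h : ∀ x ∈ s, ∀ y ∈ s, ‖f y - f x‖ ≤ C * ‖y - x‖) : UniformContinuousOn f s := by
  rw [Metric.uniformContinuousOn_iff]
  intro ε hε
  refine ⟨ε/(C+1), by positivity, ?_⟩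
  intro x hx y hy hxy
  rw [dist_eq_norm] at hxy ⊢
  have h1 := h y hy x hx
  have h2 : C * ‖x - y‖ ≤ C * (ε/(C+1)) := mul_le_mul_of_nonneg_left (le_of_lt hxy) hC
  have h3 : C * (ε/(C+1)) < ε := by
    rw [mul_div_assoc', div_lt_iff₀ (by linarith : (0:ℝ) < C+1)]
    nlinarith
  calc ‖f x - f y‖ ≤ C * ‖x - y‖ := h1
    _ < ε := lt_of_le_of_lt h2 h3

lemma mem_ball_norm_le {z : ℂ} (hz : z ∈ Metric.ball (0:ℂ) 1) : ‖z‖ ≤ 1 := by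
  rw [Metric.mem_ball, dist_zero_right] at hz; exact le_of_lt hz

lemma mem_ball_norm_lt {z : ℂ} (hz : z ∈ Metric.ball (0:ℂ) 1) : ‖z‖ < 1 := by
  rwa [Metric.mem_ball, dist_zero_right] at hz

lemma ucOn_pp (m : ℕ) : UniformContinuousOn (pp m) (Metric.ball (0:ℂ) 1) := by
  apply lip_to_ucOn (C := (1 + (NN m : ℝ)))
  · have : (0:ℝ) ≤ (NN m : ℝ) := Nat.cast_nonneg _
    linarith
  · intro x hx y hy
    have h := pp_lip (convex_ball (0:ℂ) 1) (fun ζ hζ => mem_ball_norm_le hζ)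
      zero_le_one le_rfl (fun ζ hζ => vbound_one m (mem_ball_norm_le hζ)) hx hy
    rw [one_pow, mul_one] at h
    exact h

lemma ucOn_comp_left {g : ℂ → ℂ} {K s : Set ℂ} (hg : UniformContinuousOn g K) {f : ℂ → ℂ}
    (hf : ∀ x ∈ s, ∀ y ∈ s, dist (f x) (f y) ≤ dist x y) (hmaps : ∀ x ∈ s, f x ∈ K) :
    UniformContinuousOn (fun z => g (f z)) s := by
  rw [Metric.uniformContinuousOn_iff] at hg ⊢
  intro ε hε
  obtain ⟨δ, hδ0, hδ⟩ := hg ε hε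
  refine ⟨δ, hδ0, ?_⟩
  intro x hx y hy hxy
  exact hδ (f x) (hmaps x hx) (f y) (hmaps y hy) (lt_of_le_of_lt (hf x hx y hy) hxy)

lemma uc_const_mul {c : ℂ} {f : ℂ → ℂ} {s : Set ℂ} (h : UniformContinuousOn f s) :
    UniformContinuousOn (fun z => c * f z) s := by
  rw [Metric.uniformContinuousOn_iff] at h ⊢
  intro ε hε
  obtain ⟨δ, hδ0, hδ⟩ := h (ε/(‖c‖+1)) (by positivity)
  refine ⟨δ, hδ0, ?_⟩
  intro x hx y hy hxy
  have h1 := hδ x hx y hy hxy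
  rw [dist_eq_norm] at h1 ⊢
  have h2 : c * f x - c * f y = c * (f x - f y) := by ring
  rw [h2, norm_mul]
  have h3 : ‖c‖ * ‖f x - f y‖ ≤ ‖c‖ * (ε/(‖c‖+1)) :=
    mul_le_mul_of_nonneg_left (le_of_lt h1) (norm_nonneg c)
  have h4 : ‖c‖ * (ε/(‖c‖+1)) < ε := by
    rw [mul_div_assoc', div_lt_iff₀ (by positivity : (0:ℝ) < ‖c‖+1)]
    nlinarith [norm_nonneg c]
  linarith

lemma L_bound {ζ : ℂ} (h1 : ‖ζ‖ ≤ 1) :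
    ‖ζ * Complex.log ζ‖ ≤ 2*Real.sqrt ‖ζ‖ + Real.pi * ‖ζ‖ := by
  by_cases h0 : ζ = 0
  · simp [h0]
  · have ht0 : 0 < ‖ζ‖ := norm_pos_iff.mpr h0
    set t := ‖ζ‖ with htdef
    have hu0 : 0 < Real.sqrt t := Real.sqrt_pos.mpr ht0
    have hu1 : Real.sqrt t ≤ 1 := by
      have := Real.sqrt_le_sqrt h1
      rwa [Real.sqrt_one] at this
    have hss : Real.sqrt t * Real.sqrt t = t := Real.mul_self_sqrt (le_of_lt ht0)
    have hlogt : Real.log t = 2 * Real.log (Real.sqrt t) := by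
      have := Real.log_sqrt (le_of_lt ht0)
      linarith
    have hloginv : -Real.log (Real.sqrt t) ≤ 1/(Real.sqrt t) := by
      have := Real.log_le_sub_one_of_pos (show (0:ℝ) < 1/(Real.sqrt t) by positivity)
      rw [Real.log_div one_ne_zero (ne_of_gt hu0), Real.log_one] at this
      have h2 : (0:ℝ) < 1/(Real.sqrt t) := by positivity
      linarith
    have habs : |Real.log t| ≤ 2/(Real.sqrt t) := by
      have hle : Real.log t ≤ 0 := Real.log_nonpos (le_of_lt ht0) h1
      rw [abs_of_nonpos hle, hlogt]
      have : -(2 * Real.log (Real.sqrt t)) = 2 * (-Real.log (Real.sqrt t)) := by ring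
      rw [this]
      have h2 : 2 * (-Real.log (Real.sqrt t)) ≤ 2 * (1/Real.sqrt t) := by linarith
      calc 2 * (-Real.log (Real.sqrt t)) ≤ 2 * (1/Real.sqrt t) := h2
        _ = 2/(Real.sqrt t) := by ring
    have hlog : ‖Complex.log ζ‖ ≤ |Real.log t| + Real.pi := by
      calc ‖Complex.log ζ‖ ≤ |(Complex.log ζ).re| + |(Complex.log ζ).im| :=
            Complex.norm_le_abs_re_add_abs_im _
        _ ≤ |Real.log t| + Real.pi := by
            rw [Complex.log_re, Complex.log_im]
            have habs2 : ‖ζ‖ = t := by rw [htdef]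
            rw [habs2]
            have := Complex.abs_arg_le_pi ζ
            linarith [le_abs_self (Complex.arg ζ), neg_abs_le (Complex.arg ζ)]
    calc ‖ζ * Complex.log ζ‖ = t * ‖Complex.log ζ‖ := by rw [norm_mul]
      _ ≤ t * (|Real.log t| + Real.pi) :=
          mul_le_mul_of_nonneg_left hlog (le_of_lt ht0)
      _ = t * |Real.log t| + Real.pi * t := by ring
      _ ≤ 2*Real.sqrt t + Real.pi * t := by
          have h2 : t * |Real.log t| ≤ t * (2/Real.sqrt t) :=
            mul_le_mul_of_nonneg_left habs (le_of_lt ht0)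
          have h3 : t * (2/Real.sqrt t) = 2 * Real.sqrt t := by
            field_simp
            linear_combination (-1)*hss
          linarith

lemma contOn_L : ContinuousOn (fun ζ : ℂ => ζ * Complex.log ζ) (Metric.closedBall (1:ℂ) 1) := by
  intro ζ hζ
  by_cases h0 : ζ = 0
  · subst h0
    unfold ContinuousWithinAt
    simp only [Complex.log_zero, mul_zero]
    have hbound : ∀ᶠ w in nhdsWithin (0:ℂ) (Metric.closedBall (1:ℂ) 1),
        ‖w * Complex.log w‖ ≤ 2*Real.sqrt ‖w‖ + Real.pi * ‖w‖ := by
      have hball : Metric.ball (0:ℂ) 1 ∈ nhdsWithin (0:ℂ) (Metric.closedBall (1:ℂ) 1) := by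
        apply nhdsWithin_le_nhds
        exact Metric.ball_mem_nhds _ (by norm_num)
      filter_upwards [hball] with w hw
      exact L_bound (mem_ball_norm_le hw)
    have hg : Filter.Tendsto (fun w : ℂ => 2*Real.sqrt ‖w‖ + Real.pi * ‖w‖)
        (nhdsWithin (0:ℂ) (Metric.closedBall (1:ℂ) 1)) (nhds 0) := by
      have hc : Continuous (fun w : ℂ => 2*Real.sqrt ‖w‖ + Real.pi * ‖w‖) := by
        continuity
      have h2 := hc.tendsto 0
      norm_num at h2
      exact h2.mono_left nhdsWithin_le_nhds
    exact squeeze_zero_norm' hbound hg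
  · have hslit : ζ ∈ Complex.slitPlane := by
      rw [Complex.mem_slitPlane_iff]
      rw [Metric.mem_closedBall, dist_eq_norm] at hζ
      by_cases hre : 0 < ζ.re
      · left; exact hre
      · right
        push_neg at hre
        intro him
        apply h0
        have h1 : ‖ζ - 1‖^2 ≤ 1 := by nlinarith [norm_nonneg (ζ - 1)]
        rw [norm_sq_eq] at h1
        simp only [Complex.sub_re, Complex.sub_im, Complex.one_re, Complex.one_im] at h1
        rw [him] at h1
        have hre0 : ζ.re = 0 := by nlinarith
        exact Complex.ext hre0 him
    exact ((continuousAt_id.mul (continuousAt_clog hslit)).continuousWithinAt)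

lemma ucOn_hh (m : ℕ) : UniformContinuousOn (hh m) (Metric.ball (0:ℂ) 1) := by
  have hLuc : UniformContinuousOn (fun ζ : ℂ => ζ * Complex.log ζ)
      (Metric.closedBall (1:ℂ) 1) :=
    (isCompact_closedBall _ _).uniformContinuousOn_of_continuous contOn_L
  have hcomp : UniformContinuousOn
      (fun z => (1 - (starRingEnd ℂ) (ww m)*z) * Complex.log (1 - (starRingEnd ℂ) (ww m)*z))
      (Metric.ball (0:ℂ) 1) := by
    apply ucOn_comp_left hLuc
    · intro x hx y hy
      rw [dist_eq_norm, dist_eq_norm]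
      have he : (1 - (starRingEnd ℂ) (ww m)*x) - (1 - (starRingEnd ℂ) (ww m)*y)
          = (starRingEnd ℂ) (ww m) * (y - x) := by ring
      rw [he, norm_mul, RCLike.norm_conj, abs_ww, one_mul, norm_sub_rev]
    · intro x hx
      rw [Metric.mem_closedBall, dist_eq_norm]
      have he : (1 - (starRingEnd ℂ) (ww m)*x) - 1 = -((starRingEnd ℂ) (ww m) * x) := by ring
      rw [he, norm_neg, norm_mul, RCLike.norm_conj, abs_ww, one_mul]
      exact mem_ball_norm_le hx
  exact uc_const_mul hcomp

lemma ucOn_ff (m : ℕ) : UniformContinuousOn (ff m) (Metric.ball (0:ℂ) 1) := by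
  have h1 := ucOn_pp m
  have h2 := ucOn_hh m
  rw [Metric.uniformContinuousOn_iff] at h1 h2 ⊢
  intro ε hε
  obtain ⟨δ1, hδ1, hd1⟩ := h1 (ε/2) (by linarith)
  obtain ⟨δ2, hδ2, hd2⟩ := h2 (ε/2) (by linarith)
  refine ⟨min δ1 δ2, lt_min hδ1 hδ2, ?_⟩
  intro x hx y hy hxy
  have hx1 := hd1 x hx y hy (lt_of_lt_of_le hxy (min_le_left _ _))
  have hx2 := hd2 x hx y hy (lt_of_lt_of_le hxy (min_le_right _ _))
  rw [dist_eq_norm] at hx1 hx2 ⊢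
  calc ‖ff m x - ff m y‖ = ‖(pp m x - pp m y) + (hh m x - hh m y)‖ := by rw [ff, ff]; ring_nf
    _ ≤ ‖pp m x - pp m y‖ + ‖hh m x - hh m y‖ := norm_add_le _ _
    _ < ε := by linarith

lemma ucOn_partial (a : ellinf) (M : ℕ) :
    UniformContinuousOn (fun z => ∑ m ∈ Finset.range M, (a m) * ff m z)
      (Metric.ball (0:ℂ) 1) := by
  induction M with
  | zero =>
      simp only [Finset.range_zero, Finset.sum_empty]
      rw [Metric.uniformContinuousOn_iff]
      intro ε hε
      exact ⟨1, by norm_num, fun x _ y _ _ => by simpa using hε⟩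
  | succ M ih =>
      have hM := uc_const_mul (c := a M) (ucOn_ff M)
      rw [Metric.uniformContinuousOn_iff] at ih hM ⊢
      intro ε hε
      obtain ⟨δ1, hδ1, hd1⟩ := ih (ε/2) (by linarith)
      obtain ⟨δ2, hδ2, hd2⟩ := hM (ε/2) (by linarith)
      refine ⟨min δ1 δ2, lt_min hδ1 hδ2, ?_⟩
      intro x hx y hy hxy
      have hx1 := hd1 x hx y hy (lt_of_lt_of_le hxy (min_le_left _ _))
      have hx2 := hd2 x hx y hy (lt_of_lt_of_le hxy (min_le_right _ _))
      rw [dist_eq_norm] at hx1 hx2 ⊢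
      rw [Finset.sum_range_succ, Finset.sum_range_succ]
      calc ‖(∑ m ∈ Finset.range M, (a m) * ff m x + (a M) * ff M x)
            - (∑ m ∈ Finset.range M, (a m) * ff m y + (a M) * ff M y)‖
          = ‖(∑ m ∈ Finset.range M, (a m) * ff m x - ∑ m ∈ Finset.range M, (a m) * ff m y)
            + ((a M) * ff M x - (a M) * ff M y)‖ := by
            congr 1
            ring
        _ ≤ ‖∑ m ∈ Finset.range M, (a m) * ff m x - ∑ m ∈ Finset.range M, (a m) * ff m y‖
            + ‖(a M) * ff M x - (a M) * ff M y‖ := norm_add_le _ _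
        _ < ε := by linarith

lemma tail_bound (a : ellinf) {M : ℕ} {η : ℝ} (hη : 0 < η)
    (hM : ∀ m, M ≤ m → ‖a m‖ ≤ η) {z : ℂ} (hz : ‖z‖ < 1) :
    ‖FFfun a z - ∑ m ∈ Finset.range M, (a m) * ff m z‖ ≤ η * (21/20) := by
  have hsum := summable_aff a hz
  have hkey := Summable.sum_add_tsum_compl (s := Finset.range M) hsum
  have hcompl : FFfun a z - ∑ m ∈ Finset.range M, (a m) * ff m z
      = ∑' (i : ↥((↑(Finset.range M) : Set ℕ)ᶜ)), (a (i:ℕ)) * ff (i : ℕ) z := by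
    rw [FFfun_eq hz, ← hkey]
    ring
  rw [hcompl]
  have hsN : Summable (fun m => ‖(a m) * ff m z‖) := by
    apply Summable.of_nonneg_of_le (fun m => norm_nonneg _) (fun m => ?_)
      ((summable_norm_ff hz).mul_left ‖a‖)
    rw [norm_mul]
    exact mul_le_mul_of_nonneg_right (coeff_le a m) (norm_nonneg _)
  have hsub : Summable (fun i : ↥((↑(Finset.range M) : Set ℕ)ᶜ) =>
      ‖(a (i:ℕ)) * ff (i : ℕ) z‖) :=
    Summable.subtype hsN _
  have hmem : ∀ i : ↥((↑(Finset.range M) : Set ℕ)ᶜ), M ≤ (i : ℕ) := by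
    intro i
    have h2 := i.2
    simp only [Set.mem_compl_iff, Finset.coe_range, Set.mem_Iio, not_lt] at h2
    exact h2
  calc ‖∑' (i : ↥((↑(Finset.range M) : Set ℕ)ᶜ)), (a (i:ℕ)) * ff (i : ℕ) z‖
      ≤ ∑' (i : ↥((↑(Finset.range M) : Set ℕ)ᶜ)), ‖(a (i:ℕ)) * ff (i : ℕ) z‖ :=
        norm_tsum_le_tsum_norm hsub
    _ ≤ ∑' (i : ↥((↑(Finset.range M) : Set ℕ)ᶜ)), η * ‖ff (i : ℕ) z‖ := by
        apply Summable.tsum_le_tsum _ hsub (Summable.subtype ((summable_norm_ff hz).mul_left η) _)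
        intro i
        rw [norm_mul]
        exact mul_le_mul_of_nonneg_right (hM _ (hmem i)) (norm_nonneg _)
    _ ≤ ∑' m, η * ‖ff m z‖ := by
        apply Summable.tsum_subtype_le (fun m => η * ‖ff m z‖) _
          (fun m => mul_nonneg (le_of_lt hη) (norm_nonneg _))
          ((summable_norm_ff hz).mul_left η)
    _ = η * ∑' m, ‖ff m z‖ := tsum_mul_left
    _ ≤ η * (21/20) := mul_le_mul_of_nonneg_left (tsum_norm_ff_le hz) (le_of_lt hη)

lemma uc_FF (a : ellinf) (h : Filter.Tendsto (fun n => a n) Filter.atTop (nhds (0:ℂ))) :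
    UniformContinuousOn (FFfun a) (Metric.ball (0:ℂ) 1) := by
  rw [Metric.uniformContinuousOn_iff]
  intro ε hε
  have hη : (0:ℝ) < ε/5 := by linarith
  obtain ⟨M, hM⟩ := (Metric.tendsto_atTop.mp h) (ε/5) hη
  have hM' : ∀ m, M ≤ m → ‖a m‖ ≤ ε/5 := by
    intro m hm
    have := hM m hm
    rw [dist_zero_right] at this
    exact le_of_lt this
  have hpart := ucOn_partial a M
  rw [Metric.uniformContinuousOn_iff] at hpart
  obtain ⟨δ, hδ0, hδ⟩ := hpart (ε/3) (by linarith)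
  refine ⟨δ, hδ0, ?_⟩
  intro x hx y hy hxy
  have htx := tail_bound a hη hM' (mem_ball_norm_lt hx)
  have hty := tail_bound a hη hM' (mem_ball_norm_lt hy)
  have hmid := hδ x hx y hy hxy
  rw [dist_eq_norm] at hmid ⊢
  have hdec : FFfun a x - FFfun a y
      = (FFfun a x - ∑ m ∈ Finset.range M, (a m) * ff m x)
        + ((∑ m ∈ Finset.range M, (a m) * ff m x) - ∑ m ∈ Finset.range M, (a m) * ff m y)
        - (FFfun a y - ∑ m ∈ Finset.range M, (a m) * ff m y) := by ring
  rw [hdec]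
  have h1 := norm_sub_le ((FFfun a x - ∑ m ∈ Finset.range M, (a m) * ff m x)
    + ((∑ m ∈ Finset.range M, (a m) * ff m x) - ∑ m ∈ Finset.range M, (a m) * ff m y))
    (FFfun a y - ∑ m ∈ Finset.range M, (a m) * ff m y)
  have h2 := norm_add_le (FFfun a x - ∑ m ∈ Finset.range M, (a m) * ff m x)
    ((∑ m ∈ Finset.range M, (a m) * ff m x) - ∑ m ∈ Finset.range M, (a m) * ff m y)
  have hnum : (ε/5) * (21/20) + (ε/3) + (ε/5) * (21/20) < ε := by linarith
  linarith

end Stmt2UC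

/-- There is an injective continuous linear embedding `F` of `ℓ∞` into the
bounded holomorphic functions on the unit disc, vanishing at `0`, with
`(1/2)‖a‖ ≤ sup_𝔻 |F a| ≤ 4‖a‖`, such that `F a` is never Lipschitz for `a ≠ 0`, and
`F a` is uniformly continuous on `𝔻` whenever `a ∈ c₀`. -/
theorem stmt_2 :
    ∃ F : lp (fun _ : ℕ => ℂ) ∞ →ₗ[ℂ] (ℂ → ℂ),
      Function.Injective F ∧
      (∀ a : lp (fun _ : ℕ => ℂ) ∞,
        DifferentiableOn ℂ (F a) (Metric.ball (0 : ℂ) 1) ∧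
        F a 0 = 0 ∧
        (1 / 2) * ‖a‖ ≤ sSup {c : ℝ | ∃ z ∈ Metric.ball (0 : ℂ) 1, ‖F a z‖ = c} ∧
        (∀ z ∈ Metric.ball (0 : ℂ) 1, ‖F a z‖ ≤ 4 * ‖a‖)) ∧
      (∀ a : lp (fun _ : ℕ => ℂ) ∞, a ≠ 0 →
        ¬ ∃ K : ℝ≥0, LipschitzOnWith K (F a) (Metric.ball (0 : ℂ) 1)) ∧
      (∀ a : lp (fun _ : ℕ => ℂ) ∞,
        Filter.Tendsto (fun n => a n) Filter.atTop (nhds (0 : ℂ)) →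
        UniformContinuousOn (F a) (Metric.ball (0 : ℂ) 1)) := by
  have hcoe : ∀ a : ellinf, (Fmap a : ℂ → ℂ) = FFfun a := fun a => rfl
  refine ⟨Fmap, ?_, ?_, ?_, ?_⟩
  · -- injectivity
    intro a b hab
    by_contra hne
    have hsub : Fmap (a - b) = 0 := by rw [map_sub, hab, sub_self]
    have hFF : FFfun (a - b) = 0 := by rw [← hcoe, hsub]
    have hnorm : 0 < ‖a - b‖ := by
      rw [norm_pos_iff]
      exact sub_ne_zero.mpr hne
    obtain ⟨z, hz, hbig⟩ := exists_big (a - b) hnorm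
    rw [hFF] at hbig
    simp only [Pi.zero_apply, norm_zero] at hbig
    linarith
  · intro a
    refine ⟨?_, ?_, ?_, ?_⟩
    · rw [hcoe]; exact diffOn_FF a
    · rw [hcoe]; exact FFfun_zero a
    · -- lower bound for sSup
      have habs : ∀ z : ℂ, ‖Fmap a z‖ = ‖FFfun a z‖ := fun z => by
        rw [hcoe]
      have hbdd : BddAbove {c : ℝ | ∃ z ∈ Metric.ball (0 : ℂ) 1,
          ‖Fmap a z‖ = c} := by
        refine ⟨(21/20)*‖a‖, ?_⟩
        rintro c ⟨z, hzmem, rfl⟩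
        rw [habs]
        exact norm_FF_le a (mem_ball_norm_lt hzmem)
      by_cases h0 : ‖a‖ = 0
      · have h0mem : (0:ℂ) ∈ Metric.ball (0:ℂ) 1 := by
          rw [Metric.mem_ball, dist_zero_right]; norm_num
        have hmem : ‖Fmap a 0‖ ∈ {c : ℝ | ∃ z ∈ Metric.ball (0 : ℂ) 1,
            ‖Fmap a z‖ = c} := ⟨0, h0mem, rfl⟩
        have hle := le_csSup hbdd hmem
        have h2 : (0:ℝ) ≤ ‖Fmap a 0‖ := norm_nonneg _
        rw [h0]
        linarith
      · have hpos : 0 < ‖a‖ := lt_of_le_of_ne (norm_nonneg a) (Ne.symm h0)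
        obtain ⟨z, hz, hbig⟩ := exists_big a hpos
        have hzmem : z ∈ Metric.ball (0:ℂ) 1 := by
          rw [Metric.mem_ball, dist_zero_right]; exact hz
        have hmem : ‖Fmap a z‖ ∈ {c : ℝ | ∃ z ∈ Metric.ball (0 : ℂ) 1,
            ‖Fmap a z‖ = c} := ⟨z, hzmem, rfl⟩
        have hle := le_csSup hbdd hmem
        rw [habs] at hle
        linarith
    · intro z hzmem
      have h := norm_FF_le a (mem_ball_norm_lt hzmem)
      have habs : ‖Fmap a z‖ = ‖FFfun a z‖ := by
        rw [hcoe]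
      rw [habs]
      have := norm_nonneg a
      linarith
  · rintro a ha ⟨K, hK⟩
    rw [hcoe] at hK
    exact not_lip a ha K hK
  · intro a h
    rw [hcoe]
    exact uc_FF a h
end

section
/- There exists a Lipschitz function f : ℂ → ℝ with 0 ≤ f(z) ≤ 1 for all z, f(z) = 0 whenever |z| ≤ 1/2, and f not identically zero on the open unit disc 𝔻, with the following property: for every g : 𝔻 → ℂ holomorphic and Lipschitz on 𝔻 with g(0) = 0, the pointwise product f·g is Lipschitz on 𝔻 with L(g) ≤ L(f·g) ≤ 2·L(f)·L(g); moreover, if g is not identically zero on 𝔻, then f·g is not holomorphic on 𝔻 (it fails to be ℂ-differentiable at some point of 𝔻). -/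
open Filter Metric Set Complex Topology

noncomputable def fcut : ℂ → ℝ := fun z => max 0 (min 1 (2 * ‖z‖ - 1))

lemma cut_lip (a b : ℝ) : |max 0 (min 1 a) - max 0 (min 1 b)| ≤ |a - b| := by
  calc |max 0 (min 1 a) - max 0 (min 1 b)|
      = |max (min 1 a) 0 - max (min 1 b) 0| := by rw [max_comm, max_comm (min 1 b)]
    _ ≤ |min 1 a - min 1 b| := abs_max_sub_max_le_abs _ _ _
    _ ≤ max |1 - 1| |a - b| := abs_min_sub_min_le_max _ _ _ _
    _ = |a - b| := by simp

lemma fcut_lip (z w : ℂ) : |fcut z - fcut w| ≤ 2 * ‖z - w‖ := by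
  calc |fcut z - fcut w| ≤ |(2 * ‖z‖ - 1) - (2 * ‖w‖ - 1)| := cut_lip _ _
    _ = 2 * |‖z‖ - ‖w‖| := by
        rw [show (2 * ‖z‖ - 1) - (2 * ‖w‖ - 1)
            = 2 * (‖z‖ - ‖w‖) by ring, abs_mul]; norm_num
    _ ≤ 2 * ‖z - w‖ := by
        have := abs_norm_sub_norm_le z w
        linarith

lemma fcut_zero {z : ℂ} (h : ‖z‖ ≤ 1 / 2) : fcut z = 0 := by
  have : 2 * ‖z‖ - 1 ≤ 0 := by linarith
  simp only [fcut]
  rw [max_eq_left]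
  exact le_trans (min_le_right _ _) this

lemma fcut_eq {z : ℂ} (h1 : 1 / 2 ≤ ‖z‖) (h2 : ‖z‖ ≤ 1) :
    fcut z = 2 * ‖z‖ - 1 := by
  simp only [fcut]
  rw [min_eq_right (by linarith), max_eq_right (by linarith)]

lemma fcut_nonneg (z : ℂ) : 0 ≤ fcut z := le_max_left _ _

lemma fcut_le_one (z : ℂ) : fcut z ≤ 1 := max_le (by norm_num) (min_le_left _ _)

lemma norm_deriv_le_slope {u v : ℝ → ℂ} {u' v' : ℂ} {C : ℝ}
    (hu : HasDerivAt u u' 0) (hv : HasDerivAt v v' 0)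
    (h : ∀ θ : ℝ, ‖u θ - u 0‖ ≤ C * ‖v θ - v 0‖) : ‖u'‖ ≤ C * ‖v'‖ := by
  have h1 : Tendsto (fun θ : ℝ => ‖slope u 0 θ‖) (𝓝[≠] (0:ℝ)) (𝓝 ‖u'‖) :=
    (continuous_norm.tendsto u').comp (hasDerivAt_iff_tendsto_slope.1 hu)
  have h2 : Tendsto (fun θ : ℝ => C * ‖slope v 0 θ‖) (𝓝[≠] (0:ℝ)) (𝓝 (C * ‖v'‖)) :=
    ((continuous_norm.tendsto v').comp (hasDerivAt_iff_tendsto_slope.1 hv)).const_mul C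
  refine le_of_tendsto_of_tendsto' h1 h2 fun θ => ?_
  rcases eq_or_ne θ 0 with rfl | hθ
  · simp [slope]
  · have e1 : slope u 0 θ = (θ : ℝ)⁻¹ • (u θ - u 0) := by simp [slope]
    have e2 : slope v 0 θ = (θ : ℝ)⁻¹ • (v θ - v 0) := by simp [slope]
    rw [e1, e2, norm_smul, norm_smul]
    have := mul_le_mul_of_nonneg_left (h θ) (norm_nonneg ((θ:ℝ)⁻¹))
    calc ‖(θ:ℝ)⁻¹‖ * ‖u θ - u 0‖ ≤ ‖(θ:ℝ)⁻¹‖ * (C * ‖v θ - v 0‖) := this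
      _ = C * (‖(θ:ℝ)⁻¹‖ * ‖v θ - v 0‖) := by ring

lemma lipset_isLeast (h : ℂ → ℂ) {M : ℝ} (h0 : 0 ≤ M)
    (hM : ∀ z ∈ Metric.ball (0:ℂ) 1, ∀ w ∈ Metric.ball (0:ℂ) 1,
      ‖h z - h w‖ ≤ M * ‖z - w‖) :
    IsLeast {K : ℝ | 0 ≤ K ∧ ∀ z ∈ Metric.ball (0:ℂ) 1, ∀ w ∈ Metric.ball (0:ℂ) 1,
        ‖h z - h w‖ ≤ K * ‖z - w‖}
      (sInf {K : ℝ | 0 ≤ K ∧ ∀ z ∈ Metric.ball (0:ℂ) 1, ∀ w ∈ Metric.ball (0:ℂ) 1,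
        ‖h z - h w‖ ≤ K * ‖z - w‖}) := by
  set S := {K : ℝ | 0 ≤ K ∧ ∀ z ∈ Metric.ball (0:ℂ) 1, ∀ w ∈ Metric.ball (0:ℂ) 1,
        ‖h z - h w‖ ≤ K * ‖z - w‖} with hS
  have hne : S.Nonempty := ⟨M, h0, hM⟩
  have hbdd : BddBelow S := ⟨0, fun K hK => hK.1⟩
  constructor
  · refine ⟨le_csInf hne fun K hK => hK.1, fun z hz w hw => ?_⟩
    rcases eq_or_ne z w with rfl | hzw
    · simp
    · have hpos : 0 < ‖z - w‖ := norm_pos_iff.mpr (sub_ne_zero.2 hzw)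
      rw [← div_le_iff₀ hpos]
      exact le_csInf hne fun K hK => (div_le_iff₀ hpos).2 (hK.2 z hz w hw)
  · exact fun K hK => csInf_le hbdd hK

lemma tangential {g : ℂ → ℂ} (hg : DifferentiableOn ℂ g (Metric.ball 0 1)) {L : ℝ}
    (hL : ∀ z ∈ Metric.ball (0:ℂ) 1, ∀ w ∈ Metric.ball (0:ℂ) 1,
      ‖(fcut z : ℂ) * g z - (fcut w : ℂ) * g w‖ ≤ L * ‖z - w‖)
    {z : ℂ} (h1 : 1 / 2 < ‖z‖) (h2 : ‖z‖ < 1) :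
    ‖deriv g z‖ ≤ L / (2 * ‖z‖ - 1) := by
  set r : ℝ := ‖z‖ with hr
  set c : ℝ := 2 * r - 1 with hc
  have hc0 : 0 < c := by simp only [hc]; linarith
  have hzball : z ∈ Metric.ball (0:ℂ) 1 := by
    simpa [Metric.mem_ball, dist_zero_right] using h2
  have hgz : HasDerivAt g (deriv g z) z :=
    ((hg.differentiableAt (isOpen_ball.mem_nhds hzball))).hasDerivAt
  set v : ℝ → ℂ := fun θ => z * Complex.exp (θ * Complex.I) with hvdef
  have habs : ∀ θ : ℝ, ‖v θ‖ = r := by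
    intro θ
    simp [hvdef, map_mul, Complex.norm_exp_ofReal_mul_I, hr]
  have hv : HasDerivAt v (z * Complex.I) 0 := by
    have h0 : HasDerivAt (fun θ : ℝ => (θ : ℂ) * Complex.I) Complex.I 0 := by
      simpa using (Complex.ofRealCLM.hasDerivAt (x := (0:ℝ))).mul_const Complex.I
    have h1' : HasDerivAt (fun θ : ℝ => Complex.exp ((θ:ℂ) * Complex.I)) Complex.I 0 := by
      simpa using h0.cexp
    simpa [hvdef] using h1'.const_mul z
  have hv0 : v 0 = z := by simp [hvdef]
  have hu : HasDerivAt (fun θ => g (v θ)) ((z * Complex.I) • deriv g z) 0 := by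
    have hgz' : HasFDerivAt g (ContinuousLinearMap.restrictScalars ℝ
        (ContinuousLinearMap.smulRight (1 : ℂ →L[ℂ] ℂ) (deriv g z))) (v 0) := by
      rw [hv0]; exact hgz.hasFDerivAt.restrictScalars ℝ
    have := hgz'.comp_hasDerivAt 0 hv
    simpa [Function.comp_def] using this
  have hineq : ∀ θ : ℝ, ‖g (v θ) - g (v 0)‖ ≤ (L / c) * ‖v θ - v 0‖ := by
    intro θ
    have hvball : ∀ θ : ℝ, v θ ∈ Metric.ball (0:ℂ) 1 := fun θ => by
      simp [Metric.mem_ball, dist_zero_right, habs θ]; exact h2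
    have hf : ∀ θ : ℝ, fcut (v θ) = c := fun θ => by
      rw [fcut_eq (by rw [habs θ]; linarith) (by rw [habs θ]; linarith), habs θ]
    have := hL (v θ) (hvball θ) (v 0) (hvball 0)
    rw [hf θ, hf 0] at this
    have e : (c : ℂ) * g (v θ) - (c : ℂ) * g (v 0) = (c:ℂ) * (g (v θ) - g (v 0)) := by ring
    rw [e, norm_mul, Complex.norm_real, Real.norm_eq_abs, abs_of_pos hc0] at this
    rw [div_mul_eq_mul_div, le_div_iff₀ hc0, mul_comm]
    exact this
  have key := norm_deriv_le_slope hu hv hineq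
  rw [norm_smul] at key
  have hnz : ‖z * Complex.I‖ = r := by
    simp [map_mul, hr]
  rw [hnz] at key
  have hr0 : 0 < r := by linarith
  rw [mul_comm] at key
  exact le_of_mul_le_mul_right key hr0

lemma deriv_bound {g : ℂ → ℂ} (hg : DifferentiableOn ℂ g (Metric.ball 0 1)) {L : ℝ}
    (hL : ∀ z ∈ Metric.ball (0:ℂ) 1, ∀ w ∈ Metric.ball (0:ℂ) 1,
      ‖(fcut z : ℂ) * g z - (fcut w : ℂ) * g w‖ ≤ L * ‖z - w‖)
    {z0 : ℂ} (hz0 : z0 ∈ Metric.ball (0:ℂ) 1) : ‖deriv g z0‖ ≤ L := by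
  have hanal : AnalyticOnNhd ℂ g (Metric.ball 0 1) := hg.analyticOnNhd isOpen_ball
  have hdiff : DifferentiableOn ℂ (deriv g) (Metric.ball (0:ℂ) 1) :=
    hanal.deriv.differentiableOn
  have habs0 : ‖z0‖ < 1 := by
    simpa [Metric.mem_ball, dist_zero_right] using hz0
  have key2 : ∀ r : ℝ, 1/2 < r → r < 1 → ‖z0‖ < r →
      ‖deriv g z0‖ ≤ L / (2 * r - 1) := by
    intro r hr1 hr2 hr3
    have hr0 : (0:ℝ) < r := by linarith
    refine Complex.norm_le_of_forall_mem_frontier_norm_le (isBounded_ball (x := (0:ℂ)) (r := r))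
      ?_ ?_ ?_
    · constructor
      · exact hdiff.mono (ball_subset_ball hr2.le)
      · rw [closure_ball (0:ℂ) (ne_of_gt hr0)]
        exact (hdiff.mono (closedBall_subset_ball hr2)).continuousOn
    · intro x hx
      rw [frontier_ball (0:ℂ) (ne_of_gt hr0)] at hx
      have hxabs : ‖x‖ = r := by
        simpa [mem_sphere_iff_norm] using hx
      have := tangential hg hL (z := x) (by rw [hxabs]; exact hr1) (by rw [hxabs]; exact hr2)
      rwa [hxabs] at this
    · exact subset_closure (by simpa [Metric.mem_ball, dist_zero_right]
        using hr3)
  set a : ℝ := max (1/2) (‖z0‖) with ha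
  have ha1 : a < 1 := by
    apply max_lt (by norm_num) habs0
  have hlim : Tendsto (fun r : ℝ => L / (2 * r - 1)) (𝓝[<] (1:ℝ)) (𝓝 L) := by
    have : ContinuousAt (fun r : ℝ => L / (2 * r - 1)) 1 := by
      apply ContinuousAt.div
      · fun_prop
      · fun_prop
      · norm_num
    have h2 : Tendsto (fun r : ℝ => L / (2 * r - 1)) (𝓝[<] (1:ℝ)) (𝓝 (L / (2 * 1 - 1))) :=
      this.tendsto.mono_left nhdsWithin_le_nhds
    norm_num at h2; exact h2
  refine ge_of_tendsto hlim ?_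
  filter_upwards [Ioo_mem_nhdsLT_of_mem (show (1:ℝ) ∈ Set.Ioc a 1 from ⟨ha1, le_refl 1⟩)]
    with r hr
  exact key2 r (lt_of_le_of_lt (le_max_left _ _) hr.1) hr.2
    (lt_of_le_of_lt (le_max_right _ _) hr.1)

lemma g_lip {g : ℂ → ℂ} (hg : DifferentiableOn ℂ g (Metric.ball 0 1)) {L : ℝ}
    (hd : ∀ x ∈ Metric.ball (0:ℂ) 1, ‖deriv g x‖ ≤ L)
    {z : ℂ} (hz : z ∈ Metric.ball (0:ℂ) 1) {w : ℂ} (hw : w ∈ Metric.ball (0:ℂ) 1) :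
    ‖g z - g w‖ ≤ L * ‖z - w‖ := by
  have := (convex_ball (0:ℂ) 1).norm_image_sub_le_of_norm_fderiv_le
    (fun x hx => hg.differentiableAt (isOpen_ball.mem_nhds hx))
    (fun x hx => by rw [← norm_deriv_eq_norm_fderiv]; exact hd x hx) hw hz
  simpa using this

lemma not_holo {g : ℂ → ℂ} (hg : DifferentiableOn ℂ g (Metric.ball 0 1))
    (hne : ∃ z ∈ Metric.ball (0:ℂ) 1, g z ≠ 0) :
    ∃ z ∈ Metric.ball (0:ℂ) 1,
      ¬ DifferentiableAt ℂ (fun w => (fcut w : ℂ) * g w) z := by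
  by_contra hcon
  push_neg at hcon
  set h : ℂ → ℂ := fun w => (fcut w : ℂ) * g w with hh
  have hdiff : DifferentiableOn ℂ h (Metric.ball (0:ℂ) 1) :=
    fun z hz => (hcon z hz).differentiableWithinAt
  have hanal : AnalyticOnNhd ℂ h (Metric.ball (0:ℂ) 1) := hdiff.analyticOnNhd isOpen_ball
  have hev : h =ᶠ[𝓝 (0:ℂ)] 0 := by
    filter_upwards [Metric.ball_mem_nhds (0:ℂ) (by norm_num : (0:ℝ) < 1/2)] with w hw
    have : ‖w‖ ≤ 1/2 := by
      have := mem_ball_zero_iff.1 hw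
      linarith
    simp [hh, fcut_zero this]
  have hzero : EqOn h 0 (Metric.ball (0:ℂ) 1) :=
    hanal.eqOn_zero_of_preconnected_of_eventuallyEq_zero
      (convex_ball (0:ℂ) 1).isPreconnected (mem_ball_self one_pos) hev
  set z1 : ℂ := ((3/4 : ℝ) : ℂ) with hz1
  have habsz1 : ‖z1‖ = 3/4 := by
    rw [hz1, Complex.norm_real, Real.norm_eq_abs]; norm_num
  have hz1ball : z1 ∈ Metric.ball (0:ℂ) 1 := by
    rw [mem_ball_zero_iff, habsz1]; norm_num
  have hgev : g =ᶠ[𝓝 z1] 0 := by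
    filter_upwards [Metric.ball_mem_nhds z1 (by norm_num : (0:ℝ) < 1/8)] with w hw
    have hd : ‖w - z1‖ < 1/8 := by
      have := mem_ball_iff_norm.1 hw
      exact this
    have hlo : 5/8 < ‖w‖ := by
      have := abs_norm_sub_norm_le w z1
      have h2 := abs_lt.1 (lt_of_le_of_lt this hd)
      rw [habsz1] at h2
      linarith [h2.1]
    have hhi : ‖w‖ < 7/8 := by
      have := abs_norm_sub_norm_le w z1
      have h2 := abs_lt.1 (lt_of_le_of_lt this hd)
      rw [habsz1] at h2
      linarith [h2.2]
    have hwball : w ∈ Metric.ball (0:ℂ) 1 := by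
      rw [mem_ball_zero_iff]; linarith
    have hw0 : h w = 0 := hzero hwball
    have hfpos : (0:ℝ) < fcut w := by
      rw [fcut_eq (by linarith) (by linarith)]; linarith
    have : (fcut w : ℂ) * g w = 0 := hw0
    rcases mul_eq_zero.1 this with hc | hc
    · exact absurd hc (by simpa using ne_of_gt hfpos)
    · exact hc
  have hganal : AnalyticOnNhd ℂ g (Metric.ball (0:ℂ) 1) := hg.analyticOnNhd isOpen_ball
  have hgzero : EqOn g 0 (Metric.ball (0:ℂ) 1) :=
    hganal.eqOn_zero_of_preconnected_of_eventuallyEq_zero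
      (convex_ball (0:ℂ) 1).isPreconnected hz1ball hgev
  obtain ⟨z, hz, hzne⟩ := hne
  exact hzne (hgzero hz)

/-- There is a Lipschitz cutoff `f : ℂ → [0,1]`, vanishing on `|z| ≤ 1/2`
but not identically zero on `𝔻`, such that for every holomorphic Lipschitz `g` on `𝔻`
with `g 0 = 0`, the product `f·g` is Lipschitz on `𝔻` with
`L(g) ≤ L(f·g) ≤ 2·L(f)·L(g)`, and `f·g` is not holomorphic on `𝔻` if `g ≢ 0`. -/
theorem stmt_3 :
    ∃ f : ℂ → ℝ, ∃ Lf : ℝ,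
      IsLeast {K : ℝ | 0 ≤ K ∧ ∀ z w : ℂ, |f z - f w| ≤ K * ‖z - w‖} Lf ∧
      (∀ z : ℂ, 0 ≤ f z ∧ f z ≤ 1) ∧
      (∀ z : ℂ, ‖z‖ ≤ 1 / 2 → f z = 0) ∧
      (∃ z ∈ Metric.ball (0 : ℂ) 1, f z ≠ 0) ∧
      ∀ g : ℂ → ℂ, DifferentiableOn ℂ g (Metric.ball (0 : ℂ) 1) → g 0 = 0 →
        ∀ Lg : ℝ,
          IsLeast {K : ℝ | 0 ≤ K ∧ ∀ z ∈ Metric.ball (0 : ℂ) 1, ∀ w ∈ Metric.ball (0 : ℂ) 1,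
              ‖g z - g w‖ ≤ K * ‖z - w‖} Lg →
          (∃ Lfg : ℝ,
            IsLeast {K : ℝ | 0 ≤ K ∧ ∀ z ∈ Metric.ball (0 : ℂ) 1, ∀ w ∈ Metric.ball (0 : ℂ) 1,
                ‖(f z : ℂ) * g z - (f w : ℂ) * g w‖ ≤ K * ‖z - w‖} Lfg ∧
            Lg ≤ Lfg ∧ Lfg ≤ 2 * Lf * Lg) ∧
          ((∃ z ∈ Metric.ball (0 : ℂ) 1, g z ≠ 0) →
            ∃ z ∈ Metric.ball (0 : ℂ) 1,
              ¬ DifferentiableAt ℂ (fun w => (f w : ℂ) * g w) z) := by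
  refine ⟨fcut, 2, ⟨⟨by norm_num, fun z w => fcut_lip z w⟩, ?lb⟩, fun z => ⟨fcut_nonneg z, fcut_le_one z⟩,
    fun z hz => fcut_zero hz, ⟨((3/4 : ℝ) : ℂ), ?mem34, ?ne34⟩, ?main⟩
  case lb =>
    intro K hK
    have h1 : fcut 1 = 1 := by
      rw [fcut_eq (by simp; norm_num) (by simp)]
      simp
      norm_num
    have h2 : fcut ((1/2 : ℝ) : ℂ) = 0 := fcut_zero (by rw [Complex.norm_real, Real.norm_eq_abs, _root_.abs_of_nonneg] <;> norm_num)
    have h3 : ‖1 - ((1/2 : ℝ) : ℂ)‖ = 1/2 := by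
      rw [show (1 : ℂ) - ((1/2 : ℝ) : ℂ) = (((1/2 : ℝ)) : ℂ) by push_cast; ring,
        Complex.norm_real, Real.norm_eq_abs, _root_.abs_of_nonneg] <;> norm_num
    have := hK.2 1 ((1/2 : ℝ) : ℂ)
    rw [h1, h2, h3] at this
    simp at this
    linarith
  case mem34 =>
    rw [mem_ball_zero_iff, Complex.norm_real, Real.norm_eq_abs,
      _root_.abs_of_nonneg] <;> norm_num
  case ne34 =>
    rw [fcut_eq (by rw [Complex.norm_real, Real.norm_eq_abs, _root_.abs_of_nonneg] <;> norm_num)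
        (by rw [Complex.norm_real, Real.norm_eq_abs, _root_.abs_of_nonneg] <;> norm_num),
      Complex.norm_real, Real.norm_eq_abs, _root_.abs_of_nonneg] <;> norm_num
  case main =>
    intro g hg hg0 Lg hLg
    have hLg0 : 0 ≤ Lg := hLg.1.1
    have hgbd : ∀ w ∈ Metric.ball (0:ℂ) 1, ‖g w‖ ≤ Lg := by
      intro w hw
      have := hLg.1.2 w hw 0 (mem_ball_self one_pos)
      rw [hg0, sub_zero, sub_zero] at this
      have hw1 : ‖w‖ ≤ 1 := by
        have := mem_ball_zero_iff.1 hw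
        linarith
      calc ‖g w‖ ≤ Lg * ‖w‖ := this
        _ ≤ Lg * 1 := by apply mul_le_mul_of_nonneg_left hw1 hLg0
        _ = Lg := by ring
    have hM : ∀ z ∈ Metric.ball (0:ℂ) 1, ∀ w ∈ Metric.ball (0:ℂ) 1,
        ‖(fcut z : ℂ) * g z - (fcut w : ℂ) * g w‖ ≤ (3 * Lg) * ‖z - w‖ := by
      intro z hz w hw
      have e : (fcut z : ℂ) * g z - (fcut w : ℂ) * g w
          = (fcut z : ℂ) * (g z - g w) + ((fcut z : ℂ) - (fcut w : ℂ)) * g w := by ring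
      rw [e]
      calc ‖(fcut z : ℂ) * (g z - g w) + ((fcut z : ℂ) - (fcut w : ℂ)) * g w‖
          ≤ ‖(fcut z : ℂ) * (g z - g w)‖
            + ‖((fcut z : ℂ) - (fcut w : ℂ)) * g w‖ := norm_add_le _ _
        _ = fcut z * ‖g z - g w‖ + |fcut z - fcut w| * ‖g w‖ := by
            rw [norm_mul, norm_mul, Complex.norm_real, Real.norm_eq_abs, _root_.abs_of_nonneg (fcut_nonneg z),
              ← Complex.ofReal_sub, Complex.norm_real, Real.norm_eq_abs]
        _ ≤ 1 * (Lg * ‖z - w‖) + (2 * ‖z - w‖) * Lg := by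
            apply add_le_add
            · apply mul_le_mul (fcut_le_one z) (hLg.1.2 z hz w hw) (norm_nonneg _)
              norm_num
            · apply mul_le_mul (fcut_lip z w) (hgbd w hw) (norm_nonneg _)
              positivity
        _ = (3 * Lg) * ‖z - w‖ := by ring
    have hle := lipset_isLeast (fun w => (fcut w : ℂ) * g w)
      (by positivity : (0:ℝ) ≤ 3 * Lg) hM
    refine ⟨⟨_, hle, ?lgle, ?lfgle⟩, not_holo hg⟩
    case lgle =>
      refine hLg.2 ⟨hle.1.1, fun z hz w hw => ?_⟩
      refine g_lip hg (fun x hx => deriv_bound hg hle.1.2 hx) hz hw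
    case lfgle =>
      have h3 : sInf {K : ℝ | 0 ≤ K ∧ ∀ z ∈ Metric.ball (0 : ℂ) 1, ∀ w ∈ Metric.ball (0 : ℂ) 1,
          ‖(fcut z : ℂ) * g z - (fcut w : ℂ) * g w‖ ≤ K * ‖z - w‖}
          ≤ 3 * Lg := hle.2 ⟨by positivity, hM⟩
      linarith
end

section
/- Let X be a complex Banach space, let x₁, …, x_n be pairwise distinct points of B_X \ {0}, and let λ₁, …, λ_n ∈ ℂ. If Σ_{j=1}^n λ_j f(x_j) = 0 for every f : X → ℂ that is holomorphic on B_X, Lipschitz on B_X, and satisfies f(0) = 0, then λ_j = 0 for every j. In other words, the evaluation functionals at distinct nonzero points of B_X are linearly independent over the space of holomorphic Lipschitz functions vanishing at 0. -/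
open Metric Finset

namespace Stmt5Aux

variable {X : Type*} [NormedAddCommGroup X] [NormedSpace ℂ X]

/-- Functions that are holomorphic, Lipschitz and bounded on the unit ball. -/
def Good (f : X → ℂ) : Prop :=
  DifferentiableOn ℂ f (ball (0 : X) 1) ∧
  (∃ K : NNReal, LipschitzOnWith K f (ball (0 : X) 1)) ∧
  (∃ C : ℝ, 0 ≤ C ∧ ∀ y ∈ ball (0 : X) 1, ‖f y‖ ≤ C)

theorem good_mul {f g : X → ℂ} (hf : Good f) (hg : Good g) : Good (f * g) := by
  obtain ⟨hfd, ⟨Kf, hfl⟩, ⟨Cf, hCf0, hCf⟩⟩ := hf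
  obtain ⟨hgd, ⟨Kg, hgl⟩, ⟨Cg, hCg0, hCg⟩⟩ := hg
  refine ⟨hfd.mul hgd, ⟨(Cf * Kg + Cg * Kf).toNNReal, ?_⟩,
    ⟨Cf * Cg, mul_nonneg hCf0 hCg0, fun y hy => ?_⟩⟩
  · apply LipschitzOnWith.of_dist_le_mul
    intro a ha b hb
    have key : f a * g a - f b * g b = f a * (g a - g b) + (f a - f b) * g b := by ring
    have h1 : dist (f a * g a) (f b * g b) ≤ ‖f a‖ * dist (g a) (g b)
        + dist (f a) (f b) * ‖g b‖ := by
      simp only [dist_eq_norm, key]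
      calc ‖f a * (g a - g b) + (f a - f b) * g b‖
          ≤ ‖f a * (g a - g b)‖ + ‖(f a - f b) * g b‖ := norm_add_le _ _
        _ = ‖f a‖ * ‖g a - g b‖ + ‖f a - f b‖ * ‖g b‖ := by rw [norm_mul, norm_mul]
    refine h1.trans ?_
    have h2 : ‖f a‖ * dist (g a) (g b) ≤ Cf * (Kg * dist a b) :=
      mul_le_mul (hCf a ha) (hgl.dist_le_mul a ha b hb) dist_nonneg hCf0
    have h3 : dist (f a) (f b) * ‖g b‖ ≤ Kf * dist a b * Cg :=
      mul_le_mul (hfl.dist_le_mul a ha b hb) (hCg b hb) (norm_nonneg _)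
        (mul_nonneg (NNReal.coe_nonneg _) dist_nonneg)
    have h4 : (Cf * Kg + Cg * Kf : ℝ) ≤ ((Cf * ↑Kg + Cg * ↑Kf).toNNReal : ℝ) :=
      Real.le_coe_toNNReal _
    calc ‖f a‖ * dist (g a) (g b) + dist (f a) (f b) * ‖g b‖
        ≤ Cf * (Kg * dist a b) + Kf * dist a b * Cg := add_le_add h2 h3
      _ = (Cf * Kg + Cg * Kf) * dist a b := by ring
      _ ≤ ((Cf * ↑Kg + Cg * ↑Kf).toNNReal : ℝ) * dist a b :=
          mul_le_mul_of_nonneg_right h4 dist_nonneg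
  · calc ‖(f * g) y‖ = ‖f y‖ * ‖g y‖ := norm_mul _ _
      _ ≤ Cf * Cg := mul_le_mul (hCf y hy) (hCg y hy) (norm_nonneg _) hCf0

theorem good_one : Good (1 : X → ℂ) :=
  ⟨differentiableOn_const 1, ⟨0, (LipschitzWith.const 1).lipschitzOnWith⟩,
    ⟨1, zero_le_one, fun y _ => by simp⟩⟩

theorem good_const (c : ℂ) : Good (fun _ : X => c) :=
  ⟨differentiableOn_const c, ⟨0, (LipschitzWith.const c).lipschitzOnWith⟩,
    ⟨‖c‖, norm_nonneg c, fun y _ => le_rfl⟩⟩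

theorem good_affine (φ : X →L[ℂ] ℂ) (a : ℂ) : Good (fun y : X => φ y - a) := by
  refine ⟨((φ.differentiable).sub_const a).differentiableOn, ⟨‖φ‖₊, ?_⟩,
    ⟨‖φ‖ + ‖a‖, by positivity, fun y hy => ?_⟩⟩
  · apply LipschitzOnWith.of_dist_le_mul
    intro p hp q hq
    rw [dist_sub_right]
    exact φ.lipschitz.dist_le_mul p q
  · have hy1 : ‖y‖ ≤ 1 := le_of_lt (by simpa using hy)
    calc ‖φ y - a‖ ≤ ‖φ y‖ + ‖a‖ := norm_sub_le _ _
      _ ≤ ‖φ‖ * ‖y‖ + ‖a‖ := by gcongr; exact φ.le_opNorm y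
      _ ≤ ‖φ‖ * 1 + ‖a‖ := by gcongr
      _ = ‖φ‖ + ‖a‖ := by ring

end Stmt5Aux

/-- Evaluation functionals at pairwise distinct nonzero points of `B_X` are
linearly independent over the holomorphic Lipschitz functions vanishing at `0`. -/
theorem stmt_5 {X : Type*} [NormedAddCommGroup X] [NormedSpace ℂ X] [CompleteSpace X]
    (n : ℕ) (x : Fin n → X)
    (hx : ∀ j, x j ∈ Metric.ball (0 : X) 1) (hx0 : ∀ j, x j ≠ 0)
    (hdist : ∀ i j, i ≠ j → x i ≠ x j)
    (lam : Fin n → ℂ)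
    (h : ∀ f : X → ℂ, DifferentiableOn ℂ f (Metric.ball (0 : X) 1) →
      (∃ K : NNReal, LipschitzOnWith K f (Metric.ball (0 : X) 1)) → f 0 = 0 →
      ∑ j, lam j * f (x j) = 0) :
    ∀ j, lam j = 0 := by
  open Stmt5Aux in
  intro j
  classical
  -- functionals separating `x j` from `x i`
  set s : Finset (Fin n) := Finset.univ.erase j with hs
  have hsub : ∀ i ∈ s, x j - x i ≠ 0 := by
    intro i hi
    exact sub_ne_zero.mpr (hdist j i (Finset.ne_of_mem_erase hi).symm)
  have hφex : ∀ i : Fin n, ∃ φ : X →L[ℂ] ℂ, i ∈ s → φ (x j) - φ (x i) ≠ 0 := by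
    intro i
    by_cases hi : i ∈ s
    · obtain ⟨φ, -, hφ⟩ := exists_dual_vector ℂ _ (norm_ne_zero_iff.mpr (hsub i hi))
      refine ⟨φ, fun _ => ?_⟩
      rw [← map_sub, hφ]
      simpa using hsub i hi
    · exact ⟨0, fun hi' => absurd hi' hi⟩
  choose φ hφ using hφex
  -- a functional not vanishing at `x j`
  obtain ⟨ψ, -, hψ⟩ := exists_dual_vector ℂ (x j) (norm_ne_zero_iff.mpr (hx0 j))
  have hψj : ψ (x j) ≠ 0 := by rw [hψ]; simpa using hx0 j
  -- the interpolating function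
  set G : X → ℂ := (fun y => ψ y - 0) * ∏ i ∈ s, fun y => φ i y - φ i (x i) with hG
  have hGgood : Stmt5Aux.Good G := by
    refine Stmt5Aux.good_mul (Stmt5Aux.good_affine ψ 0) ?_
    refine Finset.prod_induction _ _ (fun a b => Stmt5Aux.good_mul) Stmt5Aux.good_one ?_
    intro i _
    exact Stmt5Aux.good_affine (φ i) (φ i (x i))
  have hGval : ∀ y, G y = (ψ y - 0) * ∏ i ∈ s, (φ i y - φ i (x i)) := by
    intro y
    simp [hG]
  have hGj : G (x j) ≠ 0 := by
    rw [hGval]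
    refine mul_ne_zero (by simpa using hψj) ?_
    exact Finset.prod_ne_zero_iff.mpr fun i hi => hφ i hi
  have hGi : ∀ i, i ≠ j → G (x i) = 0 := by
    intro i hij
    rw [hGval]
    have : (∏ k ∈ s, (φ k (x i) - φ k (x k))) = 0 :=
      Finset.prod_eq_zero (Finset.mem_erase.mpr ⟨hij, Finset.mem_univ i⟩) (sub_self _)
    rw [this, mul_zero]
  have hG0 : G 0 = 0 := by
    rw [hGval]
    simp
  -- the test function
  set f : X → ℂ := (fun _ => (G (x j))⁻¹) * G with hf
  have hfgood : Stmt5Aux.Good f := Stmt5Aux.good_mul (Stmt5Aux.good_const _) hGgood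
  have hsum := h f hfgood.1 hfgood.2.1 (by simp [hf, hG0])
  have hfval : ∀ i, f (x i) = if i = j then 1 else 0 := by
    intro i
    by_cases hij : i = j
    · simp [hf, hij, inv_mul_cancel₀ hGj]
    · simp [hf, hij, hGi i hij]
  rw [Finset.sum_congr rfl (fun i _ => by rw [hfval i])] at hsum
  simpa using hsum
end

section
/- Let X be a Banach space and let V be a subset of the unit sphere of X such that the closed unit ball of X equals the closed absolutely convex hull of V. Then for every compact set K ⊆ X there exist a sequence (α_j) of strictly positive real numbers converging to 0 and a sequence (v_j) ⊆ V such that K is contained in the closed absolutely convex hull of the set {α_j · v_j : j ∈ ℕ}. -/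
open Set Filter Metric Finset Topology

set_option linter.unusedSectionVars false
/-- The closed absolutely convex hull as in the older Mathlib: the smallest closed set containing
`s` that is balanced over `𝕜` and convex over `ℝ`. -/
def closedAbsConvexHullOld (𝕜 : Type*) {E : Type*} [SeminormedRing 𝕜] [SMul 𝕜 E]
    [AddCommGroup E] [Module ℝ E] [TopologicalSpace E] (s : Set E) : Set E :=
  ⋂₀ {t : Set E | s ⊆ t ∧ IsClosed t ∧ Balanced 𝕜 t ∧ Convex ℝ t}

section aux

variable {𝕜 X : Type*} [RCLike 𝕜] [NormedAddCommGroup X] [NormedSpace 𝕜 X]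
    [NormedSpace ℝ X] [IsScalarTower ℝ 𝕜 X]

private lemma stmt8_smulComm : SMulCommClass ℝ 𝕜 X :=
  ⟨fun r b y => by
    rw [RCLike.real_smul_eq_coe_smul (K := 𝕜) r y,
      RCLike.real_smul_eq_coe_smul (K := 𝕜) r (b • y), smul_smul, smul_smul, mul_comm]⟩

def absConvexHullO (𝕜 : Type*) [RCLike 𝕜] {X : Type*} [NormedAddCommGroup X] [NormedSpace 𝕜 X]
    [NormedSpace ℝ X] (s : Set X) : Set X :=
  ⋂₀ {t : Set X | s ⊆ t ∧ Balanced 𝕜 t ∧ Convex ℝ t}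

private lemma subset_absConvexHullO {s : Set X} : s ⊆ absConvexHullO 𝕜 s :=
  Set.subset_sInter fun _ ht => ht.1

private lemma absConvexHullO_min {s t : Set X} (hst : s ⊆ t) (hb : Balanced 𝕜 t)
    (hc : Convex ℝ t) : absConvexHullO 𝕜 s ⊆ t :=
  Set.sInter_subset_of_mem ⟨hst, hb, hc⟩

private lemma balanced_absConvexHullO {s : Set X} : Balanced 𝕜 (absConvexHullO 𝕜 s) := by
  intro a ha
  rintro _ ⟨y, hy, rfl⟩
  exact Set.mem_sInter.mpr fun t ht =>
    ht.2.1 a ha (smul_mem_smul_set (Set.mem_sInter.mp hy t ht))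

private lemma convex_absConvexHullO {s : Set X} : Convex ℝ (absConvexHullO 𝕜 s) :=
  convex_sInter fun _ ht => ht.2.2

private lemma stmt8_balanced_convexHull {B : Set X} (hB : Balanced 𝕜 B) :
    Balanced 𝕜 (convexHull ℝ B) := by
  haveI : SMulCommClass ℝ 𝕜 X := stmt8_smulComm
  intro a ha
  rintro _ ⟨y, hy, rfl⟩
  have hlin : IsLinearMap ℝ (fun x : X => a • x) :=
    ⟨fun x y => smul_add a x y, fun c x => smul_comm a c x⟩
  have hsub : convexHull ℝ B ⊆ (fun x : X => a • x) ⁻¹' convexHull ℝ B :=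
    convexHull_min (fun x hx => subset_convexHull ℝ B (hB a ha (smul_mem_smul_set hx)))
      ((convex_convexHull ℝ B).is_linear_preimage hlin)
  exact hsub hy

private lemma absConvexHull_eq_convexHull_balancedHullO {s : Set X} :
    absConvexHullO 𝕜 s = convexHull ℝ (balancedHull 𝕜 s) :=
  Set.Subset.antisymm
    (absConvexHullO_min ((subset_balancedHull 𝕜).trans (subset_convexHull ℝ _))
      (stmt8_balanced_convexHull (balancedHull.balanced s)) (convex_convexHull ℝ _))
    (convexHull_min (balanced_absConvexHullO.balancedHull_subset_of_subset subset_absConvexHullO)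
      convex_absConvexHullO)

private lemma isClosed_closedAbsConvexHullO {s : Set X} :
    IsClosed (closedAbsConvexHullOld 𝕜 s) :=
  isClosed_sInter fun _ ht => ht.2.1

private lemma absConvexHull_subset_closedAbsConvexHullO {s : Set X} :
    absConvexHullO 𝕜 s ⊆ closedAbsConvexHullOld 𝕜 s :=
  Set.subset_sInter fun _ ht => absConvexHullO_min ht.1 ht.2.2.1 ht.2.2.2

private lemma closedAbsConvexHull_eq_closure_absConvexHullO {s : Set X} :
    closedAbsConvexHullOld 𝕜 s = closure (absConvexHullO 𝕜 s) :=
  Set.Subset.antisymm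
    (Set.sInter_subset_of_mem ⟨subset_absConvexHullO.trans subset_closure, isClosed_closure,
      balanced_absConvexHullO.closure, convex_absConvexHullO.closure⟩)
    (closure_minimal absConvexHull_subset_closedAbsConvexHullO isClosed_closedAbsConvexHullO)

private lemma stmt8_geom_sum {r : ℝ} (h0 : 0 ≤ r) (h1 : r < 1) (n : ℕ) :
    ∑ i ∈ Finset.range n, r ^ i ≤ (1 - r)⁻¹ := by
  have h2 : (0:ℝ) < 1 - r := by linarith
  have hp : (0:ℝ) ≤ r ^ n := pow_nonneg h0 n
  rw [geom_sum_eq h1.ne n, ← neg_div_neg_eq, neg_sub, neg_sub, ← one_div]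
  calc (1 - r ^ n) / (1 - r) ≤ 1 / (1 - r) := by gcongr; linarith
    _ = 1 / (1 - r) := rfl

private lemma stmt8_sum_mem_convex {C : Set X} (hC : Convex ℝ C) (h0 : (0 : X) ∈ C)
    {ι : Type*} (t : Finset ι) (w : ι → ℝ) (z : ι → X) (hw : ∀ i ∈ t, 0 ≤ w i)
    (hw1 : ∑ i ∈ t, w i ≤ 1) (hz : ∀ i ∈ t, z i ∈ C) : (∑ i ∈ t, w i • z i) ∈ C := by
  have hs0 : 0 ≤ ∑ i ∈ t, w i := Finset.sum_nonneg hw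
  rcases eq_or_lt_of_le hs0 with h | h
  · have hzz : ∀ i ∈ t, w i = 0 := (Finset.sum_eq_zero_iff_of_nonneg hw).mp h.symm
    rw [Finset.sum_congr rfl (fun i hi => by rw [hzz i hi, zero_smul])]
    simpa using h0
  · set s := ∑ i ∈ t, w i with hs
    have key : ∑ i ∈ t, w i • z i = s • ∑ i ∈ t, (s⁻¹ * w i) • z i := by
      rw [Finset.smul_sum]
      refine Finset.sum_congr rfl fun i hi => ?_
      rw [smul_smul, mul_inv_cancel_left₀ h.ne']
    rw [key]
    have hmem : (∑ i ∈ t, (s⁻¹ * w i) • z i) ∈ C := by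
      refine hC.sum_mem (fun i hi => mul_nonneg (inv_nonneg.mpr hs0) (hw i hi)) ?_ hz
      rw [← Finset.mul_sum, inv_mul_cancel₀ h.ne']
    exact hC.smul_mem_of_zero_mem h0 hmem ⟨hs0, hw1⟩

private lemma stmt8_zero_mem {S : Set X} (hS : S.Nonempty) : (0 : X) ∈ absConvexHullO 𝕜 S := by
  obtain ⟨s₀, hs₀⟩ := hS
  have h1 : (0 : 𝕜) • s₀ ∈ absConvexHullO 𝕜 S :=
    balanced_absConvexHullO (0 : 𝕜) (by simp) (smul_mem_smul_set (subset_absConvexHullO hs₀))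
  simpa using h1

private lemma stmt8_comb_mem {S : Set X} (hS : S.Nonempty) {ι : Type*} (t : Finset ι)
    (a : ι → 𝕜) (z : ι → X) (ha : ∑ i ∈ t, ‖a i‖ ≤ 1) (hz : ∀ i ∈ t, a i ≠ 0 → z i ∈ S) :
    (∑ i ∈ t, a i • z i) ∈ absConvexHullO 𝕜 S := by
  classical
  have h0 : (0 : X) ∈ absConvexHullO 𝕜 S := stmt8_zero_mem hS
  set u : ι → X := fun i => if h : a i = 0 then 0 else (‖a i‖⁻¹ : ℝ) • (a i • z i) with hu
  have hui : ∀ i ∈ t, u i ∈ absConvexHullO 𝕜 S := by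
    intro i hi
    by_cases h : a i = 0
    · simp [hu, h, h0]
    · have hz' : z i ∈ absConvexHullO 𝕜 S := subset_absConvexHullO (hz i hi h)
      have he : (‖a i‖⁻¹ : ℝ) • (a i • z i) = ((‖a i‖⁻¹ : ℝ) • a i) • z i := (smul_assoc _ _ _).symm
      simp only [hu, dif_neg h, he]
      refine balanced_absConvexHullO _ ?_ (smul_mem_smul_set hz')
      rw [norm_smul, norm_inv, norm_norm, inv_mul_cancel₀ (norm_ne_zero_iff.mpr h)]
  have key : ∑ i ∈ t, a i • z i = ∑ i ∈ t, ‖a i‖ • u i := by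
    refine Finset.sum_congr rfl fun i hi => ?_
    by_cases h : a i = 0
    · simp [hu, h]
    · simp only [hu, dif_neg h, smul_smul]
      rw [mul_inv_cancel₀ (norm_ne_zero_iff.mpr h), one_smul]
  rw [key]
  exact stmt8_sum_mem_convex convex_absConvexHullO h0 t _ _ (fun i _ => norm_nonneg _) ha hui

private lemma stmt8_flatten {ι M : Type*} [AddCommMonoid M] (t : Finset ι) (F : ι → M) (d : M) :
    ∑ j ∈ Finset.range t.card,
        (if h : j < t.card then F ((t.equivFin.symm ⟨j, h⟩ : ι)) else d) = ∑ i ∈ t, F i := by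
  rw [← Fin.sum_univ_eq_sum_range]
  have h1 : ∀ j : Fin t.card,
      (if h : (j : ℕ) < t.card then F ((t.equivFin.symm ⟨(j : ℕ), h⟩ : ι)) else d)
        = F ((t.equivFin.symm j : ι)) := by
    intro j; rw [dif_pos j.isLt]
  rw [Finset.sum_congr rfl (fun j _ => h1 j),
    Equiv.sum_comp t.equivFin.symm (fun i : {x // x ∈ t} => F (i : ι))]
  exact Finset.sum_coe_sort t F

private lemma stmt8_comb_of_mem {S : Set X} {z : X} (hz : z ∈ absConvexHullO 𝕜 S)
    {v₀ : X} (hv₀ : v₀ ∈ S) :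
    ∃ (k : ℕ) (a : ℕ → 𝕜) (w : ℕ → X), (∀ i, w i ∈ S) ∧ (∀ i, k ≤ i → a i = 0) ∧
      (∀ M, ∑ i ∈ Finset.range M, ‖a i‖ ≤ 1) ∧ z = ∑ i ∈ Finset.range k, a i • w i := by
  classical
  haveI : SMulCommClass ℝ 𝕜 X := stmt8_smulComm
  rw [absConvexHull_eq_convexHull_balancedHullO, _root_.convexHull_eq] at hz
  obtain ⟨ι, t, wt, zt, hw0, hw1, hmem, hcm⟩ := hz
  rw [Finset.centerMass_eq_of_sum_1 _ _ hw1] at hcm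
  have hchoice : ∀ i : ι, ∃ (r : 𝕜) (y : X), ‖r‖ ≤ 1 ∧ y ∈ S ∧ (i ∈ t → zt i = r • y) := by
    intro i
    by_cases hi : i ∈ t
    · obtain ⟨r, hr, hzr⟩ := mem_balancedHull_iff.mp (hmem i hi)
      obtain ⟨y, hy, hry⟩ := hzr
      exact ⟨r, y, hr, hy, fun _ => hry.symm⟩
    · exact ⟨0, v₀, by simp, hv₀, fun h => absurd h hi⟩
  choose r y hr hy hzy using hchoice
  set L := t.card with hL
  set A : ℕ → 𝕜 := fun j =>
    if h : j < L then (wt ((t.equivFin.symm ⟨j, h⟩ : ι))) • r ((t.equivFin.symm ⟨j, h⟩ : ι))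
    else 0 with hA
  set W : ℕ → X := fun j =>
    if h : j < L then y ((t.equivFin.symm ⟨j, h⟩ : ι)) else v₀ with hW
  have hWS : ∀ i, W i ∈ S := by
    intro i; simp only [hW]; split
    · exact hy _
    · exact hv₀
  have hA0 : ∀ i, L ≤ i → A i = 0 := by
    intro i hi; simp only [hA]; rw [dif_neg (by omega)]
  have hmass : ∑ j ∈ Finset.range L, ‖A j‖ ≤ 1 := by
    have h1 : ∀ j ∈ Finset.range L, ‖A j‖
        = (if h : j < L then ‖(wt ((t.equivFin.symm ⟨j, h⟩ : ι)))
            • r ((t.equivFin.symm ⟨j, h⟩ : ι))‖ else 0) := by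
      intro j hj
      simp only [hA]
      rw [dif_pos (Finset.mem_range.mp hj), dif_pos (Finset.mem_range.mp hj)]
    have h3 : (∑ j ∈ Finset.range L, if h : j < L then ‖wt ((t.equivFin.symm ⟨j, h⟩ : ι))
        • r ((t.equivFin.symm ⟨j, h⟩ : ι))‖ else 0) = ∑ i ∈ t, ‖wt i • r i‖ :=
      stmt8_flatten t (fun i => ‖wt i • r i‖) 0
    rw [Finset.sum_congr rfl h1, h3]
    calc ∑ i ∈ t, ‖wt i • r i‖ ≤ ∑ i ∈ t, wt i := by
          refine Finset.sum_le_sum fun i hi => ?_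
          rw [norm_smul, Real.norm_of_nonneg (hw0 i hi)]
          exact mul_le_of_le_one_right (hw0 i hi) (hr i)
      _ = 1 := hw1
  have hmassM : ∀ M, ∑ i ∈ Finset.range M, ‖A i‖ ≤ 1 := by
    intro M
    calc ∑ i ∈ Finset.range M, ‖A i‖ ≤ ∑ i ∈ Finset.range (max M L), ‖A i‖ := by
          refine Finset.sum_le_sum_of_subset_of_nonneg ?_ (fun i _ _ => norm_nonneg _)
          exact Finset.range_subset_range.mpr (le_max_left _ _)
      _ = ∑ i ∈ Finset.range L, ‖A i‖ := by
          refine (Finset.sum_subset (Finset.range_subset_range.mpr (le_max_right _ _)) ?_).symm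
          intro i _ hi
          rw [hA0 i (by simpa using hi), norm_zero]
      _ ≤ 1 := hmass
  refine ⟨L, A, W, hWS, hA0, hmassM, ?_⟩
  have h2 : ∀ j ∈ Finset.range L, A j • W j
      = (if h : j < L then (wt ((t.equivFin.symm ⟨j, h⟩ : ι)))
          • (r ((t.equivFin.symm ⟨j, h⟩ : ι)) • y ((t.equivFin.symm ⟨j, h⟩ : ι))) else 0) := by
    intro j hj
    have hjL := Finset.mem_range.mp hj
    simp only [hA, hW]
    rw [dif_pos hjL, dif_pos hjL, dif_pos hjL, smul_assoc]
  have h4 : (∑ j ∈ Finset.range L, if h : j < L then wt ((t.equivFin.symm ⟨j, h⟩ : ι))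
      • (r ((t.equivFin.symm ⟨j, h⟩ : ι)) • y ((t.equivFin.symm ⟨j, h⟩ : ι))) else 0)
      = ∑ i ∈ t, wt i • (r i • y i) := stmt8_flatten t (fun i => wt i • (r i • y i)) 0
  rw [Finset.sum_congr rfl h2, h4, ← hcm]
  exact Finset.sum_congr rfl fun i hi => by rw [hzy i hi]

private lemma stmt8_approx {V : Set X}
    (hball : Metric.closedBall (0 : X) 1 = closedAbsConvexHullOld 𝕜 V)
    {r ε : ℝ} (hr : 0 < r) (hε : 0 < ε) {y : X} (hy : ‖y‖ ≤ r) :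
    ∃ z ∈ absConvexHullO 𝕜 V, ‖y - r • z‖ ≤ ε := by
  have h1 : r⁻¹ • y ∈ Metric.closedBall (0 : X) 1 := by
    rw [mem_closedBall_zero_iff, norm_smul, norm_inv, Real.norm_of_nonneg hr.le,
      ← div_eq_inv_mul, div_le_one hr]
    exact hy
  rw [hball, closedAbsConvexHull_eq_closure_absConvexHullO] at h1
  obtain ⟨z, hzmem, hzd⟩ := Metric.mem_closure_iff.mp h1 (ε / r) (div_pos hε hr)
  refine ⟨z, hzmem, ?_⟩
  have h2 : y - r • z = r • (r⁻¹ • y - z) := by rw [smul_sub, smul_inv_smul₀ hr.ne']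
  rw [h2, norm_smul, Real.norm_of_nonneg hr.le, ← dist_eq_norm]
  calc r * dist (r⁻¹ • y) z ≤ r * (ε / r) := by
        exact mul_le_mul_of_nonneg_left hzd.le hr.le
    _ = ε := by field_simp

private lemma stmt8_expand {V : Set X}
    (hball : Metric.closedBall (0 : X) 1 = closedAbsConvexHullOld 𝕜 V)
    {v₁ : X} (hv₁ : v₁ ∈ absConvexHullO 𝕜 V)
    {c : ℝ} (hc : 0 < c) (q : X) (hq : ‖q‖ ≤ c) :
    ∃ z : ℕ → X, (∀ m, z m ∈ absConvexHullO 𝕜 V) ∧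
      ∀ M, ‖q - ∑ m ∈ Finset.range M, (c * (1/4 : ℝ) ^ m) • z m‖ ≤ c * (1/4 : ℝ) ^ M := by
  have hA : ∀ (m : ℕ) (y : X), ∃ zz : X, zz ∈ absConvexHullO 𝕜 V ∧
      (‖y‖ ≤ c * (1/4 : ℝ) ^ m → ‖y - (c * (1/4 : ℝ) ^ m) • zz‖ ≤ c * (1/4 : ℝ) ^ (m + 1)) := by
    intro m y
    by_cases h : ‖y‖ ≤ c * (1/4 : ℝ) ^ m
    · obtain ⟨zz, hzz, hb⟩ := stmt8_approx hball (r := c * (1/4 : ℝ) ^ m)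
        (by positivity) (ε := c * (1/4 : ℝ) ^ (m + 1)) (by positivity) h
      exact ⟨zz, hzz, fun _ => hb⟩
    · exact ⟨v₁, hv₁, fun hy => absurd hy h⟩
  choose F hF1 hF2 using hA
  let u : ℕ → X := fun n => Nat.rec q (fun m um => um - (c * (1/4 : ℝ) ^ m) • F m um) n
  have hu0 : u 0 = q := rfl
  have hus : ∀ m, u (m + 1) = u m - (c * (1/4 : ℝ) ^ m) • F m (u m) := fun m => rfl
  have hinv : ∀ m, ‖u m‖ ≤ c * (1/4 : ℝ) ^ m := by
    intro m; induction m with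
    | zero => simpa [hu0] using hq
    | succ m ih => rw [hus m]; exact hF2 m (u m) ih
  refine ⟨fun m => F m (u m), fun m => hF1 m (u m), ?_⟩
  intro M
  have hsum : q - ∑ m ∈ Finset.range M, (c * (1/4 : ℝ) ^ m) • F m (u m) = u M := by
    induction M with
    | zero => simp [hu0]
    | succ M ih => rw [Finset.sum_range_succ, hus M, ← ih]; abel
  rw [hsum]; exact hinv M

end aux
set_option maxHeartbeats 1000000 in
/-- If the closed unit ball of a Banach space `X` is the closed absolutely
convex hull of a subset `V` of the unit sphere, then every compact set `K ⊆ X` is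
contained in the closed absolutely convex hull of a set `{α_j • v_j}` with `α_j > 0`,
`α_j → 0` and `v_j ∈ V`. -/
theorem stmt_8 {𝕜 X : Type*} [RCLike 𝕜] [NormedAddCommGroup X] [NormedSpace 𝕜 X]
    [NormedSpace ℝ X] [IsScalarTower ℝ 𝕜 X] [CompleteSpace X]
    (V : Set X) (hV : V ⊆ Metric.sphere (0 : X) 1)
    (hball : Metric.closedBall (0 : X) 1 = closedAbsConvexHullOld 𝕜 V)
    (K : Set X) (hK : IsCompact K) :
    ∃ (α : ℕ → ℝ) (v : ℕ → X),
      (∀ j, 0 < α j) ∧ Filter.Tendsto α Filter.atTop (nhds 0) ∧ (∀ j, v j ∈ V) ∧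
      K ⊆ closedAbsConvexHullOld 𝕜 {x : X | ∃ j, x = α j • v j} := by
  classical
  haveI : SMulCommClass ℝ 𝕜 X := stmt8_smulComm
  -- V is nonempty
  have hVne : V.Nonempty := by
    by_contra h
    rw [Set.not_nonempty_iff_eq_empty] at h
    subst h
    have h0 : (0 : X) ∈ Metric.closedBall (0 : X) 1 := Metric.mem_closedBall_self zero_le_one
    rw [hball] at h0
    exact (Set.sInter_subset_of_mem (show (∅ : Set X) ∈ {t : Set X | (∅ : Set X) ⊆ t ∧ IsClosed t ∧ Balanced 𝕜 t ∧ Convex ℝ t} from ⟨subset_refl _, isClosed_empty, balanced_empty, convex_empty⟩)) h0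
  obtain ⟨v₀, hv₀⟩ := hVne
  have hv₀h : v₀ ∈ absConvexHullO 𝕜 V := subset_absConvexHullO hv₀
  -- bound for K
  obtain ⟨C₀, hC₀⟩ := hK.isBounded.exists_norm_le
  set C : ℝ := max C₀ 0 + 4 with hCdef
  have hC4 : 4 ≤ C := by rw [hCdef]; linarith [le_max_right C₀ (0:ℝ)]
  have hCpos : 0 < C := by linarith
  have hCK : ∀ x ∈ K, ‖x‖ ≤ C - 4 := fun x hx => (hC₀ x hx).trans (by
    rw [hCdef]; linarith [le_max_left C₀ (0:ℝ)])
  -- finite nets for K at all scales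
  have hnets : ∀ n : ℕ, ∃ Lst : List X, ∀ x ∈ K,
      ∃ p < Lst.length, dist x (Lst.getD p 0) < (1/2 : ℝ) ^ n := by
    intro n
    obtain ⟨t, htf, hcov⟩ := (Metric.totallyBounded_iff.mp hK.totallyBounded)
      ((1/2 : ℝ) ^ n) (by positivity)
    refine ⟨htf.toFinset.toList, ?_⟩
    intro x hx
    obtain ⟨y, hyt, hxy⟩ := Set.mem_iUnion₂.mp (hcov hx)
    have hyl : y ∈ htf.toFinset.toList := by
      rw [Finset.mem_toList, Set.Finite.mem_toFinset]; exact hyt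
    obtain ⟨p, hp, hpy⟩ := List.mem_iff_getElem.mp hyl
    refine ⟨p, hp, ?_⟩
    rw [List.getD_eq_getElem _ _ hp, hpy]
    exact Metric.mem_ball.mp hxy
  choose Lst hLst using hnets
  set NN : ℕ → ℕ := fun n => (Lst n).length with hNN
  set en : ℕ → ℕ → X := fun n p => (Lst n).getD p 0 with hen
  set cc : ℕ → ℝ := fun n => C * (1/2 : ℝ) ^ n with hcc
  have hccpos : ∀ n, 0 < cc n := fun n => by simp only [hcc]; positivity
  set qq : ℕ → ℕ → ℕ → X := fun n p p' => if n = 0 then en 0 p else en n p - en (n - 1) p'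
    with hqq
  -- expansions of the difference points into series over absConvexHull V
  have hexp : ∀ n p p', ∃ z : ℕ → X, (∀ m, z m ∈ absConvexHullO 𝕜 V) ∧
      (‖qq n p p'‖ ≤ cc n → ∀ M,
        ‖qq n p p' - ∑ m ∈ Finset.range M, (cc n * (1/4 : ℝ) ^ m) • z m‖
          ≤ cc n * (1/4 : ℝ) ^ M) := by
    intro n p p'
    by_cases h : ‖qq n p p'‖ ≤ cc n
    · obtain ⟨z, hz1, hz2⟩ := stmt8_expand hball hv₀h (hccpos n) _ h
      exact ⟨z, hz1, fun _ => hz2⟩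
    · exact ⟨fun _ => v₀, fun _ => hv₀h, fun h' => absurd h' h⟩
  choose zf hzf1 hzf2 using hexp
  -- finite absolutely convex combinations for each series element
  have hcombo : ∀ (n p p' m : ℕ), ∃ (k : ℕ) (a : ℕ → 𝕜) (w : ℕ → X), (∀ i, w i ∈ V) ∧
      (∀ i, k ≤ i → a i = 0) ∧ (∀ M, ∑ i ∈ Finset.range M, ‖a i‖ ≤ 1) ∧
      zf n p p' m = ∑ i ∈ Finset.range k, a i • w i :=
    fun n p p' m => stmt8_comb_of_mem (hzf1 n p p' m) hv₀
  choose kk aa ww hww haa0 haa1 hzw using hcombo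
  -- scales and weights
  set β : ℕ → ℕ → ℝ := fun n m => 5 * C * (3/4 : ℝ) ^ (n + m) with hβ
  set σ : ℕ → ℕ → ℝ := fun n m => (1/5 : ℝ) * (2/3 : ℝ) ^ n * (1/3 : ℝ) ^ m with hσ
  have hβpos : ∀ n m, 0 < β n m := fun n m => by simp only [hβ]; positivity
  have hσpos : ∀ n m, 0 < σ n m := fun n m => by simp only [hσ]; positivity
  have hσβ : ∀ n m, σ n m * β n m = cc n * (1/4 : ℝ) ^ m := by
    intro n m
    have h1 : ((2:ℝ)/3) * (3/4) = 1/2 := by norm_num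
    have h2 : ((1:ℝ)/3) * (3/4) = 1/4 := by norm_num
    calc σ n m * β n m = C * (((2:ℝ)/3) * (3/4)) ^ n * ((((1:ℝ)/3) * (3/4)) ^ m) := by
          simp only [hσ, hβ]; rw [pow_add, mul_pow, mul_pow]; ring
      _ = cc n * (1/4 : ℝ) ^ m := by rw [h1, h2]
  -- uniform bound on combination sizes over in-range net indices
  set KK : ℕ → ℕ → ℕ := fun n m =>
    ((Finset.range (NN n)) ×ˢ (Finset.range (NN (n - 1)))).sup (fun pq => kk n pq.1 pq.2 m)
    with hKK
  have hkKK : ∀ n m p p', p < NN n → p' < NN (n - 1) → kk n p p' m ≤ KK n m := by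
    intro n m p p' hp hp'
    simp only [hKK]
    exact Finset.le_sup (f := fun pq : ℕ × ℕ => kk n pq.1 pq.2 m) (b := (p, p'))
      (Finset.mem_product.mpr ⟨Finset.mem_range.mpr hp, Finset.mem_range.mpr hp'⟩)
  -- the index data
  set InR : ℕ × ℕ × ℕ × ℕ × ℕ → Prop := fun ξ =>
    ξ.2.1 < NN ξ.1 ∧ ξ.2.2.1 < NN (ξ.1 - 1) ∧ ξ.2.2.2.2 < KK ξ.1 ξ.2.2.2.1 with hInR
  set A : ℕ × ℕ × ℕ × ℕ × ℕ → ℝ := fun ξ =>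
    if InR ξ then β ξ.1 ξ.2.2.2.1
    else min (β ξ.1 ξ.2.2.2.1) ((1/2 : ℝ) ^ (ξ.1 + ξ.2.1 + ξ.2.2.1 + ξ.2.2.2.1 + ξ.2.2.2.2))
    with hA
  set W : ℕ × ℕ × ℕ × ℕ × ℕ → X := fun ξ => ww ξ.1 ξ.2.1 ξ.2.2.1 ξ.2.2.2.1 ξ.2.2.2.2 with hW
  set enc : (ℕ × ℕ × ℕ × ℕ × ℕ) ≃ ℕ := Denumerable.eqv _ with henc
  have hApos : ∀ ξ, 0 < A ξ := by
    intro ξ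
    simp only [hA]
    split
    · exact hβpos _ _
    · exact lt_min (hβpos _ _) (by positivity)
  refine ⟨fun j => A (enc.symm j), fun j => W (enc.symm j), fun j => hApos _, ?_, ?_, ?_⟩
  · -- tendsto 0
    have hAt : Filter.Tendsto A Filter.cofinite (nhds 0) := by
      rw [Metric.tendsto_nhds]
      intro ε hε
      rw [Filter.eventually_cofinite]
      have t1 : Filter.Tendsto (fun j : ℕ => 5 * C * (3/4 : ℝ) ^ j) Filter.atTop (nhds 0) := by
        simpa using (tendsto_pow_atTop_nhds_zero_of_lt_one (by norm_num)
          (by norm_num : (3/4:ℝ) < 1)).const_mul (5 * C)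
      have t2 : Filter.Tendsto (fun j : ℕ => (1/2 : ℝ) ^ j) Filter.atTop (nhds 0) :=
        tendsto_pow_atTop_nhds_zero_of_lt_one (by norm_num) (by norm_num)
      obtain ⟨B, hB⟩ := Filter.eventually_atTop.mp
        ((t1.eventually_lt_const hε).and (t2.eventually_lt_const hε))
      set PB := (Finset.range B).sup NN with hPB
      set PB' := (Finset.range B).sup (fun n => NN (n - 1)) with hPB'
      set IB := ((Finset.range B) ×ˢ (Finset.range B)).sup (fun nm => KK nm.1 nm.2) with hIB
      have hfin : ((Set.Iio B ×ˢ Set.Iio PB ×ˢ Set.Iio PB' ×ˢ Set.Iio B ×ˢ Set.Iio IB) ∪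
          (Set.Iio B ×ˢ Set.Iio B ×ˢ Set.Iio B ×ˢ Set.Iio B ×ˢ Set.Iio B) :
          Set (ℕ × ℕ × ℕ × ℕ × ℕ)).Finite := by
        refine Set.Finite.union ?_ ?_ <;>
          exact (Set.finite_Iio _).prod ((Set.finite_Iio _).prod ((Set.finite_Iio _).prod
            ((Set.finite_Iio _).prod (Set.finite_Iio _))))
      refine hfin.subset ?_
      rintro ⟨n, p, p', m, i⟩ hξ
      simp only [Set.mem_setOf_eq, dist_zero_right, Real.norm_eq_abs, not_lt] at hξ
      rw [abs_of_pos (hApos _)] at hξ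
      by_cases hin : InR (n, p, p', m, i)
      · left
        simp only [hA, if_pos hin] at hξ
        have hβε : ε ≤ β n m := hξ
        have hnm : n + m < B := by
          by_contra hc
          have h5 := (hB (n + m) (le_of_not_gt hc)).1
          simp only [hβ] at hβε
          linarith
        simp only [hInR] at hin
        obtain ⟨h1, h2, h3⟩ := hin
        simp only [Set.mem_prod, Set.mem_Iio]
        refine ⟨by omega, ?_, ?_, by omega, ?_⟩
        · exact lt_of_lt_of_le h1 (Finset.le_sup (Finset.mem_range.mpr (by omega : n < B)))
        · exact lt_of_lt_of_le h2 (Finset.le_sup (f := fun n => NN (n - 1)) (Finset.mem_range.mpr (by omega : n < B)))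
        · refine lt_of_lt_of_le h3 ?_
          rw [hIB]
          exact Finset.le_sup (f := fun nm : ℕ × ℕ => KK nm.1 nm.2) (b := (n, m))
            (Finset.mem_product.mpr ⟨Finset.mem_range.mpr (by omega),
              Finset.mem_range.mpr (by omega)⟩)
      · right
        simp only [hA, if_neg hin, le_min_iff] at hξ
        have hp2 : ε ≤ (1/2 : ℝ) ^ (n + p + p' + m + i) := hξ.2
        have hs : n + p + p' + m + i < B := by
          by_contra hc
          have h5 := (hB (n + p + p' + m + i) (le_of_not_gt hc)).2
          linarith
        simp only [Set.mem_prod, Set.mem_Iio]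
        omega
    have h2 : Filter.Tendsto (fun j : ℕ => A (enc.symm j)) Filter.cofinite (nhds 0) :=
      hAt.comp (enc.symm.injective.tendsto_cofinite)
    rwa [Nat.cofinite_eq_atTop] at h2
  · intro j
    simp only [hW]
    exact hww _ _ _ _ _
  · -- main inclusion
    intro x hx
    show x ∈ closedAbsConvexHullOld 𝕜 {y : X | ∃ j, y = A (enc.symm j) • W (enc.symm j)}
    set SS : Set X := {y : X | ∃ j, y = A (enc.symm j) • W (enc.symm j)} with hSS
    have hSSne : SS.Nonempty := ⟨A (enc.symm 0) • W (enc.symm 0), 0, rfl⟩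
    choose px hpx1 hpx2 using fun n => hLst n x hx
    have hpx1' : ∀ n, px n < NN n := hpx1
    have hpx2' : ∀ n, dist x (en n (px n)) < (1/2 : ℝ)^n := hpx2
    set g : ℕ → X := fun n => qq n (px n) (px (n - 1)) with hg
    have hg0 : g 0 = en 0 (px 0) := by simp [hg, hqq]
    have hgstep : ∀ i : ℕ, g (i + 1) = en (i + 1) (px (i + 1)) - en i (px i) := by
      intro i
      simp only [hg, hqq]
      rw [if_neg (Nat.succ_ne_zero i)]
      simp
    have hgnorm : ∀ n, ‖g n‖ ≤ cc n := by
      intro n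
      match n with
      | 0 =>
        have h1 : ‖en 0 (px 0)‖ - ‖x‖ ≤ ‖en 0 (px 0) - x‖ := norm_sub_norm_le _ _
        have h2 : ‖en 0 (px 0) - x‖ = dist x (en 0 (px 0)) := by
          rw [dist_eq_norm, norm_sub_rev]
        have h3 := hpx2' 0
        norm_num at h3
        have h4 := hCK x hx
        rw [hg0]
        have h5 : ‖en 0 (px 0)‖ ≤ C := by rw [h2] at h1; linarith
        simpa [hcc] using h5
      | Nat.succ n =>
        have h1 : ‖en (n+1) (px (n+1)) - en n (px n)‖
            ≤ dist (en (n+1) (px (n+1))) x + dist x (en n (px n)) := by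
          rw [← dist_eq_norm]; exact dist_triangle _ _ _
        have h2 := hpx2' (n+1)
        have h3 := hpx2' n
        rw [dist_comm] at h2
        have h5 : ‖g (n+1)‖ ≤ (1/2:ℝ)^(n+1) + (1/2:ℝ)^n := by
          rw [hgstep n]
          have h2' := hpx2' (n+1)
          rw [dist_comm (en (n+1) (px (n+1))) x] at h1
          linarith
        refine h5.trans ?_
        have hps : (0:ℝ) < (1/2:ℝ)^n := by positivity
        have hcc' : cc (n+1) = C * ((1/2:ℝ)^n * (1/2)) := by
          simp only [hcc]; rw [pow_succ]
        rw [hcc', pow_succ]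
        nlinarith [mul_nonneg (by linarith : (0:ℝ) ≤ C - 3) hps.le]
    have htel : ∀ N, ∑ n ∈ Finset.range (N + 1), g n = en N (px N) := by
      intro N
      rw [Finset.sum_range_succ', Finset.sum_congr rfl (fun i _ => hgstep i),
        Finset.sum_range_sub (fun i => en i (px i)), hg0]
      abel
    set P : ℕ → X := fun N => ∑ n ∈ Finset.range (N+1), ∑ m ∈ Finset.range (N+1),
        (cc n * (1/4:ℝ)^m) • zf n (px n) (px (n-1)) m with hP
    have herr : ∀ N, ‖x - P N‖ ≤ (1/2:ℝ)^N + 2 * C * (1/4:ℝ)^(N+1) := by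
      intro N
      have hdec : x - P N = (x - en N (px N)) + ∑ n ∈ Finset.range (N+1),
          (g n - ∑ m ∈ Finset.range (N+1), (cc n * (1/4:ℝ)^m) • zf n (px n) (px (n-1)) m) := by
        rw [Finset.sum_sub_distrib, htel N]
        simp only [hP]
        abel
      rw [hdec]
      refine (norm_add_le _ _).trans ?_
      have e1 : ‖x - en N (px N)‖ ≤ (1/2:ℝ)^N := by
        rw [← dist_eq_norm]; exact (hpx2' N).le
      have e2 : ‖∑ n ∈ Finset.range (N+1), (g n - ∑ m ∈ Finset.range (N+1),
          (cc n * (1/4:ℝ)^m) • zf n (px n) (px (n-1)) m)‖ ≤ 2 * C * (1/4:ℝ)^(N+1) := by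
        refine (norm_sum_le _ _).trans ?_
        have e3 : ∀ n ∈ Finset.range (N+1), ‖g n - ∑ m ∈ Finset.range (N+1),
            (cc n * (1/4:ℝ)^m) • zf n (px n) (px (n-1)) m‖ ≤ cc n * (1/4:ℝ)^(N+1) :=
          fun n _ => hzf2 n (px n) (px (n-1)) (hgnorm n) (N+1)
        refine (Finset.sum_le_sum e3).trans ?_
        have e4 : ∑ n ∈ Finset.range (N+1), cc n * (1/4:ℝ)^(N+1)
            = (∑ n ∈ Finset.range (N+1), (1/2:ℝ)^n) * (C * (1/4:ℝ)^(N+1)) := by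
          simp only [hcc]
          rw [Finset.sum_mul]
          exact Finset.sum_congr rfl fun n _ => by ring
        rw [e4]
        have e5 := stmt8_geom_sum (r := 1/2) (by norm_num) (by norm_num) (N+1)
        have e6 : ((1:ℝ) - 1/2)⁻¹ = 2 := by norm_num
        rw [e6] at e5
        have e7 : (0:ℝ) < C * (1/4:ℝ)^(N+1) := by positivity
        nlinarith
      exact add_le_add e1 e2
    have hPtend : Filter.Tendsto P Filter.atTop (nhds x) := by
      rw [← tendsto_sub_nhds_zero_iff]
      refine squeeze_zero_norm (a := fun N => (1/2:ℝ)^N + 2 * C * (1/4:ℝ)^(N+1))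
        (fun N => by rw [norm_sub_rev]; exact herr N) ?_
      have b1 : Filter.Tendsto (fun N : ℕ => (1/2:ℝ)^N) Filter.atTop (nhds 0) :=
        tendsto_pow_atTop_nhds_zero_of_lt_one (by norm_num) (by norm_num)
      have b2 : Filter.Tendsto (fun N : ℕ => 2 * C * (1/4:ℝ)^(N+1)) Filter.atTop (nhds 0) := by
        have h := tendsto_pow_atTop_nhds_zero_of_lt_one
          (by norm_num : (0:ℝ) ≤ 1/4) (by norm_num : (1/4:ℝ) < 1)
        have h2 := (h.comp (Filter.tendsto_add_atTop_nat 1)).const_mul (2 * C)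
        simpa [Function.comp] using h2
      simpa using b1.add b2
    -- membership of the approximants
    have hPmem : ∀ N, P N ∈ absConvexHullO 𝕜 SS := by
      intro N
      set KN : ℕ := ((Finset.range (N+1)) ×ˢ (Finset.range (N+1))).sup
        (fun nm => KK nm.1 nm.2) with hKN
      have hkKN : ∀ n m, n < N+1 → m < N+1 → KK n m ≤ KN := fun n m hn hm =>
        Finset.le_sup (f := fun nm : ℕ × ℕ => KK nm.1 nm.2) (b := (n, m))
          (Finset.mem_product.mpr ⟨Finset.mem_range.mpr hn, Finset.mem_range.mpr hm⟩)
      set t : Finset (ℕ × ℕ × ℕ) :=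
        (Finset.range (N+1)) ×ˢ ((Finset.range (N+1)) ×ˢ (Finset.range KN)) with ht
      set bb : ℕ × ℕ × ℕ → 𝕜 := fun nmi =>
        (σ nmi.1 nmi.2.1 : ℝ) • aa nmi.1 (px nmi.1) (px (nmi.1 - 1)) nmi.2.1 nmi.2.2 with hbb
      set ss : ℕ × ℕ × ℕ → X := fun nmi =>
        β nmi.1 nmi.2.1 • ww nmi.1 (px nmi.1) (px (nmi.1 - 1)) nmi.2.1 nmi.2.2 with hss
      have hkk_le : ∀ n m, n < N+1 → m < N+1 → kk n (px n) (px (n-1)) m ≤ KN := fun n m hn hm =>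
        (hkKK n m _ _ (hpx1' n) (hpx1' (n-1))).trans (hkKN n m hn hm)
      have key : ∀ n ∈ Finset.range (N+1), ∀ m ∈ Finset.range (N+1),
          ∑ i ∈ Finset.range KN, bb (n, m, i) • ss (n, m, i)
            = (cc n * (1/4:ℝ)^m) • zf n (px n) (px (n-1)) m := by
        intro n hn m hm
        have hpt : ∀ i : ℕ, bb (n, m, i) • ss (n, m, i)
            = (cc n * (1/4:ℝ)^m) • (aa n (px n) (px (n-1)) m i • ww n (px n) (px (n-1)) m i) := by
          intro i
          simp only [hbb, hss]
          rw [smul_assoc, smul_comm (aa n (px n) (px (n-1)) m i) (β n m), smul_smul, hσβ]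
        rw [Finset.sum_congr rfl (fun i _ => hpt i), ← Finset.smul_sum]
        congr 1
        rw [hzw n (px n) (px (n-1)) m]
        refine (Finset.sum_subset (Finset.range_subset_range.mpr
          (hkk_le n m (Finset.mem_range.mp hn) (Finset.mem_range.mp hm))) ?_).symm
        intro i _ hik
        rw [haa0 n (px n) (px (n-1)) m i (by simpa using hik), zero_smul]
      have hsum : ∑ nmi ∈ t, bb nmi • ss nmi = P N := by
        rw [ht, Finset.sum_product]
        simp only [Finset.sum_product]
        rw [hP]
        refine Finset.sum_congr rfl fun n hn => Finset.sum_congr rfl fun m hm => ?_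
        exact key n hn m hm
      have hmass : ∑ nmi ∈ t, ‖bb nmi‖ ≤ 1 := by
        rw [ht, Finset.sum_product]
        simp only [Finset.sum_product]
        have hin : ∀ n ∈ Finset.range (N+1), ∀ m ∈ Finset.range (N+1),
            ∑ i ∈ Finset.range KN, ‖bb (n, m, i)‖ ≤ σ n m := by
          intro n _ m _
          have h1 : ∀ i : ℕ, ‖bb (n, m, i)‖ = σ n m * ‖aa n (px n) (px (n-1)) m i‖ := by
            intro i
            simp only [hbb]
            rw [norm_smul, Real.norm_of_nonneg (hσpos n m).le]
          rw [Finset.sum_congr rfl (fun i _ => h1 i), ← Finset.mul_sum]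
          exact mul_le_of_le_one_right (hσpos n m).le (haa1 n (px n) (px (n-1)) m KN)
        refine (Finset.sum_le_sum (fun n hn => Finset.sum_le_sum (hin n hn))).trans ?_
        have h2 : ∑ n ∈ Finset.range (N+1), ∑ m ∈ Finset.range (N+1), σ n m
            = (1/5 : ℝ) * (∑ n ∈ Finset.range (N+1), (2/3:ℝ)^n)
              * (∑ m ∈ Finset.range (N+1), (1/3:ℝ)^m) := by
          simp only [hσ]
          rw [← Finset.sum_mul_sum, ← Finset.mul_sum]
        rw [h2]
        have g1 := stmt8_geom_sum (r := 2/3) (by norm_num) (by norm_num) (N+1)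
        have g2 := stmt8_geom_sum (r := 1/3) (by norm_num) (by norm_num) (N+1)
        have g1' : ∑ n ∈ Finset.range (N+1), (2/3:ℝ)^n ≤ 3 := by norm_num at g1; linarith
        have g2' : ∑ m ∈ Finset.range (N+1), (1/3:ℝ)^m ≤ 3/2 := by norm_num at g2; linarith
        have g3 : (0:ℝ) ≤ ∑ n ∈ Finset.range (N+1), (2/3:ℝ)^n :=
          Finset.sum_nonneg fun n _ => by positivity
        have g4 : (0:ℝ) ≤ ∑ m ∈ Finset.range (N+1), (1/3:ℝ)^m :=
          Finset.sum_nonneg fun m _ => by positivity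
        nlinarith
      have hmem : ∀ nmi ∈ t, bb nmi ≠ 0 → ss nmi ∈ SS := by
        rintro ⟨n, m, i⟩ hmt hbne
        simp only [ht, Finset.mem_product, Finset.mem_range] at hmt
        obtain ⟨hn, hm, hi⟩ := hmt
        have hane : aa n (px n) (px (n-1)) m i ≠ 0 := by
          intro h0
          exact hbne (by simp [hbb, h0])
        have hik : i < kk n (px n) (px (n-1)) m := by
          by_contra hc
          exact hane (haa0 _ _ _ _ _ (le_of_not_gt hc))
        have hinr : InR (n, px n, px (n-1), m, i) := by
          simp only [hInR]
          exact ⟨hpx1' n, hpx1' (n-1),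
            lt_of_lt_of_le hik (hkKK n m _ _ (hpx1' n) (hpx1' (n-1)))⟩
        refine ⟨enc (n, px n, px (n-1), m, i), ?_⟩
        rw [Equiv.symm_apply_apply]
        simp only [hss, hA, hW, if_pos hinr]
      have := stmt8_comb_mem hSSne t bb ss hmass hmem
      rwa [hsum] at this
    exact isClosed_closedAbsConvexHullO.mem_of_tendsto hPtend
      (Filter.Eventually.of_forall fun N =>
        absConvexHull_subset_closedAbsConvexHullO (hPmem N))
end

section
/- Fix λ ∈ ℂ with |λ| = 1 and define f_λ : ℂ → ℂ by f_λ(z) = 1 + (conj(λ)·z − 1)·exp(1/(conj(λ)·z − 1)) for z ≠ λ and f_λ(λ) = 1. Then f_λ is holomorphic on ℂ \ {λ}, f_λ is continuous on the closed unit disc, and |f_λ(z)| ≤ 3 for every z in the closed unit disc. -/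
/-- For `|λ| = 1`, the function
`f_λ(z) = 1 + (conj λ · z − 1) exp(1/(conj λ · z − 1))` (with `f_λ(λ) = 1`) is
holomorphic on `ℂ \ {λ}`, continuous on the closed unit disc, and bounded by `3` there. -/
theorem stmt_9 (lam : ℂ) (hlam : ‖lam‖ = 1) (flam : ℂ → ℂ)
    (hflam : ∀ z : ℂ, flam z = if z = lam then 1 else
      1 + ((starRingEnd ℂ) lam * z - 1) * Complex.exp (1 / ((starRingEnd ℂ) lam * z - 1))) :
    DifferentiableOn ℂ flam ({lam}ᶜ : Set ℂ) ∧
    ContinuousOn flam (Metric.closedBall (0 : ℂ) 1) ∧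
    ∀ z ∈ Metric.closedBall (0 : ℂ) 1, ‖flam z‖ ≤ 3 := by
  set c : ℂ := (starRingEnd ℂ) lam with hc
  have hcabs : ‖c‖ = 1 := by simpa [hc] using hlam
  have hns : Complex.normSq lam = 1 := by
    rw [Complex.normSq_eq_norm_sq, hlam]; norm_num
  have hclam : c * lam = 1 := by
    rw [hc, mul_comm, Complex.mul_conj, hns]; norm_num
  have hne : ∀ z : ℂ, z ≠ lam → c * z - 1 ≠ 0 := by
    intro z hz h
    apply hz
    have h1 : c * z = 1 := by linear_combination h
    calc z = (c * lam) * z := by rw [hclam]; ring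
    _ = lam * (c * z) := by ring
    _ = lam := by rw [h1]; ring
  -- differentiability of the formula on {lam}ᶜ
  have hg : DifferentiableOn ℂ
      (fun z => 1 + (c * z - 1) * Complex.exp (1 / (c * z - 1))) ({lam}ᶜ : Set ℂ) := by
    have h1 : DifferentiableOn ℂ (fun z : ℂ => c * z - 1) ({lam}ᶜ : Set ℂ) :=
      ((differentiable_id.const_mul c).sub_const 1).differentiableOn
    have h2 : DifferentiableOn ℂ (fun z : ℂ => 1 / (c * z - 1)) ({lam}ᶜ : Set ℂ) :=
      (differentiableOn_const 1).div h1 (fun z hz => hne z hz)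
    exact (differentiableOn_const 1).add (h1.mul h2.cexp)
  have heq : Set.EqOn flam
      (fun z => 1 + (c * z - 1) * Complex.exp (1 / (c * z - 1))) ({lam}ᶜ : Set ℂ) := by
    intro z hz
    rw [hflam z, if_neg (Set.mem_compl_singleton_iff.mp hz)]
  have hdiff : DifferentiableOn ℂ flam ({lam}ᶜ : Set ℂ) := hg.congr heq
  -- exponential bound on the closed disc
  have hexp : ∀ z : ℂ, ‖z‖ ≤ 1 → z ≠ lam →
      ‖Complex.exp (1 / (c * z - 1))‖ ≤ 1 := by
    intro z hz hzl
    rw [Complex.norm_exp, Real.exp_le_one_iff, one_div, Complex.inv_re]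
    apply div_nonpos_of_nonpos_of_nonneg _ (Complex.normSq_nonneg _)
    have : (c * z).re ≤ 1 := by
      calc (c * z).re ≤ ‖c * z‖ := Complex.re_le_norm _
      _ = ‖z‖ := by rw [norm_mul, hcabs, one_mul]
      _ ≤ 1 := hz
    simp only [Complex.sub_re, Complex.one_re]
    linarith
  -- key estimate
  have hkey : ∀ z ∈ Metric.closedBall (0 : ℂ) 1,
      ‖flam z - 1‖ ≤ ‖z - lam‖ := by
    intro z hz
    rw [Metric.mem_closedBall, dist_zero_right] at hz
    by_cases hzl : z = lam
    · subst hzl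
      rw [hflam, if_pos rfl]
      simp
    · rw [hflam z, if_neg hzl]
      have : (1 : ℂ) + (c * z - 1) * Complex.exp (1 / (c * z - 1)) - 1
          = (c * z - 1) * Complex.exp (1 / (c * z - 1)) := by ring
      rw [this, norm_mul]
      have h1 : c * z - 1 = c * (z - lam) := by rw [mul_sub, hclam]
      calc ‖c * z - 1‖ * ‖Complex.exp (1 / (c * z - 1))‖
          ≤ ‖c * z - 1‖ * 1 := by
            apply mul_le_mul_of_nonneg_left (hexp z hz hzl) (norm_nonneg _)
      _ = ‖z - lam‖ := by
            rw [mul_one, h1, norm_mul, hcabs, one_mul]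
  have hlmem : lam ∈ Metric.closedBall (0 : ℂ) 1 := by
    rw [Metric.mem_closedBall, dist_zero_right]
    exact le_of_eq hlam
  have hflamlam : flam lam = 1 := by rw [hflam, if_pos rfl]
  refine ⟨hdiff, ?_, ?_⟩
  · intro z hz
    by_cases hzl : z = lam
    · rw [hzl]
      -- continuity at lam via the squeeze
      rw [ContinuousWithinAt, hflamlam, tendsto_iff_dist_tendsto_zero]
      apply squeeze_zero' (Filter.Eventually.of_forall fun t => dist_nonneg)
        (g := fun t => dist t lam)
      · filter_upwards [self_mem_nhdsWithin] with t ht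
        rw [Complex.dist_eq, Complex.dist_eq]
        exact hkey t ht
      · have h0 : Filter.Tendsto (fun t : ℂ => dist t lam) (nhds lam) (nhds 0) := by
          have := ((continuous_id.dist (continuous_const (y := lam)))).tendsto lam
          simpa using this
        exact h0.mono_left nhdsWithin_le_nhds
    · have : DifferentiableAt ℂ flam z :=
        hdiff.differentiableAt (isOpen_compl_singleton.mem_nhds hzl)
      exact this.continuousAt.continuousWithinAt
  · intro z hz
    have := hkey z hz
    have hzb : ‖z‖ ≤ 1 := by
      rwa [Metric.mem_closedBall, dist_zero_right] at hz
    calc ‖flam z‖ = ‖flam z - 1 + 1‖ := by ring_nf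
    _ ≤ ‖flam z - 1‖ + ‖(1:ℂ)‖ := norm_add_le _ _
    _ ≤ ‖z - lam‖ + 1 := by simp; linarith
    _ ≤ (‖z‖ + ‖lam‖) + 1 := by
        have h := norm_sub_le z lam
        linarith
    _ ≤ 3 := by rw [hlam]; linarith
end

section
/- Define f : ℂ → ℂ by f(z) = 1 + (z − 1)·exp(1/(z − 1)) for z ≠ 1 and f(1) = 1. Then the restriction of f to the open unit disc 𝔻 is holomorphic and bounded, but it is not Lipschitz on 𝔻: there is no constant K ≥ 0 such that f is K-Lipschitz on 𝔻; equivalently, its derivative f′ is unbounded on 𝔻. -/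
/-- `f(z) = 1 + (z − 1) exp(1/(z − 1))` (with `f(1) = 1`) is holomorphic
and bounded on the open unit disc, but not Lipschitz there; equivalently its derivative
is unbounded on the disc. -/
theorem stmt_10 (f : ℂ → ℂ)
    (hf : ∀ z : ℂ, f z = if z = 1 then 1 else
      1 + (z - 1) * Complex.exp (1 / (z - 1))) :
    DifferentiableOn ℂ f (Metric.ball (0 : ℂ) 1) ∧
    (∃ C : ℝ, ∀ z ∈ Metric.ball (0 : ℂ) 1, ‖f z‖ ≤ C) ∧
    (¬ ∃ K : NNReal, LipschitzOnWith K f (Metric.ball (0 : ℂ) 1)) ∧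
    (¬ ∃ C : ℝ, ∀ z ∈ Metric.ball (0 : ℂ) 1, ‖deriv f z‖ ≤ C) := by
  set B : Set ℂ := Metric.ball (0 : ℂ) 1 with hB
  have hball : ∀ z ∈ B, z ≠ 1 := by
    intro z hz h1
    rw [hB, Metric.mem_ball, h1] at hz
    simp at hz
  set g : ℂ → ℂ := fun z => 1 + (z - 1) * Complex.exp (1 / (z - 1)) with hg
  have hEq : Set.EqOn f g B := fun z hz => by
    rw [hf z, if_neg (hball z hz)]
  -- derivative of g away from 1
  have hgd : ∀ z : ℂ, z ≠ 1 →
      HasDerivAt g (Complex.exp (1 / (z - 1)) * (1 - 1 / (z - 1))) z := by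
    intro z hz
    have hsub : z - 1 ≠ 0 := sub_ne_zero.mpr hz
    have h1 : HasDerivAt (fun w : ℂ => w - 1) 1 z := (hasDerivAt_id z).sub_const 1
    have h2 : HasDerivAt (fun w : ℂ => (w - 1)⁻¹) (-1 / (z - 1) ^ 2) z := h1.inv hsub
    have h3 : HasDerivAt (fun w : ℂ => Complex.exp (w - 1)⁻¹)
        (Complex.exp (z - 1)⁻¹ * (-1 / (z - 1) ^ 2)) z := by
      exact (Complex.hasDerivAt_exp ((z - 1)⁻¹)).comp z h2
    have h4 : HasDerivAt (fun w : ℂ => (w - 1) * Complex.exp (w - 1)⁻¹)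
        (1 * Complex.exp (z - 1)⁻¹ +
          (z - 1) * (Complex.exp (z - 1)⁻¹ * (-1 / (z - 1) ^ 2))) z := h1.mul h3
    have h5 := h4.const_add 1
    have hval : 1 * Complex.exp (z - 1)⁻¹ +
        (z - 1) * (Complex.exp (z - 1)⁻¹ * (-1 / (z - 1) ^ 2)) =
        Complex.exp (1 / (z - 1)) * (1 - 1 / (z - 1)) := by
      rw [one_div]
      field_simp
      ring
    rw [hval] at h5
    simpa [hg, one_div] using h5
  have hdiff : DifferentiableOn ℂ f B := by
    have hgdiff : DifferentiableOn ℂ g B := fun z hz =>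
      ((hgd z (hball z hz)).differentiableAt).differentiableWithinAt
    exact hgdiff.congr hEq
  -- the derivative of f on B
  have hderiv : ∀ z ∈ B, deriv f z = Complex.exp (1 / (z - 1)) * (1 - 1 / (z - 1)) := by
    intro z hz
    have hmem : B ∈ nhds z := Metric.isOpen_ball.mem_nhds hz
    have heq : f =ᶠ[nhds z] g := Filter.eventuallyEq_of_mem hmem hEq
    rw [heq.deriv_eq, (hgd z (hball z hz)).deriv]
  -- boundedness
  have hre : ∀ z ∈ B, ((z - 1)⁻¹).re ≤ 0 := by
    intro z hz
    rw [Complex.inv_re]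
    apply div_nonpos_of_nonpos_of_nonneg
    · have h1 : z.re ≤ ‖z‖ := Complex.re_le_norm z
      have h2 : ‖z‖ < 1 := by simpa [hB] using hz
      simp only [Complex.sub_re, Complex.one_re]
      linarith
    · exact Complex.normSq_nonneg _
  have hexp_le : ∀ z ∈ B, ‖Complex.exp (1 / (z - 1))‖ ≤ 1 := by
    intro z hz
    rw [Complex.norm_exp]
    exact Real.exp_le_one_iff.mpr (by simpa [one_div] using hre z hz)
  have hbound : ∀ z ∈ B, ‖f z‖ ≤ 3 := by
    intro z hz
    rw [hEq hz, hg]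
    have h1 : ‖z - 1‖ ≤ 2 := by
      have h2 : ‖z‖ < 1 := by simpa [hB] using hz
      calc ‖z - 1‖ ≤ ‖z‖ + ‖(1 : ℂ)‖ := by
            simpa using norm_sub_le z 1
        _ ≤ 2 := by simp; linarith
    calc ‖1 + (z - 1) * Complex.exp (1 / (z - 1))‖
        ≤ ‖1‖ + ‖(z - 1) * Complex.exp (1 / (z - 1))‖ :=
          norm_add_le _ _
      _ = 1 + ‖z - 1‖ * ‖Complex.exp (1 / (z - 1))‖ := by
          simp [norm_mul]
      _ ≤ 1 + 2 * 1 := by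
          gcongr
          · exact hexp_le z hz
      _ = 3 := by norm_num
  -- derivative is unbounded
  have hD : ¬ ∃ C : ℝ, ∀ z ∈ B, ‖deriv f z‖ ≤ C := by
    rintro ⟨C, hC⟩
    set t : ℝ := min (1/2) (1 / (6 * (|C| + 1))) with ht
    have ht0 : 0 < t := by
      apply lt_min (by norm_num)
      positivity
    have ht2 : t ≤ 1/2 := min_le_left _ _
    have htC : t ≤ 1 / (6 * (|C| + 1)) := min_le_right _ _
    set z : ℂ := Complex.mk (1 - t^2) t with hz
    have hzre : z.re = 1 - t^2 := rfl
    have hzim : z.im = t := rfl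
    have hzB : z ∈ B := by
      rw [hB, Metric.mem_ball, dist_zero_right]
      have hns : Complex.normSq z = (1 - t^2)^2 + t^2 := by
        rw [Complex.normSq_apply, hzre, hzim]; ring
      have ht2' : t^2 ≤ 1/4 := by nlinarith
      have hlt : Complex.normSq z < 1 := by
        rw [hns]; nlinarith [sq_nonneg t, mul_pos ht0 ht0]
      have h2 : (‖z‖)^2 < 1 := by rwa [Complex.sq_norm]
      have h3 : ‖z‖ < 1 := by nlinarith [norm_nonneg z]
      exact h3
    have hzne : z ≠ 1 := by
      intro h
      have : z.im = (1 : ℂ).im := by rw [h]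
      rw [hzim] at this
      simp at this
      linarith
    -- compute real and imaginary parts of (z-1)⁻¹
    have hwre : (z - 1).re = -t^2 := by rw [Complex.sub_re, hzre, Complex.one_re]; ring
    have hwim : (z - 1).im = t := by rw [Complex.sub_im, hzim, Complex.one_im]; ring
    have hns : Complex.normSq (z - 1) = t^4 + t^2 := by
      rw [Complex.normSq_apply, hwre, hwim]; ring
    have hure : ((z - 1)⁻¹).re = -t^2 / (t^4 + t^2) := by
      rw [Complex.inv_re, hwre, hns]
    have huim : ((z - 1)⁻¹).im = -t / (t^4 + t^2) := by
      rw [Complex.inv_im, hwim, hns]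
    have hd := hderiv z hzB
    -- lower bound the derivative's absolute value
    have habs : ‖deriv f z‖ =
        Real.exp (((z - 1)⁻¹).re) * ‖1 - (z - 1)⁻¹‖ := by
      rw [hd, norm_mul, Complex.norm_exp, one_div]
    have him : |((1 : ℂ) - (z - 1)⁻¹).im| ≤ ‖1 - (z - 1)⁻¹‖ :=
      Complex.abs_im_le_norm _
    have him2 : ((1 : ℂ) - (z - 1)⁻¹).im = t / (t^4 + t^2) := by
      rw [Complex.sub_im, Complex.one_im, huim]; ring
    have hpos : (0:ℝ) < t^4 + t^2 := by positivity
    have hpos3 : (0:ℝ) < t^3 + t := by positivity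
    have hfrac : t / (t^4 + t^2) = 1 / (t^3 + t) := by
      rw [div_eq_div_iff hpos.ne' hpos3.ne']; ring
    have hfrac2 : 1 / (2 * t) ≤ 1 / (t^3 + t) := by
      apply one_div_le_one_div_of_le (by positivity)
      nlinarith
    -- exp part ≥ 1/3
    have hure2 : -1 ≤ ((z - 1)⁻¹).re := by
      rw [hure, le_div_iff₀ hpos]
      nlinarith [sq_nonneg (t^2)]
    have hexp3 : (1:ℝ)/3 ≤ Real.exp (((z - 1)⁻¹).re) := by
      have h1 : Real.exp (-1 : ℝ) ≤ Real.exp (((z - 1)⁻¹).re) := Real.exp_le_exp.mpr hure2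
      have h2 : (1:ℝ)/3 ≤ Real.exp (-1 : ℝ) := by
        have h3 : Real.exp 1 ≤ 3 := by
          have := Real.exp_one_lt_d9; linarith
        rw [Real.exp_neg, one_div]
        exact inv_anti₀ (Real.exp_pos 1) h3
      linarith
    have hlower : 1 / (6 * t) ≤ ‖deriv f z‖ := by
      rw [habs]
      have h1 : 1 / (2 * t) ≤ ‖1 - (z - 1)⁻¹‖ := by
        calc 1 / (2 * t) ≤ 1 / (t^3 + t) := hfrac2
          _ = |((1 : ℂ) - (z - 1)⁻¹).im| := by
              rw [him2, hfrac, abs_of_pos]; positivity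
          _ ≤ _ := him
      calc 1 / (6 * t) = (1/3) * (1 / (2 * t)) := by field_simp; ring
        _ ≤ Real.exp (((z - 1)⁻¹).re) * ‖1 - (z - 1)⁻¹‖ := by
            apply mul_le_mul hexp3 h1 (by positivity)
            exact le_trans (by norm_num) hexp3
    have hCt : |C| + 1 ≤ 1 / (6 * t) := by
      rw [le_div_iff₀ (by positivity)]
      calc (|C| + 1) * (6 * t) ≤ (|C| + 1) * (6 * (1 / (6 * (|C| + 1)))) := by
            gcongr
        _ = 1 := by field_simp
    have := hC z hzB
    have : C < ‖deriv f z‖ := by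
      have hCabs : C ≤ |C| := le_abs_self C
      linarith
    linarith [hC z hzB]
  refine ⟨hdiff, ⟨3, hbound⟩, ?_, hD⟩
  rintro ⟨K, hK⟩
  exact hD ⟨K, fun z hz =>
    norm_deriv_le_of_lipschitzOn (Metric.isOpen_ball.mem_nhds hz) hK⟩
end

section
/- Fix λ ∈ ℂ with |λ| = 1 and define f_λ(z) = 1 + (conj(λ)·z − 1)·exp(1/(conj(λ)·z − 1)) for z ≠ λ. Then for every 0 < s < 1 and every z in the open unit disc 𝔻 with |z − λ| ≥ s, the complex derivative satisfies |f_λ′(z)| ≤ (s + 1)/s. -/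
/-- For `|λ| = 1` and `f_λ(z) = 1 + (conj λ · z − 1) exp(1/(conj λ · z − 1))`,
if `0 < s < 1` then `|f_λ′(z)| ≤ (s + 1)/s` for every `z` in the open unit disc with
`|z − λ| ≥ s`. -/
theorem stmt_11 (lam : ℂ) (hlam : ‖lam‖ = 1) (flam : ℂ → ℂ)
    (hflam : ∀ z : ℂ, z ≠ lam → flam z =
      1 + ((starRingEnd ℂ) lam * z - 1) * Complex.exp (1 / ((starRingEnd ℂ) lam * z - 1)))
    (s : ℝ) (hs0 : 0 < s) (hs1 : s < 1) :
    ∀ z ∈ Metric.ball (0 : ℂ) 1, s ≤ ‖z - lam‖ →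
      ‖deriv flam z‖ ≤ (s + 1) / s := by
  intro z hz hzs
  set c : ℂ := (starRingEnd ℂ) lam with hc
  have hcabs : ‖c‖ = 1 := by simpa [hc] using hlam
  have hclam : c * lam = 1 := by
    rw [hc, Complex.conj_mul']
    norm_cast
    rw [hlam]; norm_num
  set u : ℂ := c * z - 1 with hu
  have huabs : ‖u‖ = ‖z - lam‖ := by
    have : u = c * (z - lam) := by rw [hu, mul_sub, hclam]
    rw [this, norm_mul, hcabs, one_mul]
  have husabs : s ≤ ‖u‖ := by rw [huabs]; exact hzs
  have hu0 : u ≠ 0 := by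
    intro h
    rw [h, norm_zero] at husabs
    linarith
  have hzlam : z ≠ lam := by
    intro h
    rw [h, sub_self, norm_zero] at hzs
    linarith
  -- eventual equality
  have hev : flam =ᶠ[nhds z] fun w => 1 + (c * w - 1) * Complex.exp (1 / (c * w - 1)) := by
    filter_upwards [eventually_ne_nhds hzlam] with w hw
    exact hflam w hw
  rw [hev.deriv_eq]
  -- compute the derivative
  have hlin : HasDerivAt (fun w : ℂ => c * w - 1) c z := by
    simpa using ((hasDerivAt_id z).const_mul c).sub_const 1
  have hinv : HasDerivAt (fun w : ℂ => (c * w - 1)⁻¹) (-(u ^ 2)⁻¹ * c) z := by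
    simpa [hu, Function.comp_def] using (hasDerivAt_inv hu0).comp z hlin
  have hexp : HasDerivAt (fun w : ℂ => Complex.exp ((c * w - 1)⁻¹))
      (Complex.exp u⁻¹ * (-(u ^ 2)⁻¹ * c)) z := by
    simpa [hu] using hinv.cexp
  have hmul : HasDerivAt (fun w : ℂ => (c * w - 1) * Complex.exp ((c * w - 1)⁻¹))
      (c * Complex.exp u⁻¹ + u * (Complex.exp u⁻¹ * (-(u ^ 2)⁻¹ * c))) z := by
    simpa [hu, Pi.mul_def] using hlin.mul hexp
  have hfull : HasDerivAt (fun w : ℂ => 1 + (c * w - 1) * Complex.exp (1 / (c * w - 1)))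
      (c * Complex.exp u⁻¹ + u * (Complex.exp u⁻¹ * (-(u ^ 2)⁻¹ * c))) z := by
    simpa [one_div] using hmul.const_add 1
  rw [hfull.deriv]
  have hD : c * Complex.exp u⁻¹ + u * (Complex.exp u⁻¹ * (-(u ^ 2)⁻¹ * c))
      = c * Complex.exp u⁻¹ * (1 - u⁻¹) := by
    field_simp
    ring
  rw [hD]
  -- bound |exp(1/u)| ≤ 1
  have hre : u.re ≤ 0 := by
    have h1 : (c * z).re ≤ ‖c * z‖ := Complex.re_le_norm _
    have h2 : ‖c * z‖ < 1 := by
      rw [norm_mul, hcabs, one_mul]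
      simpa [Complex.dist_eq] using hz
    simp only [hu, Complex.sub_re, Complex.one_re]
    linarith
  have hexpabs : ‖Complex.exp u⁻¹‖ ≤ 1 := by
    rw [Complex.norm_exp]
    have : (u⁻¹).re ≤ 0 := by
      rw [Complex.inv_re]
      have : 0 ≤ Complex.normSq u := Complex.normSq_nonneg u
      exact div_nonpos_of_nonpos_of_nonneg hre this
    exact Real.exp_le_one_iff.mpr this
  have habs2 : ‖1 - u⁻¹‖ ≤ 1 + 1 / s := by
    calc ‖1 - u⁻¹‖ ≤ ‖(1 : ℂ)‖ + ‖u⁻¹‖ := by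
          exact (norm_sub_le 1 u⁻¹)
      _ = 1 + (‖u‖)⁻¹ := by rw [norm_one, norm_inv]
      _ ≤ 1 + 1 / s := by
          have : (‖u‖)⁻¹ ≤ 1 / s := by
            rw [one_div]
            exact inv_anti₀ hs0 husabs
          linarith
  calc ‖c * Complex.exp u⁻¹ * (1 - u⁻¹)‖
      = ‖c‖ * ‖Complex.exp u⁻¹‖ * ‖1 - u⁻¹‖ := by
        rw [norm_mul, norm_mul]
    _ ≤ 1 * 1 * (1 + 1 / s) := by
        apply mul_le_mul _ habs2 (norm_nonneg _) (by norm_num)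
        rw [hcabs, one_mul]
        simpa using hexpabs
    _ = (s + 1) / s := by field_simp
end
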